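/- arXiv:2603.21292 — 9 statements merged into one kernel-verified Lean document; each statement's English description precedes it below -/
import Mathlib

section
/- Let q be an odd prime power and let E ⊆ F_q² be nonempty. Then the number of distinct parabolic distances satisfies |Δ_P(E)| ≥ q / (1 + q²·K_E/|E|²). -/
open Finset

/-- The parabolic distance set of `E ⊆ F_q²`. -/
def parabolicDistSet {F : Type*} [Field F] [DecidableEq F] (E : Finset (F × F)) :
    Finset F :=
  (E ×ˢ E).image fun z : (F × F) × (F × F) => (z.1.2 - z.2.2) + (z.1.1 - z.2.1) ^ 2

/-- The size of the largest vertical fiber of `E ⊆ F_q²`. -/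
def maxVertFiber {F : Type*} [Fintype F] [DecidableEq F] (E : Finset (F × F)) : ℕ :=
  Finset.univ.sup fun u : F => (E.filter fun p => p.1 = u).card

namespace ParabolicAux

open Complex

variable {F : Type*} [Field F] [Fintype F] [DecidableEq F]

/-- The parabolic distance as a function on pairs. -/
def gP (z : (F × F) × (F × F)) : F := (z.1.2 - z.2.2) + (z.1.1 - z.2.1) ^ 2

/-- The number of pairs at parabolic distance `t`. -/
def nu (E : Finset (F × F)) (t : F) : ℕ :=
  ((E ×ˢ E).filter fun z => gP z = t).card

noncomputable section

variable (ψ : AddChar F ℂ) (E : Finset (F × F))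

/-- The character sum over pairs. -/
def SS (s : F) : ℂ := ∑ z ∈ E ×ˢ E, ψ (s * gP z)

/-- Inner character sum. -/
def BB (s a : F) : ℂ := ∑ y ∈ E, ψ (s * (y.1 ^ 2 - y.2) + a * -(2 * s * y.1))

/-- Fiber character sum. -/
def WW (s a : F) : ℂ := ∑ y ∈ (E.filter fun p => p.1 = a), ψ (s * y.2)

/-- Sum of squared fiber character sums (real). -/
def CCs (s : F) : ℝ := ∑ a : F, Complex.normSq (WW ψ E s a)

variable {ψ}

lemma conj_psi (hR : 0 < ringChar F) (t : F) :
    (starRingEnd ℂ) (ψ t) = ψ (-t) := by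
  rw [AddChar.starComp_apply hR, AddChar.inv_apply]

lemma abs_psi (hR : 0 < ringChar F) (t : F) : ‖ψ t‖ = 1 := by
  have h : ψ t * (starRingEnd ℂ) (ψ t) = 1 := by
    rw [conj_psi hR, ← AddChar.map_add_eq_mul, add_neg_cancel, AddChar.map_zero_eq_one]
  have h2 : (Complex.normSq (ψ t) : ℂ) = 1 := by rw [← Complex.mul_conj, h]
  have h3 : Complex.normSq (ψ t) = 1 := by exact_mod_cast h2
  rw [Complex.norm_def, h3, Real.sqrt_one]

/-- The master orthogonality computation. -/
lemma L1 (hψ : ψ.IsPrimitive) (hR : 0 < ringChar F) {ι : Type*} (T : Finset ι)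
    (c d : ι → F) :
    ∑ x : F, (∑ i ∈ T, ψ (c i + x * d i)) * (starRingEnd ℂ) (∑ i ∈ T, ψ (c i + x * d i)) =
      (Fintype.card F : ℂ) *
        ∑ i ∈ T, ∑ j ∈ T, if d i = d j then ψ (c i - c j) else 0 := by
  have expand : ∀ x : F,
      (∑ i ∈ T, ψ (c i + x * d i)) * (starRingEnd ℂ) (∑ i ∈ T, ψ (c i + x * d i)) =
        ∑ i ∈ T, ∑ j ∈ T, ψ ((c i - c j) + x * (d i - d j)) := by
    intro x
    rw [map_sum, Finset.sum_mul_sum]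
    refine Finset.sum_congr rfl fun i _ => Finset.sum_congr rfl fun j _ => ?_
    rw [conj_psi hR, ← AddChar.map_add_eq_mul]
    congr 1
    ring
  calc
    ∑ x : F, (∑ i ∈ T, ψ (c i + x * d i)) * (starRingEnd ℂ) (∑ i ∈ T, ψ (c i + x * d i))
        = ∑ x : F, ∑ i ∈ T, ∑ j ∈ T, ψ ((c i - c j) + x * (d i - d j)) :=
      Finset.sum_congr rfl fun x _ => expand x
    _ = ∑ i ∈ T, ∑ j ∈ T, ∑ x : F, ψ ((c i - c j) + x * (d i - d j)) := by
      rw [Finset.sum_comm]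
      exact Finset.sum_congr rfl fun i _ => Finset.sum_comm
    _ = ∑ i ∈ T, ∑ j ∈ T, ψ (c i - c j) * ∑ x : F, ψ (x * (d i - d j)) := by
      refine Finset.sum_congr rfl fun i _ => Finset.sum_congr rfl fun j _ => ?_
      rw [Finset.mul_sum]
      exact Finset.sum_congr rfl fun x _ => by rw [AddChar.map_add_eq_mul]
    _ = ∑ i ∈ T, ∑ j ∈ T,
          if d i = d j then ψ (c i - c j) * (Fintype.card F : ℂ) else 0 := by
      refine Finset.sum_congr rfl fun i _ => Finset.sum_congr rfl fun j _ => ?_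
      rw [AddChar.sum_mulShift _ hψ]
      by_cases h : d i = d j
      · rw [if_pos (sub_eq_zero.mpr h), if_pos h]
      · rw [if_neg (fun hc => h (sub_eq_zero.mp hc)), if_neg h]
        simp
    _ = (Fintype.card F : ℂ) *
          ∑ i ∈ T, ∑ j ∈ T, if d i = d j then ψ (c i - c j) else 0 := by
      rw [Finset.mul_sum]
      refine Finset.sum_congr rfl fun i _ => ?_
      rw [Finset.mul_sum]
      refine Finset.sum_congr rfl fun j _ => ?_
      split_ifs <;> ring

/-- Generic decomposition of a sum over `E` along vertical fibers. -/
lemma fiber_sum {M : Type*} [AddCommMonoid M] (E : Finset (F × F)) (h : F → M) :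
    ∑ x ∈ E, h x.1 = ∑ a : F, (E.filter fun p => p.1 = a).card • h a := by
  have hfw := Finset.sum_fiberwise_of_maps_to
    (fun (x : F × F) (_ : x ∈ E) => Finset.mem_univ x.1) (fun x => h x.1)
  rw [← hfw]
  refine Finset.sum_congr rfl fun a _ => ?_
  rw [Finset.sum_congr rfl (fun x hx => by rw [(Finset.mem_filter.mp hx).2]),
    Finset.sum_const]

lemma sum_nu (E : Finset (F × F)) : ∑ t : F, nu E t = E.card ^ 2 := by
  have := Finset.card_eq_sum_card_fiberwise
    (f := gP) (s := E ×ˢ E) (t := Finset.univ) (fun x _ => Finset.mem_univ _)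
  rw [Finset.card_product, ← sq] at this
  exact this.symm

/-- First application of `L1` : the total energy identity. -/
lemma sum_normSq_SS (hψ : ψ.IsPrimitive) (hR : 0 < ringChar F) :
    ∑ s : F, Complex.normSq (SS ψ E s) =
      (Fintype.card F : ℝ) * ∑ t : F, ((nu E t : ℝ)) ^ 2 := by
  have key := L1 (T := E ×ˢ E) (c := fun _ => (0 : F)) (d := gP) hψ hR
  simp only [zero_add, sub_self, AddChar.map_zero_eq_one] at key
  have hSS : ∀ s : F, SS ψ E s = ∑ z ∈ E ×ˢ E, ψ (s * gP z) := fun _ => rfl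
  have hcount : ∀ z : (F × F) × (F × F),
      (∑ w ∈ E ×ˢ E, if gP z = gP w then (1 : ℂ) else 0) = (nu E (gP z) : ℂ) := by
    intro z
    have hfe : ((E ×ˢ E).filter fun w => gP z = gP w)
        = ((E ×ˢ E).filter fun w => gP w = gP z) := by
      apply Finset.filter_congr
      intro w _
      exact eq_comm
    rw [Finset.sum_boole, hfe]
    rfl
  have hcount2 : (∑ z ∈ E ×ˢ E, (nu E (gP z) : ℂ)) = ∑ t : F, ((nu E t : ℂ)) ^ 2 := by
    rw [← Finset.sum_fiberwise_of_maps_to (fun z _ => Finset.mem_univ (gP z))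
      (fun z => (nu E (gP z) : ℂ))]
    refine Finset.sum_congr rfl fun t _ => ?_
    rw [Finset.sum_congr rfl (fun z hz => by rw [(Finset.mem_filter.mp hz).2]),
      Finset.sum_const]
    have : ((E ×ˢ E).filter fun z => gP z = t).card = nu E t := rfl
    rw [this, nsmul_eq_mul, sq]
  apply Complex.ofReal_injective
  push_cast
  calc
    (∑ s : F, (Complex.normSq (SS ψ E s) : ℂ))
        = ∑ s : F, SS ψ E s * (starRingEnd ℂ) (SS ψ E s) := by
      exact Finset.sum_congr rfl fun s _ => (Complex.mul_conj _).symm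
    _ = (Fintype.card F : ℂ) *
          ∑ z ∈ E ×ˢ E, ∑ w ∈ E ×ˢ E, if gP z = gP w then (1 : ℂ) else 0 := by
      simp only [hSS]; exact key
    _ = (Fintype.card F : ℂ) * ∑ t : F, ((nu E t : ℂ)) ^ 2 := by
      rw [Finset.sum_congr rfl fun z _ => hcount z, hcount2]

/-- Second application of `L1` : the total fiber-sum identity. -/
lemma sum_CCs (hψ : ψ.IsPrimitive) (hR : 0 < ringChar F) :
    ∑ s : F, CCs ψ E s = (Fintype.card F : ℝ) * E.card := by
  have fib_eq : ∀ a : F,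
      ∑ s : F, Complex.normSq (WW ψ E s a) =
        (Fintype.card F : ℝ) * ((E.filter fun p => p.1 = a).card : ℝ) := by
    intro a
    have key := L1 (T := E.filter fun p => p.1 = a) (c := fun _ => (0 : F))
      (d := fun y => y.2) hψ hR
    simp only [zero_add, sub_self, AddChar.map_zero_eq_one] at key
    have hWW : ∀ s : F, WW ψ E s a = ∑ y ∈ (E.filter fun p => p.1 = a), ψ (s * y.2) :=
      fun _ => rfl
    have hcount : ∀ y ∈ (E.filter fun p => p.1 = a),
        (∑ y' ∈ (E.filter fun p => p.1 = a), if y.2 = y'.2 then (1 : ℂ) else 0)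
          = 1 := by
      intro y hy
      rw [Finset.sum_boole]
      have hset : ((E.filter fun p => p.1 = a).filter fun y' => y.2 = y'.2) = {y} := by
        ext y'
        simp only [Finset.mem_filter, Finset.mem_singleton]
        constructor
        · rintro ⟨⟨_, h1⟩, h2⟩
          have hy' := Finset.mem_filter.mp hy
          exact Prod.ext (h1.trans hy'.2.symm) h2.symm
        · rintro rfl
          exact ⟨Finset.mem_filter.mp hy, rfl⟩
      rw [hset, Finset.card_singleton, Nat.cast_one]
    apply Complex.ofReal_injective
    push_cast
    calc
      (∑ s : F, (Complex.normSq (WW ψ E s a) : ℂ))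
          = ∑ s : F, WW ψ E s a * (starRingEnd ℂ) (WW ψ E s a) :=
        Finset.sum_congr rfl fun s _ => (Complex.mul_conj _).symm
      _ = (Fintype.card F : ℂ) *
            ∑ y ∈ (E.filter fun p => p.1 = a),
              ∑ y' ∈ (E.filter fun p => p.1 = a), if y.2 = y'.2 then (1 : ℂ) else 0 := by
        simp only [hWW]; exact key
      _ = (Fintype.card F : ℂ) * ((E.filter fun p => p.1 = a).card : ℂ) := by
        rw [Finset.sum_congr rfl hcount, Finset.sum_const, nsmul_eq_mul, mul_one]
  calc
    ∑ s : F, CCs ψ E s = ∑ a : F, ∑ s : F, Complex.normSq (WW ψ E s a) := by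
      unfold CCs; rw [Finset.sum_comm]
    _ = ∑ a : F, (Fintype.card F : ℝ) * ((E.filter fun p => p.1 = a).card : ℝ) :=
      Finset.sum_congr rfl fun a _ => fib_eq a
    _ = (Fintype.card F : ℝ) * E.card := by
      rw [← Finset.mul_sum]
      congr 1
      rw [Finset.card_eq_sum_card_fiberwise
        (f := fun p : F × F => p.1) (s := E) (t := Finset.univ) (fun x _ => Finset.mem_univ _)]
      push_cast
      rfl

/-- Third application of `L1` : the inner sum bound identity. -/
lemma sum_normSq_BB (hψ : ψ.IsPrimitive) (hR : 0 < ringChar F) (h2 : (2 : F) ≠ 0)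
    {s : F} (hs : s ≠ 0) :
    ∑ a : F, Complex.normSq (BB ψ E s a) = (Fintype.card F : ℝ) * CCs ψ E s := by
  have key := L1 (T := E) (c := fun y : F × F => s * (y.1 ^ 2 - y.2))
    (d := fun y : F × F => -(2 * s * y.1)) hψ hR
  have hBB : ∀ a : F,
      BB ψ E s a = ∑ y ∈ E, ψ (s * (y.1 ^ 2 - y.2) + a * -(2 * s * y.1)) := fun _ => rfl
  have h2s : (2 : F) * s ≠ 0 := mul_ne_zero h2 hs
  have hcond : ∀ y y' : F × F,
      (-(2 * s * y.1) = -(2 * s * y'.1)) ↔ (y.1 = y'.1) := by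
    intro y y'
    constructor
    · intro h
      exact mul_left_cancel₀ h2s (neg_injective h)
    · intro h; rw [h]
  have step1 : ∀ y ∈ E, ∀ y' ∈ E,
      (if -(2 * s * y.1) = -(2 * s * y'.1)
        then ψ (s * (y.1 ^ 2 - y.2) - s * (y'.1 ^ 2 - y'.2)) else 0)
        = (if y'.1 = y.1 then ψ (s * y'.2 - s * y.2) else 0) := by
    intro y _ y' _
    by_cases h : y.1 = y'.1
    · rw [if_pos ((hcond y y').mpr h), if_pos h.symm]
      congr 1
      rw [h]; ring
    · rw [if_neg (fun hc => h ((hcond y y').mp hc)), if_neg (fun hc => h hc.symm)]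
  have claim : (∑ y ∈ E, ∑ y' ∈ E,
      if y'.1 = y.1 then ψ (s * y'.2 - s * y.2) else 0) = ((CCs ψ E s : ℝ) : ℂ) := by
    have inner_eq : ∀ y : F × F, (∑ y' ∈ E, if y'.1 = y.1 then ψ (s * y'.2 - s * y.2) else 0)
        = ∑ y' ∈ (E.filter fun p => p.1 = y.1), ψ (s * y'.2 - s * y.2) :=
      fun y => (Finset.sum_filter _ _).symm
    calc
      (∑ y ∈ E, ∑ y' ∈ E, if y'.1 = y.1 then ψ (s * y'.2 - s * y.2) else 0)
          = ∑ y ∈ E, ∑ y' ∈ (E.filter fun p => p.1 = y.1), ψ (s * y'.2 - s * y.2) :=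
        Finset.sum_congr rfl fun y _ => inner_eq y
      _ = ∑ a : F, ∑ y ∈ (E.filter fun p => p.1 = a),
            ∑ y' ∈ (E.filter fun p => p.1 = a), ψ (s * y'.2 - s * y.2) := by
        rw [← Finset.sum_fiberwise_of_maps_to (fun (y : F × F) _ => Finset.mem_univ y.1)
          (fun y => ∑ y' ∈ (E.filter fun p => p.1 = y.1), ψ (s * y'.2 - s * y.2))]
        refine Finset.sum_congr rfl fun a _ => Finset.sum_congr rfl fun y hy => ?_
        rw [(Finset.mem_filter.mp hy).2]
      _ = ∑ a : F, ((Complex.normSq (WW ψ E s a) : ℝ) : ℂ) := by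
        refine Finset.sum_congr rfl fun a _ => ?_
        rw [← Complex.mul_conj (WW ψ E s a)]
        unfold WW
        rw [map_sum, Finset.sum_mul_sum, Finset.sum_comm]
        refine Finset.sum_congr rfl fun u _ => Finset.sum_congr rfl fun v _ => ?_
        rw [conj_psi hR, ← AddChar.map_add_eq_mul, ← sub_eq_add_neg]
      _ = ((CCs ψ E s : ℝ) : ℂ) := by
        unfold CCs
        push_cast
        rfl
  apply Complex.ofReal_injective
  push_cast
  calc
    (∑ a : F, (Complex.normSq (BB ψ E s a) : ℂ))
        = ∑ a : F, BB ψ E s a * (starRingEnd ℂ) (BB ψ E s a) :=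
      Finset.sum_congr rfl fun a _ => (Complex.mul_conj _).symm
    _ = (Fintype.card F : ℂ) * ∑ y ∈ E, ∑ y' ∈ E,
          if -(2 * s * y.1) = -(2 * s * y'.1)
            then ψ (s * (y.1 ^ 2 - y.2) - s * (y'.1 ^ 2 - y'.2)) else 0 := by
      simp only [hBB]; exact key
    _ = (Fintype.card F : ℂ) * ∑ y ∈ E, ∑ y' ∈ E,
          if y'.1 = y.1 then ψ (s * y'.2 - s * y.2) else 0 := by
      congr 1
      exact Finset.sum_congr rfl fun y hy => Finset.sum_congr rfl fun y' hy' =>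
        step1 y hy y' hy'
    _ = (Fintype.card F : ℂ) * ((CCs ψ E s : ℝ) : ℂ) := by rw [claim]

/-- The pointwise bound for the nonzero frequencies. -/
lemma normSq_SS_le (hψ : ψ.IsPrimitive) (hR : 0 < ringChar F) (h2 : (2 : F) ≠ 0)
    {s : F} (hs : s ≠ 0) :
    Complex.normSq (SS ψ E s) ≤
      (E.card : ℝ) * (maxVertFiber E : ℝ) * ((Fintype.card F : ℝ) * CCs ψ E s) := by
  have hdecomp : SS ψ E s = ∑ x ∈ E, ψ (s * (x.2 + x.1 ^ 2)) * BB ψ E s x.1 := by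
    unfold SS BB
    rw [Finset.sum_product]
    refine Finset.sum_congr rfl fun x _ => ?_
    rw [Finset.mul_sum]
    refine Finset.sum_congr rfl fun y _ => ?_
    rw [← AddChar.map_add_eq_mul]
    congr 1
    unfold gP
    ring
  have habs : ‖SS ψ E s‖ ≤ ∑ x ∈ E, ‖BB ψ E s x.1‖ := by
    rw [hdecomp]
    refine le_trans (norm_sum_le _ _) (le_of_eq ?_)
    refine Finset.sum_congr rfl fun x _ => ?_
    rw [norm_mul, abs_psi hR, one_mul]
  have hCS : (∑ x ∈ E, ‖BB ψ E s x.1‖) ^ 2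
      ≤ (E.card : ℝ) * ∑ x ∈ E, Complex.normSq (BB ψ E s x.1) := by
    have h := Finset.sum_mul_sq_le_sq_mul_sq E (fun _ => (1 : ℝ))
      (fun x => ‖BB ψ E s x.1‖)
    simp only [one_mul, one_pow] at h
    rw [Finset.sum_const, nsmul_eq_mul, mul_one] at h
    refine le_trans h (le_of_eq ?_)
    congr 1
    exact Finset.sum_congr rfl fun x _ => Complex.sq_norm _
  have hfib : ∑ x ∈ E, Complex.normSq (BB ψ E s x.1)
      ≤ (maxVertFiber E : ℝ) * ∑ a : F, Complex.normSq (BB ψ E s a) := by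
    rw [fiber_sum E (fun a => Complex.normSq (BB ψ E s a)), Finset.mul_sum]
    refine Finset.sum_le_sum fun a _ => ?_
    rw [nsmul_eq_mul]
    refine mul_le_mul_of_nonneg_right ?_ (Complex.normSq_nonneg _)
    have hle : (E.filter fun p => p.1 = a).card ≤ maxVertFiber E := by
      unfold maxVertFiber
      exact Finset.le_sup (f := fun u : F => (E.filter fun p => p.1 = u).card)
        (Finset.mem_univ a)
    exact_mod_cast hle
  calc
    Complex.normSq (SS ψ E s) = ‖SS ψ E s‖ ^ 2 := (Complex.sq_norm _).symm
    _ ≤ (∑ x ∈ E, ‖BB ψ E s x.1‖) ^ 2 :=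
      pow_le_pow_left₀ (norm_nonneg _) habs 2
    _ ≤ (E.card : ℝ) * ∑ x ∈ E, Complex.normSq (BB ψ E s x.1) := hCS
    _ ≤ (E.card : ℝ) * ((maxVertFiber E : ℝ) * ∑ a : F, Complex.normSq (BB ψ E s a)) :=
      mul_le_mul_of_nonneg_left hfib (Nat.cast_nonneg _)
    _ = (E.card : ℝ) * (maxVertFiber E : ℝ) * ((Fintype.card F : ℝ) * CCs ψ E s) := by
      rw [sum_normSq_BB E hψ hR h2 hs, mul_assoc]

/-- The energy bound. -/
lemma energy_bound (hψ : ψ.IsPrimitive) (hR : 0 < ringChar F) (h2 : (2 : F) ≠ 0) :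
    (Fintype.card F : ℝ) * ∑ t : F, ((nu E t : ℝ)) ^ 2 ≤
      (E.card : ℝ) ^ 4 + (Fintype.card F : ℝ) ^ 2 * (maxVertFiber E : ℝ) * (E.card : ℝ) ^ 2 := by
  have hsplit : ∑ s : F, Complex.normSq (SS ψ E s) =
      Complex.normSq (SS ψ E 0) +
        ∑ s ∈ Finset.univ.erase (0 : F), Complex.normSq (SS ψ E s) :=
    (Finset.add_sum_erase _ _ (Finset.mem_univ 0)).symm
  have hSS0 : SS ψ E 0 = ((E.card ^ 2 : ℕ) : ℂ) := by
    unfold SS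
    simp only [zero_mul, AddChar.map_zero_eq_one]
    rw [Finset.sum_const, Finset.card_product, nsmul_eq_mul, mul_one, ← sq]
  have hSS0' : Complex.normSq (SS ψ E 0) = (E.card : ℝ) ^ 4 := by
    rw [hSS0, Complex.normSq_natCast]
    push_cast
    ring
  have htail : ∑ s ∈ Finset.univ.erase (0 : F), Complex.normSq (SS ψ E s) ≤
      (Fintype.card F : ℝ) ^ 2 * (maxVertFiber E : ℝ) * (E.card : ℝ) ^ 2 := by
    have h1 : ∑ s ∈ Finset.univ.erase (0 : F), Complex.normSq (SS ψ E s) ≤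
        ∑ s ∈ Finset.univ.erase (0 : F),
          (E.card : ℝ) * (maxVertFiber E : ℝ) * ((Fintype.card F : ℝ) * CCs ψ E s) := by
      refine Finset.sum_le_sum fun s hs => ?_
      exact normSq_SS_le E hψ hR h2 (Finset.mem_erase.mp hs).1
    have h2' : ∑ s ∈ Finset.univ.erase (0 : F), CCs ψ E s ≤
        (Fintype.card F : ℝ) * E.card := by
      rw [← sum_CCs E hψ hR]
      refine Finset.sum_le_sum_of_subset_of_nonneg (Finset.subset_univ _) fun s _ _ => ?_
      exact Finset.sum_nonneg fun a _ => Complex.normSq_nonneg _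
    calc
      ∑ s ∈ Finset.univ.erase (0 : F), Complex.normSq (SS ψ E s)
          ≤ ∑ s ∈ Finset.univ.erase (0 : F),
              (E.card : ℝ) * (maxVertFiber E : ℝ) * ((Fintype.card F : ℝ) * CCs ψ E s) := h1
      _ = (E.card : ℝ) * (maxVertFiber E : ℝ) * (Fintype.card F : ℝ) *
            ∑ s ∈ Finset.univ.erase (0 : F), CCs ψ E s := by
        rw [Finset.mul_sum]
        exact Finset.sum_congr rfl fun s _ => by ring
      _ ≤ (E.card : ℝ) * (maxVertFiber E : ℝ) * (Fintype.card F : ℝ) *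
            ((Fintype.card F : ℝ) * E.card) := by
        refine mul_le_mul_of_nonneg_left h2' ?_
        positivity
      _ = (Fintype.card F : ℝ) ^ 2 * (maxVertFiber E : ℝ) * (E.card : ℝ) ^ 2 := by ring
  calc
    (Fintype.card F : ℝ) * ∑ t : F, ((nu E t : ℝ)) ^ 2
        = ∑ s : F, Complex.normSq (SS ψ E s) := (sum_normSq_SS E hψ hR).symm
    _ = Complex.normSq (SS ψ E 0) +
          ∑ s ∈ Finset.univ.erase (0 : F), Complex.normSq (SS ψ E s) := hsplit
    _ ≤ (E.card : ℝ) ^ 4 +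
          (Fintype.card F : ℝ) ^ 2 * (maxVertFiber E : ℝ) * (E.card : ℝ) ^ 2 := by
      rw [hSS0']
      exact add_le_add_right htail _

end

end ParabolicAux

theorem parabolic_distance_lower_bound
    {F : Type*} [Field F] [Fintype F] [DecidableEq F]
    (hq : Odd (Fintype.card F))
    (E : Finset (F × F)) (hE : E.Nonempty) :
    ((parabolicDistSet E).card : ℝ) ≥
      (Fintype.card F : ℝ) /
        (1 + (Fintype.card F : ℝ) ^ 2 * (maxVertFiber E : ℝ) / (E.card : ℝ) ^ 2) := by
  classical
  have hR : 0 < ringChar F := Nat.pos_of_ne_zero (CharP.ringChar_ne_zero_of_finite F)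
  have hchar2 : ringChar F ≠ 2 := by
    intro h
    have h1 : Fintype.card F % 2 = 0 := (FiniteField.even_card_iff_char_two).mp h
    have h2 : Fintype.card F % 2 = 1 := Nat.odd_iff.mp hq
    omega
  have h2 : (2 : F) ≠ 0 := by
    intro h
    have hd : ringChar F ∣ 2 := (CharP.cast_eq_zero_iff F (ringChar F) 2).mp (by
      exact_mod_cast h)
    have hp : (ringChar F).Prime := CharP.char_is_prime F (ringChar F)
    exact hchar2 ((Nat.prime_dvd_prime_iff_eq hp Nat.prime_two).mp hd)
  set ψ : AddChar F ℂ := AddChar.FiniteField.primitiveChar_to_Complex F with hψdef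
  have hψ : ψ.IsPrimitive := AddChar.FiniteField.primitiveChar_to_Complex_isPrimitive F
  have hN0 : 0 < E.card := Finset.card_pos.mpr hE
  have hN2 : (0 : ℝ) < (E.card : ℝ) ^ 2 := by positivity
  have hq0 : (0 : ℝ) < (Fintype.card F : ℝ) := by
    exact_mod_cast Fintype.card_pos
  -- Cauchy-Schwarz step
  have hsum : ∑ t ∈ parabolicDistSet E, ParabolicAux.nu E t = E.card ^ 2 := by
    have h := Finset.card_eq_sum_card_fiberwise (f := ParabolicAux.gP) (s := E ×ˢ E)
      (t := parabolicDistSet E) (fun z hz => Finset.mem_image_of_mem _ hz)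
    rw [Finset.card_product, ← sq] at h
    exact h.symm
  have hCS : ((E.card : ℝ)) ^ 4 ≤
      ((parabolicDistSet E).card : ℝ) * ∑ t : F, ((ParabolicAux.nu E t : ℝ)) ^ 2 := by
    have h1 : ((E.card : ℝ)) ^ 2 = ∑ t ∈ parabolicDistSet E, ((ParabolicAux.nu E t : ℝ)) := by
      rw [← Nat.cast_sum, hsum]
      push_cast
      ring
    have hcs := Finset.sum_mul_sq_le_sq_mul_sq (parabolicDistSet E) (fun _ => (1 : ℝ))
      (fun t => (ParabolicAux.nu E t : ℝ))
    simp only [one_mul, one_pow] at hcs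
    rw [Finset.sum_const, nsmul_eq_mul, mul_one] at hcs
    have hmono : ∑ t ∈ parabolicDistSet E, ((ParabolicAux.nu E t : ℝ)) ^ 2 ≤
        ∑ t : F, ((ParabolicAux.nu E t : ℝ)) ^ 2 :=
      Finset.sum_le_sum_of_subset_of_nonneg (Finset.subset_univ _)
        (fun t _ _ => sq_nonneg _)
    calc
      ((E.card : ℝ)) ^ 4 = (((E.card : ℝ)) ^ 2) ^ 2 := by ring
      _ = (∑ t ∈ parabolicDistSet E, ((ParabolicAux.nu E t : ℝ))) ^ 2 := by rw [h1]
      _ ≤ ((parabolicDistSet E).card : ℝ) *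
            ∑ t ∈ parabolicDistSet E, ((ParabolicAux.nu E t : ℝ)) ^ 2 := hcs
      _ ≤ ((parabolicDistSet E).card : ℝ) * ∑ t : F, ((ParabolicAux.nu E t : ℝ)) ^ 2 :=
        mul_le_mul_of_nonneg_left hmono (Nat.cast_nonneg _)
  -- Energy step
  have hEn := ParabolicAux.energy_bound (ψ := ψ) E hψ hR h2
  -- Combine
  have hD0 : (0 : ℝ) ≤ ((parabolicDistSet E).card : ℝ) := Nat.cast_nonneg _
  have hmain : (Fintype.card F : ℝ) * (E.card : ℝ) ^ 2 ≤
      ((parabolicDistSet E).card : ℝ) *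
        ((E.card : ℝ) ^ 2 + (Fintype.card F : ℝ) ^ 2 * (maxVertFiber E : ℝ)) := by
    refine le_of_mul_le_mul_right ?_ hN2
    have step : (Fintype.card F : ℝ) * (E.card : ℝ) ^ 4 ≤
        ((parabolicDistSet E).card : ℝ) *
          ((E.card : ℝ) ^ 4 +
            (Fintype.card F : ℝ) ^ 2 * (maxVertFiber E : ℝ) * (E.card : ℝ) ^ 2) := by
      calc
        (Fintype.card F : ℝ) * (E.card : ℝ) ^ 4
            ≤ (Fintype.card F : ℝ) * (((parabolicDistSet E).card : ℝ) *
                ∑ t : F, ((ParabolicAux.nu E t : ℝ)) ^ 2) :=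
          mul_le_mul_of_nonneg_left hCS (le_of_lt hq0)
        _ = ((parabolicDistSet E).card : ℝ) *
              ((Fintype.card F : ℝ) * ∑ t : F, ((ParabolicAux.nu E t : ℝ)) ^ 2) := by ring
        _ ≤ ((parabolicDistSet E).card : ℝ) *
              ((E.card : ℝ) ^ 4 +
                (Fintype.card F : ℝ) ^ 2 * (maxVertFiber E : ℝ) * (E.card : ℝ) ^ 2) :=
          mul_le_mul_of_nonneg_left hEn hD0
    calc
      (Fintype.card F : ℝ) * (E.card : ℝ) ^ 2 * (E.card : ℝ) ^ 2
          = (Fintype.card F : ℝ) * (E.card : ℝ) ^ 4 := by ring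
      _ ≤ ((parabolicDistSet E).card : ℝ) *
            ((E.card : ℝ) ^ 4 +
              (Fintype.card F : ℝ) ^ 2 * (maxVertFiber E : ℝ) * (E.card : ℝ) ^ 2) := step
      _ = ((parabolicDistSet E).card : ℝ) *
            ((E.card : ℝ) ^ 2 + (Fintype.card F : ℝ) ^ 2 * (maxVertFiber E : ℝ)) *
            (E.card : ℝ) ^ 2 := by ring
  have hApos : (0 : ℝ) <
      1 + (Fintype.card F : ℝ) ^ 2 * (maxVertFiber E : ℝ) / (E.card : ℝ) ^ 2 := by
    have : (0 : ℝ) ≤ (Fintype.card F : ℝ) ^ 2 * (maxVertFiber E : ℝ) / (E.card : ℝ) ^ 2 := by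
      positivity
    linarith
  rw [ge_iff_le, div_le_iff₀ hApos]
  have hrw : (1 : ℝ) + (Fintype.card F : ℝ) ^ 2 * (maxVertFiber E : ℝ) / (E.card : ℝ) ^ 2 =
      ((E.card : ℝ) ^ 2 + (Fintype.card F : ℝ) ^ 2 * (maxVertFiber E : ℝ)) / (E.card : ℝ) ^ 2 := by
    field_simp
  rw [hrw, ← mul_div_assoc, le_div_iff₀ hN2]
  exact hmain
end

section
/- Let q be an odd prime power and let E ⊆ F_q². If |E| > q^{3/2} (equivalently, |E|² > q³), then Δ_P(E) = F_q, i.e. every element of F_q is realized as a parabolic distance between two points of E. -/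
open Finset

theorem parabolic_distance_all_of_large
    {F : Type*} [Field F] [Fintype F] [DecidableEq F]
    (hq : Odd (Fintype.card F))
    (E : Finset (F × F))
    (hsize : E.card ^ 2 > (Fintype.card F) ^ 3) :
    parabolicDistSet E = Finset.univ := by
  classical
  apply Finset.eq_univ_iff_forall.mpr
  intro t
  by_contra ht
  set q := Fintype.card F with hqdef
  set n := E.card with hndef
  -- characteristic is not 2
  have h2 : (2 : F) ≠ 0 := by
    apply Ring.two_ne_zero
    intro hc
    have h := FiniteField.even_card_iff_char_two.mp hc
    rcases hq with ⟨k, hk⟩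
    omega
  -- the predicate: x is at parabolic distance t from y
  have hA : ∀ y : F × F,
      (Finset.univ.filter fun x : F × F => (x.2 - y.2) + (x.1 - y.1) ^ 2 = t).card = q := by
    intro y
    have himg : (Finset.univ.filter fun x : F × F => (x.2 - y.2) + (x.1 - y.1) ^ 2 = t)
        = Finset.univ.image (fun a : F => (a, y.2 + t - (a - y.1) ^ 2)) := by
      ext x
      simp only [Finset.mem_filter, Finset.mem_univ, true_and, Finset.mem_image]
      constructor
      · intro h
        exact ⟨x.1, by
          have : x.2 = y.2 + t - (x.1 - y.1) ^ 2 := by linear_combination h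
          exact Prod.ext rfl this.symm⟩
      · rintro ⟨a, rfl⟩
        ring
    rw [himg, Finset.card_image_of_injective _ (fun a b hab => congrArg Prod.fst hab),
      Finset.card_univ]
  -- two distinct parabolas meet in at most one point
  have hB : ∀ y y' : F × F, y ≠ y' →
      (Finset.univ.filter fun x : F × F =>
        ((x.2 - y.2) + (x.1 - y.1) ^ 2 = t) ∧ ((x.2 - y'.2) + (x.1 - y'.1) ^ 2 = t)).card ≤ 1 := by
    intro y y' hyy
    apply Finset.card_le_one.mpr
    intro a ha b hb
    simp only [Finset.mem_filter, Finset.mem_univ, true_and] at ha hb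
    obtain ⟨ha1, ha2⟩ := ha
    obtain ⟨hb1, hb2⟩ := hb
    by_cases hy1 : y.1 = y'.1
    · exfalso
      apply hyy
      have hy2 : y.2 = y'.2 := by
        have := ha1.trans ha2.symm
        rw [hy1] at this
        linear_combination -this
      exact Prod.ext hy1 hy2
    · have hkey : (2 * (y'.1 - y.1)) * a.1 = (2 * (y'.1 - y.1)) * b.1 := by
        linear_combination ha1 - ha2 - hb1 + hb2
      have h1 : a.1 = b.1 := by
        apply mul_left_cancel₀ _ hkey
        intro h
        rcases mul_eq_zero.mp h with h | h
        · exact h2 h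
        · exact hy1 (by linear_combination -h)
      have h2' : a.2 = b.2 := by
        have := ha1.trans hb1.symm
        rw [h1] at this
        linear_combination this
      exact Prod.ext h1 h2'
  -- counting function
  set f : F × F → ℕ := fun x =>
    (E.filter fun y : F × F => (x.2 - y.2) + (x.1 - y.1) ^ 2 = t).card with hfdef
  -- first moment
  have S1 : ∑ x : F × F, f x = n * q := by
    have : ∑ x : F × F, f x
        = ∑ y ∈ E, (Finset.univ.filter
            fun x : F × F => (x.2 - y.2) + (x.1 - y.1) ^ 2 = t).card := by
      simp only [hfdef, Finset.card_filter]
      exact Finset.sum_comm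
    rw [this]
    simp only [hA]
    rw [Finset.sum_const, smul_eq_mul]
  -- second moment
  have S2 : ∑ x : F × F, (f x) ^ 2 ≤ n * q + n * n := by
    have hsq : ∀ x : F × F, (f x) ^ 2 = ∑ y ∈ E, ∑ y' ∈ E,
        (if ((x.2 - y.2) + (x.1 - y.1) ^ 2 = t) ∧ ((x.2 - y'.2) + (x.1 - y'.1) ^ 2 = t)
          then 1 else 0) := by
      intro x
      rw [hfdef]
      simp only [Finset.card_filter]
      rw [sq, Finset.sum_mul_sum]
      simp only [ite_zero_mul_ite_zero, mul_one]
    calc ∑ x : F × F, (f x) ^ 2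
        = ∑ y ∈ E, ∑ y' ∈ E, (Finset.univ.filter fun x : F × F =>
            ((x.2 - y.2) + (x.1 - y.1) ^ 2 = t) ∧ ((x.2 - y'.2) + (x.1 - y'.1) ^ 2 = t)).card := by
          simp only [hsq]
          rw [Finset.sum_comm]
          congr 1; ext y
          rw [Finset.sum_comm]
          congr 1; ext y'
          rw [Finset.card_filter]
      _ ≤ ∑ y ∈ E, (q + n) := by
          apply Finset.sum_le_sum
          intro y hy
          rw [← Finset.add_sum_erase _ _ hy]
          have hdiag : (Finset.univ.filter fun x : F × F =>
              ((x.2 - y.2) + (x.1 - y.1) ^ 2 = t) ∧ ((x.2 - y.2) + (x.1 - y.1) ^ 2 = t)).card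
              = q := by
            rw [← hA y]; congr 1; ext x; simp [and_self]
          rw [hdiag]
          gcongr
          calc ∑ y' ∈ E.erase y, (Finset.univ.filter fun x : F × F =>
                ((x.2 - y.2) + (x.1 - y.1) ^ 2 = t) ∧
                ((x.2 - y'.2) + (x.1 - y'.1) ^ 2 = t)).card
              ≤ ∑ _y' ∈ E.erase y, 1 := by
                apply Finset.sum_le_sum
                intro y' hy'
                exact hB y y' (Finset.ne_of_mem_erase hy').symm
            _ ≤ n := by
                rw [Finset.sum_const, smul_eq_mul, mul_one]
                exact le_trans (Finset.card_erase_le) le_rfl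
      _ = n * (q + n) := by rw [Finset.sum_const, smul_eq_mul]
      _ = n * q + n * n := by ring
  -- t is not realized: f vanishes on E
  have hE0 : ∀ x ∈ E, f x = 0 := by
    intro x hx
    rw [hfdef]
    simp only [Finset.card_eq_zero, Finset.filter_eq_empty_iff]
    intro y hy h
    apply ht
    simp only [parabolicDistSet, Finset.mem_image]
    exact ⟨(x, y), Finset.mem_product.mpr ⟨hx, hy⟩, h⟩
  -- restrict the first moment to the complement of E
  have S1' : ∑ x ∈ Finset.univ \ E, f x = n * q := by
    rw [← S1]
    rw [← Finset.sum_sdiff (Finset.subset_univ E)]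
    have : ∑ x ∈ E, f x = 0 := Finset.sum_eq_zero hE0
    omega
  -- Cauchy-Schwarz over ℤ
  have hcard_sdiff : (Finset.univ \ E).card = q ^ 2 - n := by
    rw [Finset.card_sdiff_of_subset (Finset.subset_univ E), Finset.card_univ, Fintype.card_prod]
    rw [hqdef, sq]
  have hnq2 : n ≤ q ^ 2 := by
    calc n ≤ Fintype.card (F × F) := Finset.card_le_univ E
      _ = q ^ 2 := by rw [Fintype.card_prod, sq]
  have CS : ((∑ x ∈ Finset.univ \ E, f x : ℕ) : ℤ) ^ 2
      ≤ ((Finset.univ \ E).card : ℤ) * ∑ x ∈ Finset.univ \ E, ((f x : ℤ)) ^ 2 := by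
    have := sq_sum_le_card_mul_sum_sq (s := Finset.univ \ E)
      (f := fun x => ((f x : ℤ)))
    push_cast
    exact_mod_cast this
  have hsum_sq_le : ∑ x ∈ Finset.univ \ E, ((f x : ℤ)) ^ 2 ≤ (n : ℤ) * q + n * n := by
    calc ∑ x ∈ Finset.univ \ E, ((f x : ℤ)) ^ 2
        ≤ ∑ x : F × F, ((f x : ℤ)) ^ 2 := by
          apply Finset.sum_le_sum_of_subset_of_nonneg (Finset.subset_univ _)
          intro i _ _; positivity
      _ ≤ (n : ℤ) * q + n * n := by exact_mod_cast S2
  rw [S1', hcard_sdiff] at CS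
  have hfinal : ((n : ℤ) * q) ^ 2 ≤ ((q : ℤ) ^ 2 - n) * ((n : ℤ) * q + n * n) := by
    calc ((n : ℤ) * q) ^ 2 = (((n * q : ℕ) : ℤ)) ^ 2 := by push_cast; ring
      _ ≤ ((q ^ 2 - n : ℕ) : ℤ) * ∑ x ∈ Finset.univ \ E, ((f x : ℤ)) ^ 2 := CS
      _ ≤ ((q ^ 2 - n : ℕ) : ℤ) * ((n : ℤ) * q + n * n) := by
          apply mul_le_mul_of_nonneg_left hsum_sq_le (by positivity)
      _ = ((q : ℤ) ^ 2 - n) * ((n : ℤ) * q + n * n) := by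
          rw [Nat.cast_sub hnq2]; push_cast; ring
  -- final contradiction
  have hsizeZ : (q : ℤ) ^ 3 < (n : ℤ) ^ 2 := by exact_mod_cast hsize
  have hq1 : (1 : ℤ) ≤ q := by exact_mod_cast Fintype.card_pos
  have hn1 : (1 : ℤ) ≤ n := by
    have hn0 : n ≠ 0 := by
      intro h
      rw [h] at hsize
      simp at hsize
    exact_mod_cast Nat.pos_of_ne_zero hn0
  nlinarith [mul_lt_mul_of_pos_left hsizeZ (by linarith : (0:ℤ) < n),
    mul_pos (by linarith : (0:ℤ) < n) (by linarith : (0:ℤ) < n),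
    mul_pos (mul_pos (by linarith : (0:ℤ) < n) (by linarith : (0:ℤ) < n)) (by linarith : (0:ℤ) < q)]
end

section
/- Let q be a prime power, let P be a set of points in F_q² and let L be a set of (affine) lines in F_q². Then the number of incidences I(P,L) := #{(p,ℓ) ∈ P×L : p ∈ ℓ} satisfies |I(P,L) − |P|·|L|/q| ≤ q^{1/2}·|P|^{1/2}·|L|^{1/2}. -/
open Finset

set_option linter.unusedSectionVars false
set_option maxHeartbeats 1000000

section VinhAux

variable {F : Type*} [Field F] [Fintype F] [DecidableEq F]

/-- Canonical parametrization of all affine lines in `F × F`: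
`Sum.inl c` is the vertical line `x = c`, `Sum.inr (m, c)` is the line `y = m * x + c`. -/
def vinhMem (l : F ⊕ F × F) (p : F × F) : Prop :=
  Sum.elim (fun c => p.1 = c) (fun mc => p.2 = mc.1 * p.1 + mc.2) l

lemma vinhMem_inl (c : F) (p : F × F) : vinhMem (Sum.inl c) p ↔ p.1 = c := ⟨id, id⟩

lemma vinhMem_inr (mc : F × F) (p : F × F) :
    vinhMem (Sum.inr mc) p ↔ p.2 = mc.1 * p.1 + mc.2 := ⟨id, id⟩

instance vinhMemDec (l : F ⊕ F × F) : DecidablePred (vinhMem l) := by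
  rcases l with c | mc <;> intro p <;> dsimp [vinhMem] <;> infer_instance

noncomputable def vinhInd (l : F ⊕ F × F) (p : F × F) : ℝ :=
  if vinhMem l p then 1 else 0

@[irreducible] noncomputable def vinhRep (ℓ : Finset (F × F)) : F ⊕ F × F :=
  if h : ∃ l : F ⊕ F × F, ℓ = Finset.univ.filter fun p => vinhMem l p
  then h.choose else Sum.inl 0

lemma vinhRep_spec {ℓ : Finset (F × F)}
    (h : ∃ l : F ⊕ F × F, ℓ = Finset.univ.filter fun p => vinhMem l p) :
    ℓ = Finset.univ.filter fun p => vinhMem (vinhRep ℓ) p := by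
  unfold vinhRep
  rw [dif_pos h]
  exact h.choose_spec

lemma vinhInd_mul_self (l : F ⊕ F × F) (p : F × F) :
    vinhInd l p * vinhInd l p = vinhInd l p := by
  by_cases h : vinhMem l p <;> simp [vinhInd, h]

lemma vinh_sum_point (p : F × F) :
    ∑ l : F ⊕ F × F, vinhInd l p = (Fintype.card F : ℝ) + 1 := by
  rw [Fintype.sum_sum_type]
  have h1 : ∑ c : F, vinhInd (Sum.inl c) p = 1 := by
    simp [vinhInd, vinhMem]
  have h2 : ∑ mc : F × F, vinhInd (Sum.inr mc) p = (Fintype.card F : ℝ) := by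
    rw [Fintype.sum_prod_type]
    have key : ∀ m c : F, (p.2 = m * p.1 + c) ↔ (p.2 - m * p.1 = c) :=
      fun m c => ⟨fun h => by rw [h]; ring, fun h => by rw [← h]; ring⟩
    simp only [vinhInd, vinhMem, Sum.elim_inr]
    simp_rw [key]
    simp [Finset.card_univ]
  rw [h1, h2]; ring

lemma vinh_sum_pair {p p' : F × F} (hne : p ≠ p') :
    ∑ l : F ⊕ F × F, vinhInd l p * vinhInd l p' = 1 := by
  rw [Fintype.sum_sum_type]
  have h1 : ∑ c : F, vinhInd (Sum.inl c) p * vinhInd (Sum.inl c) p'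
      = if p.1 = p'.1 then 1 else 0 := by
    simp only [vinhInd, vinhMem_inl, ite_mul, one_mul, zero_mul]
    by_cases h : p.1 = p'.1
    · rw [if_pos h]
      rw [Finset.sum_eq_single p'.1]
      · simp [h]
      · intro c _ hc
        by_cases hp : p.1 = c
        · rw [if_pos hp, if_neg (fun hh => hc hh.symm)]
        · rw [if_neg hp]
      · simp
    · rw [if_neg h]
      apply Finset.sum_eq_zero
      intro c _
      by_cases hp : p.1 = c
      · rw [if_pos hp, if_neg (fun hh => h (hp.trans hh.symm))]
      · rw [if_neg hp]
  have key : ∀ (x y : F × F) (m c : F), (x.2 = m * x.1 + c) ↔ (x.2 - m * x.1 = c) :=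
    fun x y m c => ⟨fun h => by rw [h]; ring, fun h => by rw [← h]; ring⟩
  have h2 : ∑ mc : F × F, vinhInd (Sum.inr mc) p * vinhInd (Sum.inr mc) p'
      = if p.1 = p'.1 then 0 else 1 := by
    rw [Fintype.sum_prod_type]
    simp only [vinhInd, vinhMem_inr, ite_mul, one_mul, zero_mul]
    have step : ∀ m : F,
        (∑ c : F, if p.2 = m * p.1 + c then (if p'.2 = m * p'.1 + c then (1:ℝ) else 0) else 0)
        = if p'.2 - p.2 = m * (p'.1 - p.1) then 1 else 0 := by
      intro m
      simp_rw [key p p' m]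
      rw [Finset.sum_ite_eq univ (p.2 - m * p.1)
        (fun c => if p'.2 = m * p'.1 + c then (1:ℝ) else 0)]
      simp only [mem_univ, if_true]
      have hiff : (p'.2 = m * p'.1 + (p.2 - m * p.1)) ↔ (p'.2 - p.2 = m * (p'.1 - p.1)) :=
        ⟨fun h => by linear_combination h, fun h => by linear_combination h⟩
      simp_rw [hiff]
    simp_rw [step]
    by_cases h : p.1 = p'.1
    · rw [if_pos h]
      apply Finset.sum_eq_zero
      intro m _
      rw [if_neg]
      intro hc
      rw [h, sub_self, mul_zero, sub_eq_zero] at hc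
      exact hne (Prod.ext h hc.symm)
    · rw [if_neg h]
      have hd : p'.1 - p.1 ≠ 0 := sub_ne_zero.mpr (fun hh => h hh.symm)
      rw [Finset.sum_eq_single ((p'.2 - p.2) / (p'.1 - p.1))]
      · rw [if_pos (by field_simp)]
      · intro m _ hm
        rw [if_neg]
        intro hc
        exact hm (by field_simp [hc]; exact hc.symm)
      · simp
  rw [h1, h2]
  by_cases h : p.1 = p'.1 <;> simp [h]

lemma vinh_first_moment (P : Finset (F × F)) :
    ∑ l : F ⊕ F × F, (∑ p ∈ P, vinhInd l p)
      = ((Fintype.card F : ℝ) + 1) * P.card := by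
  rw [Finset.sum_comm]
  simp_rw [vinh_sum_point]
  rw [Finset.sum_const, nsmul_eq_mul, mul_comm]

lemma vinh_second_moment (P : Finset (F × F)) :
    ∑ l : F ⊕ F × F, (∑ p ∈ P, vinhInd l p) ^ 2
      = (P.card : ℝ) ^ 2 + (Fintype.card F : ℝ) * P.card := by
  have expand : ∀ l : F ⊕ F × F, (∑ p ∈ P, vinhInd l p) ^ 2
      = ∑ p ∈ P, ∑ p' ∈ P, vinhInd l p * vinhInd l p' := by
    intro l; rw [sq, Finset.sum_mul_sum]
  simp_rw [expand]
  rw [Finset.sum_comm]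
  have swap2 : ∀ p : F × F,
      (∑ l : F ⊕ F × F, ∑ p' ∈ P, vinhInd l p * vinhInd l p')
        = ∑ p' ∈ P, ∑ l : F ⊕ F × F, vinhInd l p * vinhInd l p' :=
    fun p => Finset.sum_comm
  calc ∑ p ∈ P, ∑ l : F ⊕ F × F, ∑ p' ∈ P, vinhInd l p * vinhInd l p'
      = ∑ p ∈ P, ∑ p' ∈ P, ∑ l : F ⊕ F × F, vinhInd l p * vinhInd l p' := by
        exact Finset.sum_congr rfl fun p _ => swap2 p
    _ = ∑ _p ∈ P, ((Fintype.card F : ℝ) + (P.card : ℝ)) := by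
        apply Finset.sum_congr rfl
        intro p hp
        rw [← Finset.add_sum_erase _ _ hp]
        have hdiag : ∑ l : F ⊕ F × F, vinhInd l p * vinhInd l p
            = (Fintype.card F : ℝ) + 1 := by
          simp_rw [vinhInd_mul_self]; exact vinh_sum_point p
        have hoff : ∑ p' ∈ P.erase p, ∑ l : F ⊕ F × F, vinhInd l p * vinhInd l p'
            = (P.card : ℝ) - 1 := by
          rw [Finset.sum_congr rfl
            (fun p' hp' => vinh_sum_pair (fun h => (Finset.mem_erase.mp hp').1 h.symm))]
          rw [Finset.sum_const, Finset.card_erase_of_mem hp, nsmul_eq_mul, mul_one]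
          have h1 : 1 ≤ P.card := Finset.card_pos.mpr ⟨p, hp⟩
          push_cast [h1]
          ring
        rw [hdiag, hoff]; ring
    _ = (P.card : ℝ) ^ 2 + (Fintype.card F : ℝ) * P.card := by
        rw [Finset.sum_const, nsmul_eq_mul]; ring

lemma vinh_variance (P : Finset (F × F)) (hq : 0 < Fintype.card F) :
    ∑ l : F ⊕ F × F,
        ((∑ p ∈ P, vinhInd l p) - (P.card : ℝ) / (Fintype.card F : ℝ)) ^ 2
      ≤ (Fintype.card F : ℝ) * P.card := by
  set q : ℝ := (Fintype.card F : ℝ) with hqdef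
  have hq0 : q ≠ 0 := by positivity
  set S : ℝ := (P.card : ℝ)
  have expand : ∀ l : F ⊕ F × F,
      ((∑ p ∈ P, vinhInd l p) - S / q) ^ 2
        = (∑ p ∈ P, vinhInd l p) ^ 2
          - 2 * (S / q) * (∑ p ∈ P, vinhInd l p) + (S / q) ^ 2 := fun l => by ring
  simp_rw [expand]
  rw [Finset.sum_add_distrib, Finset.sum_sub_distrib, ← Finset.mul_sum,
    vinh_first_moment, vinh_second_moment, Finset.sum_const, nsmul_eq_mul,
    Finset.card_univ]
  have hcard : (Fintype.card (F ⊕ F × F) : ℝ) = q + q * q := by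
    push_cast [Fintype.card_sum, Fintype.card_prod]; ring
  rw [hcard]
  have hS : 0 ≤ S := by positivity
  have key : S ^ 2 + q * S - 2 * (S / q) * ((q + 1) * S) + (q + q * q) * (S / q) ^ 2
      = q * S - S ^ 2 / q := by field_simp; ring
  rw [key]
  have : 0 ≤ S ^ 2 / q := by positivity
  linarith

end VinhAux

theorem vinh_point_line_incidence
    {F : Type*} [Field F] [Fintype F] [DecidableEq F]
    (P : Finset (F × F)) (L : Finset (Finset (F × F)))
    (hL : ∀ ℓ ∈ L, ∃ a b c : F, (a, b) ≠ (0, 0) ∧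
      ℓ = Finset.univ.filter fun p : F × F => a * p.1 + b * p.2 = c) :
    |((((P ×ˢ L).filter fun z => z.1 ∈ z.2).card : ℝ)
        - (P.card : ℝ) * (L.card : ℝ) / (Fintype.card F : ℝ))| ≤
      Real.sqrt (Fintype.card F) * Real.sqrt P.card * Real.sqrt L.card := by
  classical
  have hq : 0 < Fintype.card F := Fintype.card_pos
  set q : ℝ := (Fintype.card F : ℝ) with hqdef
  have hq0 : (0:ℝ) < q := by rw [hqdef]; exact_mod_cast hq
  set S : ℝ := (P.card : ℝ) with hSdef
  -- canonical representative for each line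
  have hchoice : ∀ ℓ ∈ L, ∃ l : F ⊕ F × F,
      ℓ = Finset.univ.filter fun p => vinhMem l p := by
    intro ℓ hℓ
    obtain ⟨a, b, c, hab, rfl⟩ := hL ℓ hℓ
    by_cases hb : b = 0
    · have ha : a ≠ 0 := by
        intro ha; exact hab (by simp [ha, hb])
      refine ⟨Sum.inl (c / a), ?_⟩
      ext p
      simp only [Finset.mem_filter, Finset.mem_univ, true_and, vinhMem_inl, hb]
      rw [zero_mul, add_zero, eq_div_iff ha, mul_comm]
    · refine ⟨Sum.inr (-a / b, c / b), ?_⟩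
      ext p
      simp only [Finset.mem_filter, Finset.mem_univ, true_and, vinhMem_inr]
      have hrw : (-a / b) * p.1 + c / b = (-(a * p.1) + c) / b := by ring
      constructor
      · intro h; rw [hrw, eq_div_iff hb]; linear_combination h
      · intro h; rw [hrw, eq_div_iff hb] at h; linear_combination h
  have hg : ∀ ℓ ∈ L, ℓ = Finset.univ.filter fun p => vinhMem (vinhRep ℓ) p :=
    fun ℓ hℓ => vinhRep_spec (hchoice ℓ hℓ)
  have hmem : ∀ ℓ ∈ L, ∀ p : F × F, p ∈ ℓ ↔ vinhMem (vinhRep ℓ) p := by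
    intro ℓ hℓ p
    conv_lhs => rw [hg ℓ hℓ]
    simp
  have hginj : Set.InjOn (vinhRep (F := F)) ↑L := by
    intro ℓ hℓ ℓ' hℓ' h
    rw [hg ℓ hℓ, hg ℓ' hℓ', h]
  -- incidence count as a sum
  have hI : (((P ×ˢ L).filter fun z => z.1 ∈ z.2).card : ℝ)
      = ∑ ℓ ∈ L, ∑ p ∈ P, vinhInd (vinhRep ℓ) p := by
    rw [Finset.card_filter]
    push_cast
    rw [Finset.sum_product]
    rw [Finset.sum_comm]
    apply Finset.sum_congr rfl
    intro ℓ hℓ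
    apply Finset.sum_congr rfl
    intro p _
    rw [vinhInd]
    by_cases h : p ∈ ℓ
    · rw [if_pos h, if_pos ((hmem ℓ hℓ p).mp h)]
    · rw [if_neg h, if_neg (fun hh => h ((hmem ℓ hℓ p).mpr hh))]
  -- the centered sum
  have hmain : (((P ×ˢ L).filter fun z => z.1 ∈ z.2).card : ℝ) - S * (L.card : ℝ) / q
      = ∑ ℓ ∈ L, ((∑ p ∈ P, vinhInd (vinhRep ℓ) p) - S / q) := by
    rw [Finset.sum_sub_distrib, Finset.sum_const, nsmul_eq_mul, hI]
    ring
  -- variance bound over L via injection into all lines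
  have hvar : ∑ ℓ ∈ L, ((∑ p ∈ P, vinhInd (vinhRep ℓ) p) - S / q) ^ 2 ≤ q * S := by
    have h1 : ∑ ℓ ∈ L, ((∑ p ∈ P, vinhInd (vinhRep ℓ) p) - S / q) ^ 2
        = ∑ l ∈ L.image vinhRep, ((∑ p ∈ P, vinhInd l p) - S / q) ^ 2 :=
      (Finset.sum_image (f := fun l => (∑ p ∈ P, vinhInd l p - S / q) ^ 2) (g := vinhRep) (s := L)
        (fun x hx y hy h => hginj hx hy h)).symm
    rw [h1]
    calc ∑ l ∈ L.image vinhRep, ((∑ p ∈ P, vinhInd l p) - S / q) ^ 2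
        ≤ ∑ l : F ⊕ F × F, ((∑ p ∈ P, vinhInd l p) - S / q) ^ 2 := by
          apply Finset.sum_le_sum_of_subset_of_nonneg (Finset.subset_univ _)
          intro l _ _; positivity
      _ ≤ q * S := vinh_variance P hq
  -- Cauchy–Schwarz
  have hCS : ((((P ×ˢ L).filter fun z => z.1 ∈ z.2).card : ℝ) - S * (L.card : ℝ) / q) ^ 2
      ≤ q * S * (L.card : ℝ) := by
    rw [hmain]
    calc (∑ ℓ ∈ L, ((∑ p ∈ P, vinhInd (vinhRep ℓ) p) - S / q)) ^ 2
        ≤ (L.card : ℝ) * ∑ ℓ ∈ L, ((∑ p ∈ P, vinhInd (vinhRep ℓ) p) - S / q) ^ 2 :=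
          sq_sum_le_card_mul_sum_sq
      _ ≤ (L.card : ℝ) * (q * S) := by
          apply mul_le_mul_of_nonneg_left hvar (by positivity)
      _ = q * S * (L.card : ℝ) := by ring
  have habs : |(((P ×ˢ L).filter fun z => z.1 ∈ z.2).card : ℝ) - S * (L.card : ℝ) / q|
      ≤ Real.sqrt (q * S * (L.card : ℝ)) := by
    rw [← Real.sqrt_sq_eq_abs]
    exact Real.sqrt_le_sqrt hCS
  calc |(((P ×ˢ L).filter fun z => z.1 ∈ z.2).card : ℝ) - S * (L.card : ℝ) / q|
      ≤ Real.sqrt (q * S * (L.card : ℝ)) := habs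
    _ = Real.sqrt q * Real.sqrt S * Real.sqrt (L.card : ℝ) := by
        rw [Real.sqrt_mul (by positivity), Real.sqrt_mul (by positivity)]
end

section
/- Let q be an odd prime power and E ⊆ F_q² with n := |E|. Then the second moment of the parabolic distance counting function satisfies Σ_{t∈F_q} ν(t)² ≤ n⁴/q + q·n²·K_E. -/
open Finset

/-- The parabolic distance counting function `ν(t)` of `E ⊆ F_q²`. -/
def parabolicNu {F : Type*} [Field F] [DecidableEq F] (E : Finset (F × F)) (t : F) : ℕ :=
  ((E ×ˢ E).filter fun z : (F × F) × (F × F) =>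
    (z.1.2 - z.2.2) + (z.1.1 - z.2.1) ^ 2 = t).card

set_option maxHeartbeats 1000000 in
theorem second_moment_bound
    {F : Type*} [Field F] [Fintype F] [DecidableEq F]
    (hq : Odd (Fintype.card F))
    (E : Finset (F × F)) :
    (∑ t : F, (parabolicNu E t : ℝ) ^ 2) ≤
      (E.card : ℝ) ^ 4 / (Fintype.card F : ℝ) +
        (Fintype.card F : ℝ) * (E.card : ℝ) ^ 2 * (maxVertFiber E : ℝ) := by
  have h1 : (0:ℕ) < ringChar F := Nat.pos_of_ne_zero (CharP.ringChar_ne_zero_of_finite F)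
  set q := Fintype.card F with hqdef
  set n := E.card with hndef
  set K := maxVertFiber E with hKdef
  have hq0 : (0:ℝ) < q := by exact_mod_cast Fintype.card_pos
  set ψ : AddChar F ℂ := AddChar.FiniteField.primitiveChar_to_Complex F with hψdef
  have hprim : ψ.IsPrimitive := AddChar.FiniteField.primitiveChar_to_Complex_isPrimitive F
  have hnorm : ∀ a : F, ‖ψ a‖ = 1 := fun a => by
    refine Complex.norm_eq_one_of_pow_eq_one (n := ringChar F) ?_ h1.ne'
    rw [← AddChar.map_nsmul_eq_pow, nsmul_eq_mul, CharP.cast_eq_zero, zero_mul,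
      AddChar.map_zero_eq_one]
  have hconj : ∀ a : F, (starRingEnd ℂ) (ψ a) = ψ (-a) := fun a => by
    rw [AddChar.starComp_apply h1, AddChar.inv_apply]
  have hsum : ∀ b : F, ∑ s : F, ψ (s * b) = if b = 0 then (q : ℂ) else 0 := fun b => by
    rw [AddChar.sum_mulShift b hprim]
    split <;> simp [hqdef]
  have hns : ∀ z : ℂ, Complex.normSq z = ‖z‖ ^ 2 := fun z => by
    rw [Complex.sq_norm]
  set d : (F × F) × (F × F) → F := fun z => (z.1.2 - z.2.2) + (z.1.1 - z.2.1) ^ 2 with hd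
  set S := E ×ˢ E with hS
  set Q := (S ×ˢ S).filter (fun z => d z.1 = d z.2) with hQ
  set T : F → ℂ := fun s => ∑ z ∈ S, ψ (s * d z) with hT
  set g : F → F → ℂ := fun s u => ∑ y ∈ E, ψ (s * (y.1 ^ 2 - y.2) - 2 * s * u * y.1) with hg
  set P := S.filter (fun w : (F × F) × (F × F) => w.1.1 = w.2.1) with hP
  set H : F → ℂ := fun s => ∑ w ∈ P, ψ (s * (w.2.2 - w.1.2)) with hH
  set R : F → ℝ := fun s => ∑ u : F, Complex.normSq (g s u) with hR
  -- two is invertible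
  have h2F : (2:F) ≠ 0 := by
    refine Ring.two_ne_zero fun hc => ?_
    have h2 := FiniteField.even_card_iff_char_two.mp hc
    obtain ⟨k, hk⟩ := hq
    omega
  -- Step A : the second moment is the number of coincident-distance quadruples
  have hnu : ∀ t : F, parabolicNu E t = ((E ×ˢ E).filter fun p => d p = t).card := by
    intro t
    rw [parabolicNu]
  have stepA : (∑ t : F, (parabolicNu E t : ℝ) ^ 2) = (Q.card : ℝ) := by
    have key : ∀ t : F, Q.filter (fun z => d z.1 = t)
        = ((E ×ˢ E).filter fun p => d p = t) ×ˢ ((E ×ˢ E).filter fun p => d p = t) := by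
      intro t
      ext z
      simp only [hQ, hS, mem_filter, mem_product]
      constructor
      · rintro ⟨⟨⟨hz1, hz2⟩, h3⟩, h4⟩
        exact ⟨⟨hz1, h4⟩, hz2, h3 ▸ h4⟩
      · rintro ⟨⟨hz1, h3⟩, hz2, h4⟩
        exact ⟨⟨⟨hz1, hz2⟩, h3.trans h4.symm⟩, h3⟩
    have hcard : Q.card = ∑ t : F, parabolicNu E t * parabolicNu E t := by
      rw [card_eq_sum_card_fiberwise (f := fun z => d z.1) (t := Finset.univ)
        (fun _ _ => mem_univ _)]
      refine sum_congr rfl fun t _ => ?_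
      rw [key t, card_product, hnu t]
    rw [hcard]
    push_cast
    refine sum_congr rfl fun t _ => ?_
    ring
  -- Step B : character expansion of the quadruple count
  have stepB : ∑ s : F, (Complex.normSq (T s) : ℂ) = (q : ℂ) * Q.card := by
    have e1 : ∀ s : F, (Complex.normSq (T s) : ℂ) = ∑ z ∈ S, ∑ w ∈ S, ψ (s * (d z - d w)) := by
      intro s
      rw [← Complex.mul_conj]
      simp only [hT, map_sum, sum_mul_sum]
      refine sum_congr rfl fun z _ => sum_congr rfl fun w _ => ?_
      rw [hconj, ← AddChar.map_add_eq_mul]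
      congr 1
      ring
    calc ∑ s : F, (Complex.normSq (T s) : ℂ)
        = ∑ s : F, ∑ z ∈ S, ∑ w ∈ S, ψ (s * (d z - d w)) := sum_congr rfl fun s _ => e1 s
      _ = ∑ z ∈ S, ∑ s : F, ∑ w ∈ S, ψ (s * (d z - d w)) := sum_comm
      _ = ∑ z ∈ S, ∑ w ∈ S, ∑ s : F, ψ (s * (d z - d w)) :=
          sum_congr rfl fun z _ => sum_comm
      _ = ∑ z ∈ S, ∑ w ∈ S, if d z = d w then (q:ℂ) else 0 := by
          refine sum_congr rfl fun z _ => sum_congr rfl fun w _ => ?_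
          rw [hsum (d z - d w)]
          simp [sub_eq_zero]
      _ = ∑ p ∈ S ×ˢ S, if d p.1 = d p.2 then (q:ℂ) else 0 := by
          conv_rhs => rw [Finset.sum_product]
      _ = ∑ _p ∈ Q, (q:ℂ) := by rw [hQ, sum_filter]
      _ = (q:ℂ) * Q.card := by rw [sum_const, nsmul_eq_mul, mul_comm]
  have stepAB : (q : ℝ) * (∑ t : F, (parabolicNu E t : ℝ) ^ 2)
      = ∑ s : F, Complex.normSq (T s) := by
    rw [stepA]
    have h : (((q : ℝ) * (Q.card : ℝ) : ℝ) : ℂ) = ((∑ s : F, Complex.normSq (T s) : ℝ) : ℂ) := by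
      push_cast
      rw [stepB]
    exact Complex.ofReal_inj.mp h
  -- the zero frequency
  have stepT0 : Complex.normSq (T 0) = (n : ℝ) ^ 4 := by
    have hT0 : T 0 = ((n : ℂ)) ^ 2 := by
      rw [hT]
      simp only [zero_mul, AddChar.map_zero_eq_one, sum_const, nsmul_eq_mul, mul_one, hS,
        card_product, ← hndef]
      push_cast
      ring
    rw [hT0, show ((n : ℂ)) ^ 2 = (((n : ℝ) ^ 2 : ℝ) : ℂ) by push_cast; ring,
      Complex.normSq_ofReal]
    ring
  -- Steps C & D : Cauchy–Schwarz and fiber bound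
  have hKle : ∀ u : F, (E.filter fun p => p.1 = u).card ≤ K := fun u => by
    rw [hKdef]
    exact Finset.le_sup (f := fun u : F => (E.filter fun p => p.1 = u).card) (mem_univ u)
  have stepCD : ∀ s : F, Complex.normSq (T s) ≤ (n : ℝ) * K * R s := by
    intro s
    have hTfac : T s = ∑ x ∈ E, ψ (s * (x.2 + x.1 ^ 2)) * g s x.1 := by
      simp only [hT, hS, hg]
      rw [Finset.sum_product]
      refine sum_congr rfl fun x _ => ?_
      rw [mul_sum]
      refine sum_congr rfl fun y _ => ?_
      rw [← AddChar.map_add_eq_mul]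
      congr 1
      simp only [hd]
      ring
    have h2 : ‖T s‖ ≤ ∑ x ∈ E, ‖g s x.1‖ := by
      rw [hTfac]
      refine (norm_sum_le _ _).trans (le_of_eq (sum_congr rfl fun x _ => ?_))
      rw [norm_mul, hnorm, one_mul]
    have h3 : Complex.normSq (T s) ≤ (n : ℝ) * ∑ x ∈ E, Complex.normSq (g s x.1) := by
      rw [hns]
      calc ‖T s‖ ^ 2 ≤ (∑ x ∈ E, ‖g s x.1‖) ^ 2 := pow_le_pow_left₀ (norm_nonneg _) h2 2
        _ ≤ (∑ _x ∈ E, (1:ℝ) ^ 2) * ∑ x ∈ E, ‖g s x.1‖ ^ 2 := by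
            simpa using sum_mul_sq_le_sq_mul_sq E (fun _ => (1:ℝ)) (fun x => ‖g s x.1‖)
        _ = (n : ℝ) * ∑ x ∈ E, Complex.normSq (g s x.1) := by
            simp [hns, hndef]
    have h4 : ∑ x ∈ E, Complex.normSq (g s x.1) ≤ (K : ℝ) * R s := by
      rw [hR]
      rw [← Finset.sum_fiberwise E (fun p => p.1) (fun x => Complex.normSq (g s x.1)), mul_sum]
      refine sum_le_sum fun u _ => ?_
      have he : ∑ x ∈ E.filter (fun p => p.1 = u), Complex.normSq (g s x.1)
          = ((E.filter (fun p => p.1 = u)).card : ℝ) * Complex.normSq (g s u) := by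
        rw [sum_congr rfl fun x hx => by rw [(mem_filter.mp hx).2], sum_const, nsmul_eq_mul]
      rw [he]
      refine mul_le_mul_of_nonneg_right ?_ (Complex.normSq_nonneg _)
      exact_mod_cast hKle u
    calc Complex.normSq (T s) ≤ (n:ℝ) * ∑ x ∈ E, Complex.normSq (g s x.1) := h3
      _ ≤ (n:ℝ) * ((K:ℝ) * R s) := mul_le_mul_of_nonneg_left h4 (Nat.cast_nonneg _)
      _ = (n:ℝ) * K * R s := by ring
  -- Step E : orthogonality in the column variable
  have stepE : ∀ s : F, s ≠ 0 → ((R s : ℝ) : ℂ) = (q : ℂ) * H s := by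
    intro s hs
    have e1 : ∀ u : F, (Complex.normSq (g s u) : ℂ)
        = ∑ y ∈ E, ∑ y' ∈ E, ψ ((s * (y.1 ^ 2 - y.2) - s * (y'.1 ^ 2 - y'.2))
            + u * (2 * s * (y'.1 - y.1))) := by
      intro u
      rw [← Complex.mul_conj]
      simp only [hg, map_sum, sum_mul_sum]
      refine sum_congr rfl fun y _ => sum_congr rfl fun y' _ => ?_
      rw [hconj, ← AddChar.map_add_eq_mul]
      congr 1
      ring
    have hb : ∀ y y' : F × F, (2 * s * (y'.1 - y.1) = 0) ↔ (y.1 = y'.1) := by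
      intro y y'
      constructor
      · intro h
        rcases mul_eq_zero.mp h with h | h
        · rcases mul_eq_zero.mp h with h | h
          · exact absurd h h2F
          · exact absurd h hs
        · exact (sub_eq_zero.mp h).symm
      · intro h
        rw [h]
        simp
    have e2 : ((R s : ℝ) : ℂ) = ∑ y ∈ E, ∑ y' ∈ E,
        ψ (s * (y.1 ^ 2 - y.2) - s * (y'.1 ^ 2 - y'.2))
          * (if y.1 = y'.1 then (q:ℂ) else 0) := by
      rw [hR]
      push_cast
      calc ∑ u : F, (Complex.normSq (g s u) : ℂ)
          = ∑ u : F, ∑ y ∈ E, ∑ y' ∈ E, ψ ((s * (y.1 ^ 2 - y.2) - s * (y'.1 ^ 2 - y'.2))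
              + u * (2 * s * (y'.1 - y.1))) := sum_congr rfl fun u _ => e1 u
        _ = ∑ y ∈ E, ∑ u : F, ∑ y' ∈ E, ψ ((s * (y.1 ^ 2 - y.2) - s * (y'.1 ^ 2 - y'.2))
              + u * (2 * s * (y'.1 - y.1))) := sum_comm
        _ = ∑ y ∈ E, ∑ y' ∈ E, ∑ u : F, ψ ((s * (y.1 ^ 2 - y.2) - s * (y'.1 ^ 2 - y'.2))
              + u * (2 * s * (y'.1 - y.1))) := sum_congr rfl fun y _ => sum_comm
        _ = ∑ y ∈ E, ∑ y' ∈ E, ψ (s * (y.1 ^ 2 - y.2) - s * (y'.1 ^ 2 - y'.2))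
              * (if y.1 = y'.1 then (q:ℂ) else 0) := by
            refine sum_congr rfl fun y _ => sum_congr rfl fun y' _ => ?_
            rw [show (∑ u : F, ψ ((s * (y.1 ^ 2 - y.2) - s * (y'.1 ^ 2 - y'.2))
                + u * (2 * s * (y'.1 - y.1))))
              = ∑ u : F, ψ (s * (y.1 ^ 2 - y.2) - s * (y'.1 ^ 2 - y'.2))
                * ψ (u * (2 * s * (y'.1 - y.1))) from
                sum_congr rfl fun u _ => AddChar.map_add_eq_mul ψ _ _]
            rw [← mul_sum, hsum]
            congr 1
            simp only [hb y y']
    rw [e2]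
    calc ∑ y ∈ E, ∑ y' ∈ E, ψ (s * (y.1 ^ 2 - y.2) - s * (y'.1 ^ 2 - y'.2))
          * (if y.1 = y'.1 then (q:ℂ) else 0)
        = ∑ w ∈ S, ψ (s * (w.1.1 ^ 2 - w.1.2) - s * (w.2.1 ^ 2 - w.2.2))
            * (if w.1.1 = w.2.1 then (q:ℂ) else 0) := by
          conv_rhs => rw [Finset.sum_product]
      _ = ∑ w ∈ S, (if w.1.1 = w.2.1 then
            ψ (s * (w.1.1 ^ 2 - w.1.2) - s * (w.2.1 ^ 2 - w.2.2)) * (q:ℂ) else 0) := by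
          refine sum_congr rfl fun w _ => ?_
          rw [mul_ite, mul_zero]
      _ = ∑ w ∈ P, ψ (s * (w.1.1 ^ 2 - w.1.2) - s * (w.2.1 ^ 2 - w.2.2)) * (q:ℂ) := by
          rw [hP, sum_filter]
      _ = ∑ w ∈ P, ψ (s * (w.2.2 - w.1.2)) * (q:ℂ) := by
          refine sum_congr rfl fun w hw => ?_
          have hw1 : w.1.1 = w.2.1 := (mem_filter.mp hw).2
          congr 2
          rw [hw1]
          ring
      _ = (q : ℂ) * H s := by rw [← sum_mul, mul_comm, hH]
  -- Step F : total mass of H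
  have hH0 : H 0 = (P.card : ℂ) := by simp [hH]
  have hPdiag : (P.filter fun w => w.2.2 - w.1.2 = 0).card = n := by
    have hPd : P.filter (fun w => w.2.2 - w.1.2 = 0) = E.diag := by
      rw [hP, hS, filter_filter]
      ext w
      simp only [mem_filter, mem_product, Finset.mem_diag]
      constructor
      · rintro ⟨⟨hw1, hw2⟩, h3, h4⟩
        exact ⟨hw1, Prod.ext h3 (sub_eq_zero.mp h4).symm⟩
      · rintro ⟨hw1, h2⟩
        refine ⟨⟨hw1, h2 ▸ hw1⟩, ?_, ?_⟩
        · rw [h2]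
        · rw [h2, sub_self]
    rw [hPd, Finset.diag_card]
  have stepF : ∑ s : F, H s = (q : ℂ) * n := by
    simp only [hH]
    rw [sum_comm]
    calc ∑ w ∈ P, ∑ s : F, ψ (s * (w.2.2 - w.1.2))
        = ∑ w ∈ P, (if w.2.2 - w.1.2 = 0 then (q:ℂ) else 0) := sum_congr rfl fun w _ => hsum _
      _ = ∑ _w ∈ P.filter (fun w => w.2.2 - w.1.2 = 0), (q:ℂ) := (sum_filter _ _).symm
      _ = (q:ℂ) * n := by rw [sum_const, hPdiag, nsmul_eq_mul, mul_comm]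
  -- Step G : summing the column contributions
  have stepG : ∑ s ∈ Finset.univ.erase (0:F), R s ≤ (q : ℝ) ^ 2 * n := by
    have hc : ((∑ s ∈ Finset.univ.erase (0:F), R s : ℝ) : ℂ)
        = (q:ℂ) * ((q:ℂ) * n - P.card) := by
      push_cast
      calc ∑ s ∈ Finset.univ.erase (0:F), ((R s : ℝ) : ℂ)
          = ∑ s ∈ Finset.univ.erase (0:F), (q:ℂ) * H s :=
            sum_congr rfl fun s hs => stepE s (mem_erase.mp hs).1
        _ = (q:ℂ) * ∑ s ∈ Finset.univ.erase (0:F), H s := (mul_sum _ _ _).symm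
        _ = (q:ℂ) * ((∑ s : F, H s) - H 0) := by
            rw [← Finset.add_sum_erase Finset.univ H (mem_univ 0)]
            ring
        _ = (q:ℂ) * ((q:ℂ) * n - P.card) := by rw [stepF, hH0]
    have hr : (∑ s ∈ Finset.univ.erase (0:F), R s) = (q:ℝ) * ((q:ℝ) * n - P.card) := by
      exact_mod_cast hc
    rw [hr]
    have hP0 : (0:ℝ) ≤ P.card := Nat.cast_nonneg _
    nlinarith [hq0]
  -- Assemble
  have hRnn : ∀ s, 0 ≤ R s := fun s => sum_nonneg fun u _ => Complex.normSq_nonneg _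
  have main : (q : ℝ) * (∑ t : F, (parabolicNu E t : ℝ) ^ 2)
      ≤ (n : ℝ) ^ 4 + (q : ℝ) ^ 2 * (n : ℝ) ^ 2 * K := by
    rw [stepAB]
    calc ∑ s : F, Complex.normSq (T s)
        = Complex.normSq (T 0) + ∑ s ∈ Finset.univ.erase (0:F), Complex.normSq (T s) :=
          (Finset.add_sum_erase _ _ (mem_univ 0)).symm
      _ ≤ (n : ℝ) ^ 4 + ∑ s ∈ Finset.univ.erase (0:F), (n : ℝ) * K * R s := by
          rw [stepT0]
          exact add_le_add_right (sum_le_sum fun s _ => stepCD s) _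
      _ = (n : ℝ) ^ 4 + (n : ℝ) * K * ∑ s ∈ Finset.univ.erase (0:F), R s := by
          rw [mul_sum]
      _ ≤ (n : ℝ) ^ 4 + (n : ℝ) * K * ((q : ℝ) ^ 2 * n) := by
          refine add_le_add_right (mul_le_mul_of_nonneg_left stepG (by positivity)) _
      _ = (n : ℝ) ^ 4 + (q : ℝ) ^ 2 * (n : ℝ) ^ 2 * K := by ring
  have hfin : (∑ t : F, (parabolicNu E t : ℝ) ^ 2)
      ≤ ((n : ℝ) ^ 4 + (q : ℝ) ^ 2 * (n : ℝ) ^ 2 * K) / q := by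
    rw [le_div_iff₀ hq0]
    nlinarith [main]
  calc (∑ t : F, (parabolicNu E t : ℝ) ^ 2)
      ≤ ((n : ℝ) ^ 4 + (q : ℝ) ^ 2 * (n : ℝ) ^ 2 * K) / q := hfin
    _ = (n : ℝ) ^ 4 / q + (q : ℝ) * (n : ℝ) ^ 2 * K := by
        field_simp
end

section
/- Let q be an odd prime power and E ⊆ F_q². Then for every t ∈ F_q, the number ν(t) of pairs (x,y) ∈ E×E with ‖x−y‖_P = t satisfies ν(t) ≥ |E|²/q − q^{1/2}·|E|. -/
open Finset

namespace ParabolicAux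

open AddChar Complex

variable {F : Type*} [Field F] [Fintype F] [DecidableEq F]

omit [DecidableEq F] in
lemma ringChar_ne_two (hq : Odd (Fintype.card F)) : ringChar F ≠ 2 := by
  intro h
  have hcard := FiniteField.even_card_of_char_two h
  rw [Nat.odd_iff] at hq
  omega

omit [DecidableEq F] in
lemma psi_norm_one (ψ : AddChar F ℂ) (a : F) : ‖ψ a‖ = 1 := by
  have h : ψ a ^ Fintype.card F = 1 := by
    rw [← AddChar.map_nsmul_eq_pow]
    have h0 : (Fintype.card F : ℕ) • a = 0 := by
      simp [nsmul_eq_mul, FiniteField.cast_card_eq_zero]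
    rw [h0, AddChar.map_zero_eq_one]
  have h2 : ‖ψ a‖ ^ Fintype.card F = 1 := by rw [← norm_pow, h, norm_one]
  rcases (pow_eq_one_iff_of_ne_zero Fintype.card_ne_zero).mp h2 with h3 | ⟨h3, -⟩
  · exact h3
  · nlinarith [norm_nonneg (ψ a)]

/-- Norm of the quadratic exponential sum (completed square Gauss sum). -/
lemma norm_quad_sum (hq : Odd (Fintype.card F)) {ψ : AddChar F ℂ} (hψ : ψ.IsPrimitive)
    {s : F} (hs : s ≠ 0) (m : F) :
    ‖∑ u : F, ψ (s * u ^ 2 + m * u)‖ = Real.sqrt (Fintype.card F) := by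
  have h2 : (2 : F) ≠ 0 := Ring.two_ne_zero (ringChar_ne_two hq)
  set c : F := -(m / (2 * s)) with hc
  have key : ∑ u : F, ψ (s * u ^ 2 + m * u)
      = ψ (s * c ^ 2 + m * c) * ∑ v : F, ψ (s * v ^ 2) := by
    rw [Finset.mul_sum,
      ← Equiv.sum_comp (Equiv.addRight c) (fun u => ψ (s * u ^ 2 + m * u))]
    refine Finset.sum_congr rfl fun v _ => ?_
    simp only [Equiv.coe_addRight]
    rw [← AddChar.map_add_eq_mul]
    congr 1
    rw [hc]
    field_simp
    ring
  rw [key, norm_mul, psi_norm_one, one_mul]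
  set ψ' : AddChar F ℂ := ψ.mulShift s with hψ'def
  have hψ'ne : ψ' ≠ 1 := hψ hs
  have hψ'prim : ψ'.IsPrimitive := AddChar.IsPrimitive.of_ne_one hψ'ne
  set χ : MulChar F ℂ := (quadraticChar F).ringHomComp (Int.castRingHom ℂ) with hχdef
  have hχval : ∀ a : F, χ a = ((quadraticChar F a : ℤ) : ℂ) := fun a => rfl
  have hsum : ∑ v : F, ψ (s * v ^ 2) = gaussSum χ ψ' := by
    have h1 : ∀ v : F, ψ (s * v ^ 2) = ψ' (v ^ 2) := fun v => by
      rw [hψ'def, AddChar.mulShift_apply]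
    simp only [h1]
    have h2' : ∑ v : F, ψ' (v ^ 2)
        = ∑ a : F, ∑ v ∈ univ.filter (fun v : F => v ^ 2 = a), ψ' (v ^ 2) := by
      rw [Finset.sum_fiberwise_eq_sum_filter univ univ (fun v : F => v ^ 2)
        (fun v => ψ' (v ^ 2))]
      simp
    rw [h2']
    have h3 : ∀ a : F, ∑ v ∈ univ.filter (fun v : F => v ^ 2 = a), ψ' (v ^ 2)
        = (χ a + 1) * ψ' a := by
      intro a
      have heq : ∑ v ∈ univ.filter (fun v : F => v ^ 2 = a), ψ' (v ^ 2)
          = ∑ _v ∈ univ.filter (fun v : F => v ^ 2 = a), ψ' a :=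
        Finset.sum_congr rfl fun v hv => by rw [(Finset.mem_filter.mp hv).2]
      rw [heq, Finset.sum_const, nsmul_eq_mul]
      congr 1
      have hcount := quadraticChar_card_sqrts (ringChar_ne_two hq) a
      have hset : ({x : F | x ^ 2 = a} : Set F).toFinset
          = univ.filter (fun v : F => v ^ 2 = a) := by
        ext x; simp
      rw [hset] at hcount
      have hcast := congrArg (fun n : ℤ => (n : ℂ)) hcount
      push_cast at hcast
      rw [hcast, hχval]
    simp only [h3]
    rw [gaussSum]
    simp only [add_mul, one_mul]
    rw [Finset.sum_add_distrib, AddChar.sum_eq_zero_of_ne_one hψ'ne, add_zero]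
  rw [hsum]
  have hχ₁ : χ ≠ 1 := by
    rw [hχdef, MulChar.ringHomComp_ne_one_iff Int.cast_injective]
    exact quadraticChar_ne_one (ringChar_ne_two hq)
  have hχ₂ : χ.IsQuadratic := (quadraticChar_isQuadratic F).comp _
  have hg2 : gaussSum χ ψ' ^ 2 = χ (-1) * Fintype.card F := gaussSum_sq hχ₁ hχ₂ hψ'prim
  have hnormχ : ‖χ (-1)‖ = 1 := by
    rcases quadraticChar_dichotomy (neg_ne_zero.mpr (one_ne_zero (α := F))) with h | h <;>
      rw [hχval, h] <;> simp
  have hnsq : ‖gaussSum χ ψ'‖ ^ 2 = (Fintype.card F : ℝ) := by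
    rw [← norm_pow, hg2, norm_mul, hnormχ, one_mul, Complex.norm_natCast]
  rw [← Real.sqrt_sq (norm_nonneg (gaussSum χ ψ')), hnsq]

variable {ψ : AddChar F ℂ}

lemma orth (hψ : ψ.IsPrimitive) (a : F) :
    ∑ s : F, ψ (s * a) = if a = 0 then (Fintype.card F : ℂ) else 0 := by
  rw [AddChar.sum_mulShift a hψ]
  split_ifs <;> simp

/-- The key Fourier identity. -/
lemma key_identity (hψ : ψ.IsPrimitive) (E : Finset (F × F)) (s : F) :
    ∑ m : F, (∑ u : F, ψ (s * u ^ 2 - m * u)) *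
      ((∑ x ∈ E, ψ (m * x.1 + s * x.2)) * (∑ y ∈ E, ψ (-(m * y.1 + s * y.2))))
    = (Fintype.card F : ℂ) *
        ∑ z ∈ E ×ˢ E, ψ (s * ((z.1.2 - z.2.2) + (z.1.1 - z.2.1) ^ 2)) := by
  calc ∑ m : F, (∑ u : F, ψ (s * u ^ 2 - m * u)) *
      ((∑ x ∈ E, ψ (m * x.1 + s * x.2)) * (∑ y ∈ E, ψ (-(m * y.1 + s * y.2))))
      = ∑ m : F, ∑ u : F, ∑ z ∈ E ×ˢ E,
          ψ (m * (z.1.1 - z.2.1 - u)) * ψ (s * u ^ 2 + (s * z.1.2 - s * z.2.2)) := by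
        refine Finset.sum_congr rfl fun m _ => ?_
        rw [Finset.sum_mul_sum E E (fun x => ψ (m * x.1 + s * x.2))
          (fun y => ψ (-(m * y.1 + s * y.2))), ← Finset.sum_product', Finset.sum_mul]
        refine Finset.sum_congr rfl fun u _ => ?_
        rw [Finset.mul_sum]
        refine Finset.sum_congr rfl fun z _ => ?_
        rw [← AddChar.map_add_eq_mul, ← AddChar.map_add_eq_mul, ← AddChar.map_add_eq_mul,
          show s * u ^ 2 - m * u + (m * z.1.1 + s * z.1.2 + -(m * z.2.1 + s * z.2.2))
            = m * (z.1.1 - z.2.1 - u) + (s * u ^ 2 + (s * z.1.2 - s * z.2.2)) from by ring,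
          AddChar.map_add_eq_mul]
    _ = ∑ u : F, ∑ m : F, ∑ z ∈ E ×ˢ E,
          ψ (m * (z.1.1 - z.2.1 - u)) * ψ (s * u ^ 2 + (s * z.1.2 - s * z.2.2)) :=
        Finset.sum_comm
    _ = ∑ u : F, ∑ z ∈ E ×ˢ E, ∑ m : F,
          ψ (m * (z.1.1 - z.2.1 - u)) * ψ (s * u ^ 2 + (s * z.1.2 - s * z.2.2)) :=
        Finset.sum_congr rfl fun u _ => Finset.sum_comm
    _ = ∑ z ∈ E ×ˢ E, ∑ u : F, ∑ m : F,
          ψ (m * (z.1.1 - z.2.1 - u)) * ψ (s * u ^ 2 + (s * z.1.2 - s * z.2.2)) :=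
        Finset.sum_comm
    _ = ∑ z ∈ E ×ˢ E, (Fintype.card F : ℂ) *
          ψ (s * ((z.1.2 - z.2.2) + (z.1.1 - z.2.1) ^ 2)) := by
        refine Finset.sum_congr rfl fun z _ => ?_
        have hcol : ∀ u : F, ∑ m : F, ψ (m * (z.1.1 - z.2.1 - u)) *
            ψ (s * u ^ 2 + (s * z.1.2 - s * z.2.2))
            = (if u = z.1.1 - z.2.1 then (Fintype.card F : ℂ) else 0) *
                ψ (s * u ^ 2 + (s * z.1.2 - s * z.2.2)) := by
          intro u
          rw [← Finset.sum_mul, orth hψ]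
          by_cases h : u = z.1.1 - z.2.1
          · rw [if_pos (by rw [h]; ring), if_pos h]
          · rw [if_neg (fun hc => h (sub_eq_zero.mp hc).symm), if_neg h]
        rw [Finset.sum_congr rfl fun u _ => hcol u]
        simp only [ite_mul, zero_mul]
        rw [Fintype.sum_ite_eq' (z.1.1 - z.2.1)
          (fun u => (Fintype.card F : ℂ) * ψ (s * u ^ 2 + (s * z.1.2 - s * z.2.2)))]
        rw [show s * (z.1.1 - z.2.1) ^ 2 + (s * z.1.2 - s * z.2.2)
          = s * ((z.1.2 - z.2.2) + (z.1.1 - z.2.1) ^ 2) from by ring]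
    _ = (Fintype.card F : ℂ) *
          ∑ z ∈ E ×ˢ E, ψ (s * ((z.1.2 - z.2.2) + (z.1.1 - z.2.1) ^ 2)) :=
        (Finset.mul_sum _ _ _).symm

/-- Parseval / orthogonality identity. -/
lemma parseval (hψ : ψ.IsPrimitive) (E : Finset (F × F)) :
    ∑ m : F, ∑ s : F,
      (∑ x ∈ E, ψ (m * x.1 + s * x.2)) * (∑ y ∈ E, ψ (-(m * y.1 + s * y.2)))
    = (Fintype.card F : ℂ) ^ 2 * E.card := by
  calc ∑ m : F, ∑ s : F,
      (∑ x ∈ E, ψ (m * x.1 + s * x.2)) * (∑ y ∈ E, ψ (-(m * y.1 + s * y.2)))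
      = ∑ m : F, ∑ s : F, ∑ z ∈ E ×ˢ E,
          ψ (m * (z.1.1 - z.2.1)) * ψ (s * (z.1.2 - z.2.2)) := by
        refine Finset.sum_congr rfl fun m _ => Finset.sum_congr rfl fun s _ => ?_
        rw [Finset.sum_mul_sum E E (fun x => ψ (m * x.1 + s * x.2))
          (fun y => ψ (-(m * y.1 + s * y.2))), ← Finset.sum_product']
        refine Finset.sum_congr rfl fun z _ => ?_
        rw [← AddChar.map_add_eq_mul,
          show m * z.1.1 + s * z.1.2 + -(m * z.2.1 + s * z.2.2)
            = m * (z.1.1 - z.2.1) + s * (z.1.2 - z.2.2) from by ring,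
          AddChar.map_add_eq_mul]
    _ = ∑ m : F, ∑ z ∈ E ×ˢ E, ∑ s : F,
          ψ (m * (z.1.1 - z.2.1)) * ψ (s * (z.1.2 - z.2.2)) :=
        Finset.sum_congr rfl fun m _ => Finset.sum_comm
    _ = ∑ z ∈ E ×ˢ E, ∑ m : F, ∑ s : F,
          ψ (m * (z.1.1 - z.2.1)) * ψ (s * (z.1.2 - z.2.2)) :=
        Finset.sum_comm
    _ = ∑ z ∈ E ×ˢ E, (if z.1 = z.2 then (Fintype.card F : ℂ) ^ 2 else 0) := by
        refine Finset.sum_congr rfl fun z _ => ?_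
        rw [← Finset.sum_mul_sum, orth hψ, orth hψ]
        simp only [sub_eq_zero]
        by_cases h1 : z.1.1 = z.2.1 <;> by_cases h2 : z.1.2 = z.2.2 <;>
          simp [h1, h2, Prod.ext_iff, sq]
    _ = (Fintype.card F : ℂ) ^ 2 * E.card := by
        rw [← Finset.sum_filter, Finset.sum_const, nsmul_eq_mul]
        have hdiag : ((E ×ˢ E).filter fun z : (F × F) × (F × F) => z.1 = z.2)
            = E.image fun x => (x, x) := by
          ext z
          simp only [Finset.mem_filter, Finset.mem_product, Finset.mem_image]
          constructor
          · rintro ⟨⟨hz1, _⟩, h3⟩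
            exact ⟨z.1, hz1, by rw [Prod.ext_iff]; exact ⟨rfl, h3⟩⟩
          · rintro ⟨x, hx, rfl⟩
            exact ⟨⟨hx, hx⟩, rfl⟩
        rw [hdiag, Finset.card_image_of_injective _ (fun a b h => congrArg Prod.fst h)]
        ring

/-- Counting identity for ν. -/
lemma count_eq (hψ : ψ.IsPrimitive) (E : Finset (F × F)) (t : F) :
    ∑ s : F, ψ (-(s * t)) *
      ∑ z ∈ E ×ˢ E, ψ (s * ((z.1.2 - z.2.2) + (z.1.1 - z.2.1) ^ 2))
    = (Fintype.card F : ℂ) * (parabolicNu E t : ℂ) := by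
  have step1 : ∀ s : F, ψ (-(s * t)) *
      (∑ z ∈ E ×ˢ E, ψ (s * ((z.1.2 - z.2.2) + (z.1.1 - z.2.1) ^ 2)))
      = ∑ z ∈ E ×ˢ E, ψ (s * ((z.1.2 - z.2.2) + (z.1.1 - z.2.1) ^ 2 - t)) := by
    intro s
    rw [Finset.mul_sum]
    refine Finset.sum_congr rfl fun z _ => ?_
    rw [← AddChar.map_add_eq_mul,
      show -(s * t) + s * ((z.1.2 - z.2.2) + (z.1.1 - z.2.1) ^ 2)
        = s * ((z.1.2 - z.2.2) + (z.1.1 - z.2.1) ^ 2 - t) from by ring]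
  simp only [step1]
  rw [Finset.sum_comm]
  have step2 : ∀ z : (F × F) × (F × F), z ∈ E ×ˢ E →
      ∑ s : F, ψ (s * ((z.1.2 - z.2.2) + (z.1.1 - z.2.1) ^ 2 - t))
      = if (z.1.2 - z.2.2) + (z.1.1 - z.2.1) ^ 2 = t then (Fintype.card F : ℂ) else 0 := by
    intro z _
    rw [orth hψ]
    exact if_congr sub_eq_zero rfl rfl
  rw [Finset.sum_congr rfl step2, ← Finset.sum_filter, Finset.sum_const, nsmul_eq_mul]
  rw [parabolicNu, mul_comm]

end ParabolicAux

open ParabolicAux in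
theorem nu_lower_bound
    {F : Type*} [Field F] [Fintype F] [DecidableEq F]
    (hq : Odd (Fintype.card F))
    (E : Finset (F × F)) :
    ∀ t : F, (parabolicNu E t : ℝ) ≥
      (E.card : ℝ) ^ 2 / (Fintype.card F : ℝ) -
        Real.sqrt (Fintype.card F) * (E.card : ℝ) := by
  intro t
  classical
  have hqpos : (0:ℝ) < ((Fintype.card F : ℕ) : ℝ) := by exact_mod_cast Fintype.card_pos
  have hcharpos : 0 < ringChar F :=
    Nat.pos_of_ne_zero (CharP.ringChar_ne_zero_of_finite F)
  set ψ : AddChar F ℂ := AddChar.FiniteField.primitiveChar_to_Complex F with hψdef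
  have hψ : ψ.IsPrimitive := AddChar.FiniteField.primitiveChar_to_Complex_isPrimitive F
  -- the conjugate sum
  have hconj : ∀ m s : F, (∑ y ∈ E, ψ (-(m * y.1 + s * y.2)))
      = (starRingEnd ℂ) (∑ x ∈ E, ψ (m * x.1 + s * x.2)) := by
    intro m s
    rw [map_sum]
    exact Finset.sum_congr rfl fun y _ => by
      rw [AddChar.starComp_apply hcharpos, AddChar.inv_apply]
  have hSS : ∀ m s : F, (∑ x ∈ E, ψ (m * x.1 + s * x.2)) *
      (∑ y ∈ E, ψ (-(m * y.1 + s * y.2)))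
      = ((‖∑ x ∈ E, ψ (m * x.1 + s * x.2)‖ ^ 2 : ℝ) : ℂ) := by
    intro m s
    rw [hconj, Complex.mul_conj, Complex.normSq_eq_norm_sq]
  -- key identity with norms
  have hkey : ∀ s : F, (Fintype.card F : ℂ) *
      (∑ z ∈ E ×ˢ E, ψ (s * ((z.1.2 - z.2.2) + (z.1.1 - z.2.1) ^ 2)))
      = ∑ m : F, (∑ u : F, ψ (s * u ^ 2 - m * u)) *
          ((‖∑ x ∈ E, ψ (m * x.1 + s * x.2)‖ ^ 2 : ℝ) : ℂ) := by
    intro s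
    rw [← key_identity hψ E s]
    exact (Finset.sum_congr rfl fun m _ => by rw [hSS m s]).symm
  -- Gauss sum norms
  have hGnorm : ∀ s : F, s ≠ 0 → ∀ m : F,
      ‖∑ u : F, ψ (s * u ^ 2 - m * u)‖ = Real.sqrt (Fintype.card F) := by
    intro s hs m
    have h := norm_quad_sum hq hψ hs (-m)
    simpa [neg_mul, ← sub_eq_add_neg] using h
  -- bound on the parabola sums
  have hUbound : ∀ s : F, s ≠ 0 →
      ((Fintype.card F : ℕ) : ℝ) *
        ‖∑ z ∈ E ×ˢ E, ψ (s * ((z.1.2 - z.2.2) + (z.1.1 - z.2.1) ^ 2))‖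
      ≤ Real.sqrt (Fintype.card F) *
          ∑ m : F, ‖∑ x ∈ E, ψ (m * x.1 + s * x.2)‖ ^ 2 := by
    intro s hs
    have h1 : ((Fintype.card F : ℕ) : ℝ) *
        ‖∑ z ∈ E ×ˢ E, ψ (s * ((z.1.2 - z.2.2) + (z.1.1 - z.2.1) ^ 2))‖
        = ‖(Fintype.card F : ℂ) *
            (∑ z ∈ E ×ˢ E, ψ (s * ((z.1.2 - z.2.2) + (z.1.1 - z.2.1) ^ 2)))‖ := by
      rw [norm_mul, Complex.norm_natCast]
    rw [h1, hkey s]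
    calc ‖∑ m : F, (∑ u : F, ψ (s * u ^ 2 - m * u)) *
        ((‖∑ x ∈ E, ψ (m * x.1 + s * x.2)‖ ^ 2 : ℝ) : ℂ)‖
        ≤ ∑ m : F, ‖(∑ u : F, ψ (s * u ^ 2 - m * u)) *
            ((‖∑ x ∈ E, ψ (m * x.1 + s * x.2)‖ ^ 2 : ℝ) : ℂ)‖ := norm_sum_le _ _
      _ = ∑ m : F, Real.sqrt (Fintype.card F) * ‖∑ x ∈ E, ψ (m * x.1 + s * x.2)‖ ^ 2 := by
          refine Finset.sum_congr rfl fun m _ => ?_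
          rw [norm_mul, hGnorm s hs m, Complex.norm_real, Real.norm_eq_abs,
            abs_of_nonneg (sq_nonneg _)]
      _ = Real.sqrt (Fintype.card F) *
            ∑ m : F, ‖∑ x ∈ E, ψ (m * x.1 + s * x.2)‖ ^ 2 := by rw [Finset.mul_sum]
  -- Parseval, real version
  have hpars : ∑ s : F, ∑ m : F, ‖∑ x ∈ E, ψ (m * x.1 + s * x.2)‖ ^ 2
      = ((Fintype.card F : ℕ) : ℝ) ^ 2 * E.card := by
    have h := parseval hψ E
    have h2 : ∑ m : F, ∑ s : F, ((‖∑ x ∈ E, ψ (m * x.1 + s * x.2)‖ ^ 2 : ℝ) : ℂ)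
        = (Fintype.card F : ℂ) ^ 2 * E.card := by
      rw [← h]
      exact Finset.sum_congr rfl fun m _ => Finset.sum_congr rfl fun s _ => (hSS m s).symm
    rw [Finset.sum_comm] at h2
    exact_mod_cast h2
  -- counting identity, split off s = 0
  have hcount := count_eq hψ E t
  set R : ℂ := ∑ s ∈ (univ : Finset F).erase 0, ψ (-(s * t)) *
    ∑ z ∈ E ×ˢ E, ψ (s * ((z.1.2 - z.2.2) + (z.1.1 - z.2.1) ^ 2)) with hRdef
  have hU0 : (∑ z ∈ E ×ˢ E, ψ ((0:F) * ((z.1.2 - z.2.2) + (z.1.1 - z.2.1) ^ 2)))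
      = ((E.card : ℂ)) ^ 2 := by
    simp only [zero_mul, AddChar.map_zero_eq_one, Finset.sum_const, nsmul_eq_mul, mul_one,
      Finset.card_product]
    push_cast
    ring
  have hsplit : (E.card : ℂ) ^ 2 + R = (Fintype.card F : ℂ) * (parabolicNu E t : ℂ) := by
    rw [← hcount, ← Finset.add_sum_erase univ _ (Finset.mem_univ (0 : F))]
    congr 1
    rw [hU0]
    simp
  -- take real parts
  have hre : ((Fintype.card F : ℕ) : ℝ) * (parabolicNu E t : ℝ)
      = (E.card : ℝ) ^ 2 + R.re := by
    have h1 : ((E.card : ℂ) ^ 2).re = (E.card : ℝ) ^ 2 := by norm_cast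
    have h2 : ((Fintype.card F : ℂ) * (parabolicNu E t : ℂ)).re
        = ((Fintype.card F : ℕ) : ℝ) * (parabolicNu E t : ℝ) := by norm_cast
    have h' := congrArg Complex.re hsplit
    rw [Complex.add_re, h1, h2] at h'
    linarith
  -- bound the error term
  have hRnorm : ((Fintype.card F : ℕ) : ℝ) * ‖R‖
      ≤ Real.sqrt (Fintype.card F) * (((Fintype.card F : ℕ) : ℝ) ^ 2 * E.card) := by
    have h1 : ‖R‖ ≤ ∑ s ∈ (univ : Finset F).erase 0,
        ‖∑ z ∈ E ×ˢ E, ψ (s * ((z.1.2 - z.2.2) + (z.1.1 - z.2.1) ^ 2))‖ := by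
      rw [hRdef]
      refine le_trans (norm_sum_le _ _) ?_
      refine Finset.sum_le_sum fun s _ => ?_
      rw [norm_mul, psi_norm_one, one_mul]
    have h2 : ((Fintype.card F : ℕ) : ℝ) * ∑ s ∈ (univ : Finset F).erase 0,
        ‖∑ z ∈ E ×ˢ E, ψ (s * ((z.1.2 - z.2.2) + (z.1.1 - z.2.1) ^ 2))‖
        ≤ Real.sqrt (Fintype.card F) * ∑ s ∈ (univ : Finset F).erase 0,
            ∑ m : F, ‖∑ x ∈ E, ψ (m * x.1 + s * x.2)‖ ^ 2 := by
      rw [Finset.mul_sum, Finset.mul_sum]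
      refine Finset.sum_le_sum fun s hs => ?_
      exact hUbound s (Finset.mem_erase.mp hs).1
    have h3 : ∑ s ∈ (univ : Finset F).erase 0,
        ∑ m : F, ‖∑ x ∈ E, ψ (m * x.1 + s * x.2)‖ ^ 2
        ≤ ∑ s : F, ∑ m : F, ‖∑ x ∈ E, ψ (m * x.1 + s * x.2)‖ ^ 2 := by
      refine Finset.sum_le_sum_of_subset_of_nonneg (Finset.subset_univ _) fun s _ _ => ?_
      exact Finset.sum_nonneg fun m _ => sq_nonneg _
    have hsqrtnn : (0:ℝ) ≤ Real.sqrt (Fintype.card F) := Real.sqrt_nonneg _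
    calc ((Fintype.card F : ℕ) : ℝ) * ‖R‖
        ≤ ((Fintype.card F : ℕ) : ℝ) * ∑ s ∈ (univ : Finset F).erase 0,
            ‖∑ z ∈ E ×ˢ E, ψ (s * ((z.1.2 - z.2.2) + (z.1.1 - z.2.1) ^ 2))‖ :=
          mul_le_mul_of_nonneg_left h1 (le_of_lt hqpos)
      _ ≤ Real.sqrt (Fintype.card F) * ∑ s ∈ (univ : Finset F).erase 0,
            ∑ m : F, ‖∑ x ∈ E, ψ (m * x.1 + s * x.2)‖ ^ 2 := h2
      _ ≤ Real.sqrt (Fintype.card F) *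
            ∑ s : F, ∑ m : F, ‖∑ x ∈ E, ψ (m * x.1 + s * x.2)‖ ^ 2 :=
          mul_le_mul_of_nonneg_left h3 hsqrtnn
      _ = Real.sqrt (Fintype.card F) * (((Fintype.card F : ℕ) : ℝ) ^ 2 * E.card) := by
          rw [hpars]
  -- put everything together
  have hRre : -‖R‖ ≤ R.re := by
    have h := Complex.abs_re_le_norm R
    cases abs_le.mp h with
    | intro hl _ => linarith
  have hfinal : ((Fintype.card F : ℕ) : ℝ) ^ 2 * (parabolicNu E t : ℝ)
      ≥ ((Fintype.card F : ℕ) : ℝ) * (E.card : ℝ) ^ 2 -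
        Real.sqrt (Fintype.card F) * (((Fintype.card F : ℕ) : ℝ) ^ 2 * E.card) := by
    nlinarith [hRnorm, hRre, hqpos, hre]
  have hdiv : (E.card : ℝ) ^ 2 / ((Fintype.card F : ℕ) : ℝ) * ((Fintype.card F : ℕ) : ℝ)
      = (E.card : ℝ) ^ 2 :=
    div_mul_cancel₀ _ (ne_of_gt hqpos)
  rw [ge_iff_le]
  have hq2pos : (0:ℝ) < ((Fintype.card F : ℕ) : ℝ) ^ 2 := by positivity
  nlinarith [hfinal, hdiv, hq2pos, hqpos]
end

section
/- Let q be an odd prime power and let E ⊆ F_q² be nonempty with n := |E|. Then |Δ_P(E)| ≥ q / (1 + q²·𝓔_fib(E)/n⁴). -/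
open Finset

/-- The additive energy `E₊(P,Q) = #{(x,x',y,y') ∈ P×P×Q×Q : x+y = x'+y'}`. -/
def additiveEnergyPQ {F : Type*} [Add F] [DecidableEq F] (P Q : Finset F) : ℕ :=
  (((P ×ˢ P) ×ˢ (Q ×ˢ Q)).filter fun z => z.1.1 + z.2.1 = z.1.2 + z.2.2).card

/-- The vertical fiber `E_u = {y : (u,y) ∈ E}` of `E ⊆ F_q²`. -/
def vertFiber {F : Type*} [Fintype F] [DecidableEq F] (E : Finset (F × F)) (u : F) :
    Finset F :=
  Finset.univ.filter fun y : F => (u, y) ∈ E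

/-- The fiber alignment energy `𝓔_fib(E) = Σ_{u,u'} E₊(E_u, E_{u'})`. -/
def fiberEnergy {F : Type*} [Add F] [Fintype F] [DecidableEq F] (E : Finset (F × F)) : ℕ :=
  ∑ u : F, ∑ u' : F, additiveEnergyPQ (vertFiber E u) (vertFiber E u')

namespace ParabolicProof

variable {F : Type*} [Field F] [Fintype F] [DecidableEq F]

def pd (z : (F × F) × (F × F)) : F := (z.1.2 - z.2.2) + (z.1.1 - z.2.1) ^ 2

def quadCount (E : Finset (F × F)) : ℕ :=
  (((E ×ˢ E) ×ˢ (E ×ˢ E)).filter fun w => pd w.1 = pd w.2).card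

noncomputable def ff (ψ : AddChar F ℂ) (E : Finset (F × F)) (s u : F) : ℂ :=
  ∑ b ∈ vertFiber E u, ψ (s * b)

noncomputable def gg (ψ : AddChar F ℂ) (E : Finset (F × F)) (s a : F) : ℂ :=
  ∑ c : F, ψ (s * (a - c) ^ 2) * (starRingEnd ℂ) (ff ψ E s c)

noncomputable def TT (ψ : AddChar F ℂ) (E : Finset (F × F)) (s : F) : ℂ :=
  ∑ z ∈ E ×ˢ E, ψ (s * pd z)

lemma fiber_sum (E : Finset (F × F)) (h : F × F → ℂ) :
    ∑ x ∈ E, h x = ∑ a : F, ∑ b ∈ vertFiber E a, h (a, b) := by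
  have h1 : ∀ a : F, ∑ b ∈ vertFiber E a, h (a, b)
      = ∑ b : F, if (a, b) ∈ E then h (a, b) else 0 := by
    intro a; rw [vertFiber, Finset.sum_filter]
  have h0 : ∑ x ∈ E, h x = ∑ x : F × F, if x ∈ E then h x else 0 := by
    rw [Finset.sum_ite_mem, Finset.univ_inter]
  rw [h0, Fintype.sum_prod_type]
  exact Finset.sum_congr rfl fun a _ => (h1 a).symm

lemma lemA {ψ : AddChar F ℂ} (hψ : ψ.IsPrimitive) (E : Finset (F × F)) :
    ∑ s : F, Complex.normSq (TT ψ E s)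
      = (Fintype.card F : ℝ) * (quadCount E : ℝ) := by
  have key : ∑ s : F, TT ψ E s * (starRingEnd ℂ) (TT ψ E s)
      = (Fintype.card F : ℂ) * (quadCount E : ℂ) := by
    calc ∑ s : F, TT ψ E s * (starRingEnd ℂ) (TT ψ E s)
        = ∑ s : F, ∑ z ∈ E ×ˢ E, ∑ z' ∈ E ×ˢ E, ψ (s * (pd z - pd z')) := by
          refine Finset.sum_congr rfl fun s _ => ?_
          rw [TT, map_sum, Finset.sum_mul_sum]
          refine Finset.sum_congr rfl fun z _ => Finset.sum_congr rfl fun z' _ => ?_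
          rw [← AddChar.map_neg_eq_conj, ← AddChar.map_add_eq_mul]
          congr 1; ring
      _ = ∑ z ∈ E ×ˢ E, ∑ z' ∈ E ×ˢ E, ∑ s : F, ψ (s * (pd z - pd z')) := by
          rw [Finset.sum_comm]
          exact Finset.sum_congr rfl fun _ _ => Finset.sum_comm
      _ = ∑ z ∈ E ×ˢ E, ∑ z' ∈ E ×ˢ E,
            if pd z = pd z' then (Fintype.card F : ℂ) else 0 := by
          refine Finset.sum_congr rfl fun z _ => Finset.sum_congr rfl fun z' _ => ?_
          rw [AddChar.sum_mulShift _ hψ]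
          simp [sub_eq_zero]
      _ = (Fintype.card F : ℂ) * (quadCount E : ℂ) := by
          rw [← Finset.sum_product']
          rw [Finset.sum_ite, Finset.sum_const, Finset.sum_const_zero, add_zero,
            nsmul_eq_mul, quadCount, mul_comm]
  have key2 : ∑ s : F, (Complex.normSq (TT ψ E s) : ℂ)
      = (Fintype.card F : ℂ) * (quadCount E : ℂ) := by
    simp_rw [← Complex.mul_conj]; exact key
  exact_mod_cast key2

lemma lemB (ψ : AddChar F ℂ) (E : Finset (F × F)) (s : F) :
    TT ψ E s = ∑ a : F, ff ψ E s a * gg ψ E s a := by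
  have lhs : TT ψ E s
      = ∑ a : F, ∑ c : F, ∑ b ∈ vertFiber E a, ∑ d ∈ vertFiber E c,
          ψ (s * (b - d + (a - c) ^ 2)) := by
    rw [TT, Finset.sum_product, fiber_sum E]
    simp_rw [fiber_sum E, pd]
    exact Finset.sum_congr rfl fun a _ => Finset.sum_comm
  have rhs : ∑ a : F, ff ψ E s a * gg ψ E s a
      = ∑ a : F, ∑ c : F, ∑ b ∈ vertFiber E a, ∑ d ∈ vertFiber E c,
          ψ (s * (b - d + (a - c) ^ 2)) := by
    refine Finset.sum_congr rfl fun a _ => ?_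
    rw [gg, Finset.mul_sum]
    refine Finset.sum_congr rfl fun c _ => ?_
    rw [ff, ff, map_sum]
    simp_rw [← AddChar.map_neg_eq_conj]
    rw [Finset.mul_sum, Finset.sum_mul_sum]
    refine Finset.sum_congr rfl fun b _ => Finset.sum_congr rfl fun d _ => ?_
    rw [← AddChar.map_add_eq_mul, ← AddChar.map_add_eq_mul]
    congr 1; ring
  rw [lhs, rhs]

lemma lemD {ψ : AddChar F ℂ} (hψ : ψ.IsPrimitive) (h2 : (2 : F) ≠ 0)
    (E : Finset (F × F)) {s : F} (hs : s ≠ 0) :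
    ∑ a : F, Complex.normSq (gg ψ E s a)
      = (Fintype.card F : ℝ) * ∑ c : F, Complex.normSq (ff ψ E s c) := by
  have inner : ∀ c c' : F, ∑ a : F, ψ (s * (a - c) ^ 2) * ψ (-(s * (a - c') ^ 2))
      = if c' = c then (Fintype.card F : ℂ) else 0 := by
    intro c c'
    have harg : ∀ a : F, ψ (s * (a - c) ^ 2) * ψ (-(s * (a - c') ^ 2))
        = ψ (a * (2 * s * (c' - c))) * ψ (s * (c' - c) * (-c - c')) := by
      intro a
      rw [← AddChar.map_add_eq_mul, ← AddChar.map_add_eq_mul]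
      congr 1; ring
    simp_rw [harg]
    rw [← Finset.sum_mul, AddChar.sum_mulShift _ hψ]
    by_cases h : c' = c
    · subst h; simp
    · have hl : 2 * s * (c' - c) ≠ 0 :=
        mul_ne_zero (mul_ne_zero h2 hs) (sub_ne_zero.2 h)
      rw [if_neg hl, if_neg h]
      simp
  have key : ∑ a : F, gg ψ E s a * (starRingEnd ℂ) (gg ψ E s a)
      = (Fintype.card F : ℂ)
          * ∑ c : F, (starRingEnd ℂ) (ff ψ E s c) * ff ψ E s c := by
    have expand : ∀ a : F, gg ψ E s a * (starRingEnd ℂ) (gg ψ E s a)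
        = ∑ c : F, ∑ c' : F,
            ((starRingEnd ℂ) (ff ψ E s c) * ff ψ E s c') *
              (ψ (s * (a - c) ^ 2) * ψ (-(s * (a - c') ^ 2))) := by
      intro a
      rw [gg, map_sum, Finset.sum_mul_sum]
      refine Finset.sum_congr rfl fun c _ => Finset.sum_congr rfl fun c' _ => ?_
      simp only [map_mul, Complex.conj_conj, ← AddChar.map_neg_eq_conj]
      ring
    simp_rw [expand]
    rw [Finset.sum_comm]
    have : ∀ c : F, ∑ a : F, ∑ c' : F,
        ((starRingEnd ℂ) (ff ψ E s c) * ff ψ E s c') *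
          (ψ (s * (a - c) ^ 2) * ψ (-(s * (a - c') ^ 2)))
        = (Fintype.card F : ℂ) * ((starRingEnd ℂ) (ff ψ E s c) * ff ψ E s c) := by
      intro c
      rw [Finset.sum_comm]
      have hc' : ∀ c' : F, ∑ a : F,
          ((starRingEnd ℂ) (ff ψ E s c) * ff ψ E s c') *
            (ψ (s * (a - c) ^ 2) * ψ (-(s * (a - c') ^ 2)))
          = ((starRingEnd ℂ) (ff ψ E s c) * ff ψ E s c') *
              (if c' = c then (Fintype.card F : ℂ) else 0) := by
        intro c'
        rw [← Finset.mul_sum, inner c c']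
      simp_rw [hc']
      simp [Finset.sum_ite_eq']
      ring
    simp_rw [this]
    rw [← Finset.mul_sum]
  have key2 : ∑ a : F, (Complex.normSq (gg ψ E s a) : ℂ)
      = (Fintype.card F : ℂ) * ∑ c : F, (Complex.normSq (ff ψ E s c) : ℂ) := by
    simp_rw [← Complex.mul_conj]
    rw [key]
    congr 1
    exact Finset.sum_congr rfl fun c _ => mul_comm _ _
  exact_mod_cast key2

lemma lemE {ψ : AddChar F ℂ} (hψ : ψ.IsPrimitive) (E : Finset (F × F)) :
    ∑ s : F, (∑ u : F, Complex.normSq (ff ψ E s u)) ^ 2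
      = (Fintype.card F : ℝ) * (fiberEnergy E : ℝ) := by
  have hsq : ∀ v s : F, ff ψ E s v * (starRingEnd ℂ) (ff ψ E s v)
      = ∑ p ∈ vertFiber E v ×ˢ vertFiber E v, ψ (s * (p.1 - p.2)) := by
    intro v s
    rw [ff, map_sum]
    simp_rw [← AddChar.map_neg_eq_conj]
    rw [Finset.sum_mul_sum, Finset.sum_product]
    refine Finset.sum_congr rfl fun b _ => Finset.sum_congr rfl fun b' _ => ?_
    rw [← AddChar.map_add_eq_mul]
    congr 1; ring
  have huu : ∀ u u' : F,
      ∑ s : F, (ff ψ E s u * (starRingEnd ℂ) (ff ψ E s u))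
        * (ff ψ E s u' * (starRingEnd ℂ) (ff ψ E s u'))
      = (Fintype.card F : ℂ) * (additiveEnergyPQ (vertFiber E u) (vertFiber E u') : ℂ) := by
    intro u u'
    have hterm : ∀ s : F, (ff ψ E s u * (starRingEnd ℂ) (ff ψ E s u))
        * (ff ψ E s u' * (starRingEnd ℂ) (ff ψ E s u'))
        = ∑ z ∈ (vertFiber E u ×ˢ vertFiber E u) ×ˢ (vertFiber E u' ×ˢ vertFiber E u'),
            ψ (s * (z.1.1 - z.1.2 + (z.2.1 - z.2.2))) := by
      intro s
      rw [hsq, hsq, Finset.sum_mul_sum]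
      conv_rhs => rw [Finset.sum_product]
      refine Finset.sum_congr rfl fun p _ => Finset.sum_congr rfl fun p' _ => ?_
      rw [← AddChar.map_add_eq_mul]
      congr 1; ring
    simp_rw [hterm]
    rw [Finset.sum_comm]
    have hz : ∀ z : (F × F) × (F × F), ∑ s : F, ψ (s * (z.1.1 - z.1.2 + (z.2.1 - z.2.2)))
        = if z.1.1 + z.2.1 = z.1.2 + z.2.2 then (Fintype.card F : ℂ) else 0 := by
      intro z
      rw [AddChar.sum_mulShift _ hψ]
      by_cases hcond : z.1.1 + z.2.1 = z.1.2 + z.2.2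
      · rw [if_pos (show z.1.1 - z.1.2 + (z.2.1 - z.2.2) = 0 by linear_combination hcond),
          if_pos hcond]
      · rw [if_neg (fun hA => hcond (by linear_combination hA)), if_neg hcond]
        simp
    simp_rw [hz]
    rw [Finset.sum_ite, Finset.sum_const, Finset.sum_const_zero, add_zero,
      nsmul_eq_mul, additiveEnergyPQ, mul_comm]
  have key : ∑ s : F, (∑ u : F, ff ψ E s u * (starRingEnd ℂ) (ff ψ E s u))
        * (∑ u' : F, ff ψ E s u' * (starRingEnd ℂ) (ff ψ E s u'))
      = (Fintype.card F : ℂ) * (fiberEnergy E : ℂ) := by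
    simp_rw [Finset.sum_mul_sum]
    rw [Finset.sum_comm]
    have : ∀ u : F, ∑ s : F, ∑ u' : F,
        (ff ψ E s u * (starRingEnd ℂ) (ff ψ E s u))
          * (ff ψ E s u' * (starRingEnd ℂ) (ff ψ E s u'))
        = ∑ u' : F, (Fintype.card F : ℂ)
            * (additiveEnergyPQ (vertFiber E u) (vertFiber E u') : ℂ) := by
      intro u
      rw [Finset.sum_comm]
      exact Finset.sum_congr rfl fun u' _ => huu u u'
    simp_rw [this, ← Finset.mul_sum]
    rw [fiberEnergy]
    push_cast
    ring
  have key2 : ∑ s : F, ((∑ u : F, Complex.normSq (ff ψ E s u) : ℝ) : ℂ) ^ 2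
      = (Fintype.card F : ℂ) * (fiberEnergy E : ℂ) := by
    rw [← key]
    refine Finset.sum_congr rfl fun s _ => ?_
    push_cast
    simp_rw [← Complex.mul_conj]
    ring
  exact_mod_cast key2

lemma two_ne_zero' (hq : Odd (Fintype.card F)) : (2 : F) ≠ 0 := by
  intro h
  have hdvd : ringChar F ∣ 2 := (ringChar.spec F 2).1 (by exact_mod_cast h)
  rcases (Nat.prime_two.eq_one_or_self_of_dvd _ hdvd) with h1 | h1
  · have : ((1 : ℕ) : F) = 0 := (ringChar.spec F 1).2 (h1 ▸ dvd_refl _)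
    exact one_ne_zero (by exact_mod_cast this)
  · have heven := FiniteField.even_card_of_char_two h1
    have hodd := Nat.odd_iff.1 hq
    omega

lemma step2 (hq : Odd (Fintype.card F)) (E : Finset (F × F)) :
    (Fintype.card F : ℝ) * (quadCount E : ℝ)
      ≤ (E.card : ℝ) ^ 4 + (Fintype.card F : ℝ) ^ 2 * (fiberEnergy E : ℝ) := by
  classical
  have h2 : (2 : F) ≠ 0 := two_ne_zero' hq
  obtain ⟨ψ, hψ1⟩ := (AddChar.exists_apply_ne_zero (a := (1 : F))).2 one_ne_zero
  have hne : ψ ≠ 1 := fun h => hψ1 (by rw [h]; simp)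
  have prim : ψ.IsPrimitive := AddChar.IsPrimitive.of_ne_one hne
  have hT0 : Complex.normSq (TT ψ E 0) = (E.card : ℝ) ^ 4 := by
    have hT : TT ψ E 0 = ((E.card ^ 2 : ℕ) : ℂ) := by
      rw [TT]
      simp [Finset.card_product, sq]
    rw [hT, Complex.normSq_natCast]
    push_cast
    ring
  have keyCS : ∀ s : F, s ≠ 0 → Complex.normSq (TT ψ E s)
      ≤ (Fintype.card F : ℝ) * (∑ u : F, Complex.normSq (ff ψ E s u)) ^ 2 := by
    intro s hs
    have habs : ‖TT ψ E s‖
        ≤ ∑ a : F, ‖ff ψ E s a‖ * ‖gg ψ E s a‖ := by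
      rw [lemB ψ E s]
      refine (norm_sum_le _ _).trans ?_
      refine le_of_eq (Finset.sum_congr rfl fun a _ => ?_)
      exact norm_mul _ _
    have hsq : Complex.normSq (TT ψ E s)
        ≤ (∑ a : F, ‖ff ψ E s a‖ * ‖gg ψ E s a‖) ^ 2 := by
      rw [← Complex.sq_norm]
      exact pow_le_pow_left₀ (norm_nonneg _) habs 2
    have hcs : (∑ a : F, ‖ff ψ E s a‖ * ‖gg ψ E s a‖) ^ 2
        ≤ (∑ a : F, ‖ff ψ E s a‖ ^ 2) * (∑ a : F, ‖gg ψ E s a‖ ^ 2) :=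
      sum_mul_sq_le_sq_mul_sq _ _ _
    have hff : ∀ a : F, ‖ff ψ E s a‖ ^ 2 = Complex.normSq (ff ψ E s a) :=
      fun a => Complex.sq_norm _
    have hgg : ∀ a : F, ‖gg ψ E s a‖ ^ 2 = Complex.normSq (gg ψ E s a) :=
      fun a => Complex.sq_norm _
    simp_rw [hff, hgg] at hcs
    rw [lemD prim h2 E hs] at hcs
    calc Complex.normSq (TT ψ E s) ≤ _ := hsq
      _ ≤ _ := hcs
      _ = (Fintype.card F : ℝ) * (∑ u : F, Complex.normSq (ff ψ E s u)) ^ 2 := by ring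
  have split : ∑ s : F, Complex.normSq (TT ψ E s)
      = Complex.normSq (TT ψ E 0)
        + ∑ s ∈ Finset.univ.erase (0 : F), Complex.normSq (TT ψ E s) :=
    (Finset.add_sum_erase _ _ (Finset.mem_univ 0)).symm
  have hbound : ∑ s ∈ Finset.univ.erase (0 : F), Complex.normSq (TT ψ E s)
      ≤ (Fintype.card F : ℝ)
          * ∑ s : F, (∑ u : F, Complex.normSq (ff ψ E s u)) ^ 2 := by
    calc ∑ s ∈ Finset.univ.erase (0 : F), Complex.normSq (TT ψ E s)
        ≤ ∑ s ∈ Finset.univ.erase (0 : F),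
            (Fintype.card F : ℝ) * (∑ u : F, Complex.normSq (ff ψ E s u)) ^ 2 :=
          Finset.sum_le_sum fun s hs => keyCS s (Finset.ne_of_mem_erase hs)
      _ ≤ ∑ s : F,
            (Fintype.card F : ℝ) * (∑ u : F, Complex.normSq (ff ψ E s u)) ^ 2 :=
          Finset.sum_le_sum_of_subset_of_nonneg (Finset.subset_univ _)
            (fun s _ _ => by positivity)
      _ = _ := by rw [Finset.mul_sum]
  rw [lemE prim E] at hbound
  have hA := lemA prim E
  calc (Fintype.card F : ℝ) * (quadCount E : ℝ)
      = ∑ s : F, Complex.normSq (TT ψ E s) := hA.symm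
    _ = Complex.normSq (TT ψ E 0)
        + ∑ s ∈ Finset.univ.erase (0 : F), Complex.normSq (TT ψ E s) := split
    _ ≤ (E.card : ℝ) ^ 4
        + (Fintype.card F : ℝ) * ((Fintype.card F : ℝ) * (fiberEnergy E : ℝ)) := by
        rw [hT0]; exact add_le_add_right hbound _
    _ = (E.card : ℝ) ^ 4 + (Fintype.card F : ℝ) ^ 2 * (fiberEnergy E : ℝ) := by ring

lemma step1 (E : Finset (F × F)) :
    ((E.card : ℝ)) ^ 4 ≤ ((parabolicDistSet E).card : ℝ) * (quadCount E : ℝ) := by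
  classical
  set D := parabolicDistSet E with hD
  set ν : F → ℕ := fun t => ((E ×ˢ E).filter fun z => pd z = t).card with hν
  have hmem : ∀ z ∈ E ×ˢ E, pd z ∈ D := fun z hz => Finset.mem_image.2 ⟨z, hz, rfl⟩
  have h1 : (E ×ˢ E).card = ∑ t ∈ D, ν t :=
    Finset.card_eq_sum_card_fiberwise hmem
  have h2 : quadCount E = ∑ t ∈ D, ν t * ν t := by
    have hmem2 : ∀ w ∈ ((E ×ˢ E) ×ˢ (E ×ˢ E)).filter fun w => pd w.1 = pd w.2,
        pd w.1 ∈ D := by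
      intro w hw
      exact hmem _ (Finset.mem_product.1 (Finset.mem_filter.1 hw).1).1
    rw [quadCount, Finset.card_eq_sum_card_fiberwise hmem2]
    refine Finset.sum_congr rfl fun t ht => ?_
    have hset : ((((E ×ˢ E) ×ˢ (E ×ˢ E)).filter fun w => pd w.1 = pd w.2).filter
        fun w => pd w.1 = t)
        = ((E ×ˢ E).filter fun z => pd z = t) ×ˢ ((E ×ˢ E).filter fun z => pd z = t) := by
      ext w
      simp only [Finset.mem_filter, Finset.mem_product]
      constructor
      · rintro ⟨⟨⟨hw1, hw2⟩, hw3⟩, hw4⟩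
        exact ⟨⟨hw1, hw4⟩, hw2, hw3.symm.trans hw4⟩
      · rintro ⟨⟨hw1, hw2⟩, hw3, hw4⟩
        exact ⟨⟨⟨hw1, hw3⟩, hw2.trans hw4.symm⟩, hw2⟩
    rw [hset, Finset.card_product]
  have hcs : (∑ t ∈ D, (ν t : ℝ)) ^ 2 ≤ (D.card : ℝ) * ∑ t ∈ D, (ν t : ℝ) ^ 2 :=
    sq_sum_le_card_mul_sum_sq
  have hn : ((E.card : ℝ)) ^ 4 = ((E ×ˢ E).card : ℝ) ^ 2 := by
    rw [Finset.card_product]; push_cast; ring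
  have hsum : ((E ×ˢ E).card : ℝ) = ∑ t ∈ D, (ν t : ℝ) := by exact_mod_cast h1
  have hq2 : (quadCount E : ℝ) = ∑ t ∈ D, (ν t : ℝ) ^ 2 := by
    rw [h2]; push_cast; simp [sq]
  rw [hn, hsum, hq2]
  exact hcs


end ParabolicProof

theorem parabolic_distance_fiber_energy_lower_bound
    {F : Type*} [Field F] [Fintype F] [DecidableEq F]
    (hq : Odd (Fintype.card F))
    (E : Finset (F × F)) (hE : E.Nonempty) :
    ((parabolicDistSet E).card : ℝ) ≥
      (Fintype.card F : ℝ) /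
        (1 + (Fintype.card F : ℝ) ^ 2 * (fiberEnergy E : ℝ) / (E.card : ℝ) ^ 4) := by
  classical
  have h1 := ParabolicProof.step1 E
  have h2 := ParabolicProof.step2 hq E
  obtain ⟨x, hx⟩ := hE
  have hQpos : 0 < (ParabolicProof.quadCount E : ℝ) := by
    have hmem : ((x, x), (x, x)) ∈ (((E ×ˢ E) ×ˢ (E ×ˢ E)).filter
        fun w => ParabolicProof.pd w.1 = ParabolicProof.pd w.2) := by
      simp [Finset.mem_filter, Finset.mem_product, hx]
    have hpos := Finset.card_pos.2 ⟨_, hmem⟩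
    exact_mod_cast hpos
  have hnpos : 0 < (E.card : ℝ) := by
    exact_mod_cast Finset.card_pos.2 ⟨x, hx⟩
  have hqpos : 0 < (Fintype.card F : ℝ) := by exact_mod_cast Fintype.card_pos
  have hEng : 0 ≤ (fiberEnergy E : ℝ) := by positivity
  set qr := (Fintype.card F : ℝ) with hqr
  set n := (E.card : ℝ) with hn
  set Nq := (ParabolicProof.quadCount E : ℝ) with hNq
  set Er := (fiberEnergy E : ℝ) with hEr
  set Dr := ((parabolicDistSet E).card : ℝ) with hDr
  have hden : 0 < 1 + qr ^ 2 * Er / n ^ 4 := by positivity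
  rw [ge_iff_le]
  calc qr / (1 + qr ^ 2 * Er / n ^ 4) ≤ n ^ 4 / Nq := by
        rw [div_le_div_iff₀ hden hQpos]
        have hexp : n ^ 4 * (1 + qr ^ 2 * Er / n ^ 4) = n ^ 4 + qr ^ 2 * Er := by
          field_simp
        rw [hexp]
        exact h2
    _ ≤ Dr := (div_le_iff₀ hQpos).2 h1
end

section
/- Let q be an odd prime power and E, F ⊆ F_q². Then Σ_{t∈F_q} ν_{E,F}(t)² ≤ |E|²|F|²/q + q·|E|·|F|·√(K_E·K_F). -/
open Finset

/-- The bipartite parabolic distance counting function `ν_{E,F}(t)`. -/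
def parabolicNu2 {F : Type*} [Field F] [DecidableEq F]
    (E G : Finset (F × F)) (t : F) : ℕ :=
  ((E ×ˢ G).filter fun z : (F × F) × (F × F) =>
    (z.1.2 - z.2.2) + (z.1.1 - z.2.1) ^ 2 = t).card

section Auxiliary

open Complex

set_option linter.unusedSectionVars false

variable {F : Type*} [Field F] [Fintype F] [DecidableEq F]


private lemma ortho' (ψ : AddChar F ℂ) (hψ : ψ.IsPrimitive) (c : F) :
    ∑ s : F, ψ (s * c) = if c = 0 then (Fintype.card F : ℂ) else 0 := by
  rw [AddChar.sum_mulShift c hψ, apply_ite (Nat.cast : ℕ → ℂ)]; simp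

private lemma conj_char_sum' {X : Type*} (ψ : AddChar F ℂ) (s : Finset X) (h : X → F) :
    (starRingEnd ℂ) (∑ x ∈ s, ψ (h x)) = ∑ x ∈ s, ψ (-(h x)) := by
  rw [map_sum]; exact sum_congr rfl fun x _ => (AddChar.map_neg_eq_conj ψ _).symm

private lemma key' (ψ : AddChar F ℂ) (hψ : ψ.IsPrimitive) (h2 : (2 : F) ≠ 0)
    (A B : Finset (F × F)) (f g : F × F → F)
    (hg : ∀ b ∈ B, ∀ b' ∈ B, b.1 = b'.1 → g b = g b' → b = b') :
    ∑ s ∈ univ.erase (0 : F),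
        Complex.normSq (∑ a ∈ A, ∑ b ∈ B, ψ (s * (f a - g b - 2 * a.1 * b.1))) ≤
      (Fintype.card F : ℝ) ^ 2 * A.card * B.card * maxVertFiber A := by
  set Bf : F → F → ℂ := fun s u => ∑ b ∈ B, ψ (-(s * g b) - 2 * s * u * b.1) with hBf
  set Q : F → F → ℂ := fun s u => ∑ b ∈ B.filter (fun b => b.1 = u), ψ (-(s * g b)) with hQ
  -- regrouping lemma
  have regroup : ∀ (X : F × F → F × F → ℂ),
      ∑ u : F, ∑ b ∈ B.filter (fun b => b.1 = u), ∑ b' ∈ B.filter (fun b' => b'.1 = u), X b b'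
      = ∑ b ∈ B, ∑ b' ∈ B.filter (fun b' => b'.1 = b.1), X b b' := by
    intro X
    rw [← sum_fiberwise B (fun b => b.1)
      (fun b => ∑ b' ∈ B.filter (fun b' => b'.1 = b.1), X b b')]
    refine sum_congr rfl fun u _ => sum_congr rfl fun b hb => ?_
    rw [(mem_filter.1 hb).2]
  -- Q sums expand
  have Qexp : ∀ s : F, ∑ u : F, (Complex.normSq (Q s u) : ℂ)
      = ∑ b ∈ B, ∑ b' ∈ B.filter (fun b' => b'.1 = b.1), ψ (s * (g b' - g b)) := by
    intro s
    rw [← regroup (fun b b' => ψ (s * (g b' - g b)))]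
    refine sum_congr rfl fun u _ => ?_
    rw [← Complex.mul_conj, hQ]; dsimp only
    rw [conj_char_sum', sum_mul_sum]
    refine sum_congr rfl fun b _ => sum_congr rfl fun b' _ => ?_
    rw [← AddChar.map_add_eq_mul]
    congr 1; ring
  -- Step A : pointwise Cauchy-Schwarz
  have stepA : ∀ s : F,
      Complex.normSq (∑ a ∈ A, ∑ b ∈ B, ψ (s * (f a - g b - 2 * a.1 * b.1))) ≤
        (A.card : ℝ) * ((maxVertFiber A : ℝ) * ∑ u : F, Complex.normSq (Bf s u)) := by
    intro s
    have hSeq : (∑ a ∈ A, ∑ b ∈ B, ψ (s * (f a - g b - 2 * a.1 * b.1)))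
        = ∑ a ∈ A, ψ (s * f a) * Bf s a.1 := by
      refine sum_congr rfl fun a _ => ?_
      rw [hBf]; dsimp only
      rw [mul_sum]
      refine sum_congr rfl fun b _ => ?_
      rw [← AddChar.map_add_eq_mul]
      congr 1; ring
    have hnorm : ‖∑ a ∈ A, ψ (s * f a) * Bf s a.1‖ ≤ ∑ a ∈ A, ‖Bf s a.1‖ := by
      refine (norm_sum_le _ _).trans (le_of_eq (sum_congr rfl fun a _ => ?_))
      rw [norm_mul, AddChar.norm_apply, one_mul]
    have h1 : Complex.normSq (∑ a ∈ A, ∑ b ∈ B, ψ (s * (f a - g b - 2 * a.1 * b.1)))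
        ≤ (A.card : ℝ) * ∑ a ∈ A, Complex.normSq (Bf s a.1) := by
      rw [hSeq]
      simp only [Complex.normSq_eq_norm_sq]
      calc ‖∑ a ∈ A, ψ (s * f a) * Bf s a.1‖ ^ 2
          ≤ (∑ a ∈ A, ‖Bf s a.1‖) ^ 2 := by
            exact pow_le_pow_left₀ (norm_nonneg _) hnorm 2
        _ ≤ (A.card : ℝ) * ∑ a ∈ A, ‖Bf s a.1‖ ^ 2 := sq_sum_le_card_mul_sum_sq
    refine h1.trans (mul_le_mul_of_nonneg_left ?_ (Nat.cast_nonneg _))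
    rw [← sum_fiberwise A (fun a => a.1) (fun a => Complex.normSq (Bf s a.1)), mul_sum]
    refine sum_le_sum fun u _ => ?_
    have he : ∑ a ∈ A.filter (fun a => a.1 = u), Complex.normSq (Bf s a.1)
        = ((A.filter (fun a => a.1 = u)).card : ℝ) * Complex.normSq (Bf s u) := by
      rw [sum_congr rfl (fun a ha => by rw [(mem_filter.1 ha).2]), sum_const, nsmul_eq_mul]
    rw [he]
    refine mul_le_mul_of_nonneg_right ?_ (Complex.normSq_nonneg _)
    have hle : (A.filter fun p => p.1 = u).card ≤ maxVertFiber A := by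
      unfold maxVertFiber
      exact Finset.le_sup (f := fun v : F => (A.filter fun p => p.1 = v).card) (mem_univ u)
    exact Nat.cast_le.2 hle
  -- Step B : for s ≠ 0, complex identity
  have stepB : ∀ s : F, s ≠ 0 → ∑ u : F, Complex.normSq (Bf s u)
      = (Fintype.card F : ℝ) * ∑ u : F, Complex.normSq (Q s u) := by
    intro s hs
    have h2s : 2 * s ≠ 0 := mul_ne_zero h2 hs
    have hC : ∑ u : F, (Complex.normSq (Bf s u) : ℂ)
        = (Fintype.card F : ℂ) * ∑ u : F, (Complex.normSq (Q s u) : ℂ) := by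
      have lhs : ∀ u : F, (Complex.normSq (Bf s u) : ℂ)
          = ∑ b ∈ B, ∑ b' ∈ B, ψ (s * (g b' - g b)) * ψ (u * (2 * s * (b'.1 - b.1))) := by
        intro u
        rw [← Complex.mul_conj, hBf]; dsimp only
        rw [conj_char_sum', sum_mul_sum]
        refine sum_congr rfl fun b _ => sum_congr rfl fun b' _ => ?_
        rw [← AddChar.map_add_eq_mul, ← AddChar.map_add_eq_mul]
        congr 1; ring
      calc ∑ u : F, (Complex.normSq (Bf s u) : ℂ)
          = ∑ b ∈ B, ∑ b' ∈ B, ψ (s * (g b' - g b)) * ∑ u : F, ψ (u * (2 * s * (b'.1 - b.1))) := by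
            rw [Finset.sum_congr rfl fun u _ => lhs u, Finset.sum_comm]
            refine sum_congr rfl fun b _ => ?_
            rw [Finset.sum_comm]
            exact sum_congr rfl fun b' _ => (mul_sum _ _ _).symm
        _ = ∑ b ∈ B, ∑ b' ∈ B, if b'.1 = b.1 then ψ (s * (g b' - g b)) * (Fintype.card F : ℂ) else 0 := by
            refine sum_congr rfl fun b _ => sum_congr rfl fun b' _ => ?_
            rw [ortho' ψ hψ]
            have hiff : 2 * s * (b'.1 - b.1) = 0 ↔ b'.1 = b.1 := by
              rw [mul_eq_zero, sub_eq_zero]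
              simp [h2s]
            by_cases hbb : b'.1 = b.1
            · rw [if_pos (hiff.2 hbb), if_pos hbb]
            · rw [if_neg (fun hc => hbb (hiff.1 hc)), if_neg hbb, mul_zero]
        _ = (Fintype.card F : ℂ) * ∑ b ∈ B, ∑ b' ∈ B.filter (fun b' => b'.1 = b.1), ψ (s * (g b' - g b)) := by
            rw [mul_sum]
            refine sum_congr rfl fun b _ => ?_
            rw [sum_filter, mul_sum]
            refine sum_congr rfl fun b' _ => ?_
            split_ifs <;> ring
        _ = (Fintype.card F : ℂ) * ∑ u : F, (Complex.normSq (Q s u) : ℂ) := by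
            rw [Qexp s]
    exact_mod_cast hC
  -- Step C : sum over all s of the Q-term
  have stepC : ∑ s : F, ∑ u : F, Complex.normSq (Q s u)
      = (Fintype.card F : ℝ) * B.card := by
    have hC : ∑ s : F, ∑ u : F, (Complex.normSq (Q s u) : ℂ)
        = (Fintype.card F : ℂ) * B.card := by
      calc ∑ s : F, ∑ u : F, (Complex.normSq (Q s u) : ℂ)
          = ∑ b ∈ B, ∑ b' ∈ B.filter (fun b' => b'.1 = b.1), ∑ s : F, ψ (s * (g b' - g b)) := by
            rw [Finset.sum_congr rfl fun s _ => Qexp s, Finset.sum_comm]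
            exact sum_congr rfl fun b _ => Finset.sum_comm
        _ = ∑ b ∈ B, (Fintype.card F : ℂ) := by
            refine sum_congr rfl fun b hb => ?_
            rw [sum_congr rfl fun b' _ => ortho' ψ hψ (g b' - g b)]
            have hrw : ∀ b' ∈ B.filter (fun b' => b'.1 = b.1),
                (if g b' - g b = 0 then (Fintype.card F : ℂ) else 0)
                  = if b' = b then (Fintype.card F : ℂ) else 0 := by
              intro b' hb'
              obtain ⟨hb'B, hb'1⟩ := mem_filter.1 hb'
              by_cases hbe : b' = b
              · simp [hbe]
              · have hne : g b' - g b ≠ 0 :=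
                  sub_ne_zero.2 fun hgg => hbe (hg b' hb'B b hb hb'1 hgg)
                rw [if_neg hne, if_neg hbe]
            rw [sum_congr rfl hrw, sum_ite_eq']
            simp [mem_filter, hb]
        _ = (Fintype.card F : ℂ) * B.card := by rw [sum_const, nsmul_eq_mul, mul_comm]
    exact_mod_cast hC
  -- assemble
  have hQnonneg : ∀ s : F, 0 ≤ ∑ u : F, Complex.normSq (Q s u) := fun s =>
    Finset.sum_nonneg fun u _ => Complex.normSq_nonneg _
  calc ∑ s ∈ univ.erase (0 : F),
        Complex.normSq (∑ a ∈ A, ∑ b ∈ B, ψ (s * (f a - g b - 2 * a.1 * b.1)))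
      ≤ ∑ s ∈ univ.erase (0 : F),
          (A.card : ℝ) * ((maxVertFiber A : ℝ) * ((Fintype.card F : ℝ) * ∑ u : F, Complex.normSq (Q s u))) := by
        refine sum_le_sum fun s hs => ?_
        have h := stepA s
        rwa [stepB s (mem_erase.1 hs).1] at h
    _ = (A.card : ℝ) * (maxVertFiber A : ℝ) * (Fintype.card F : ℝ)
          * ∑ s ∈ univ.erase (0 : F), ∑ u : F, Complex.normSq (Q s u) := by
        rw [mul_sum]; refine sum_congr rfl fun s _ => by ring
    _ ≤ (A.card : ℝ) * (maxVertFiber A : ℝ) * (Fintype.card F : ℝ)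
          * ∑ s : F, ∑ u : F, Complex.normSq (Q s u) := by
        refine mul_le_mul_of_nonneg_left ?_ (by positivity)
        exact sum_le_sum_of_subset_of_nonneg (subset_univ _) fun s _ _ => hQnonneg s
    _ = (A.card : ℝ) * (maxVertFiber A : ℝ) * (Fintype.card F : ℝ)
          * ((Fintype.card F : ℝ) * B.card) := by rw [stepC]
    _ = (Fintype.card F : ℝ) ^ 2 * A.card * B.card * maxVertFiber A := by ring

end Auxiliary

open Complex in
theorem bipartite_second_moment_bound
    {F : Type*} [Field F] [Fintype F] [DecidableEq F]
    (hq : Odd (Fintype.card F))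
    (E G : Finset (F × F)) :
    (∑ t : F, (parabolicNu2 E G t : ℝ) ^ 2) ≤
      (E.card : ℝ) ^ 2 * (G.card : ℝ) ^ 2 / (Fintype.card F : ℝ) +
        (Fintype.card F : ℝ) * (E.card : ℝ) * (G.card : ℝ) *
          Real.sqrt ((maxVertFiber E : ℝ) * (maxVertFiber G : ℝ)) := by
  classical
  set q : ℝ := (Fintype.card F : ℝ) with hqdef
  have hq0 : (0 : ℝ) < q := by
    rw [hqdef]; exact_mod_cast Fintype.card_pos
  have h2 : (2 : F) ≠ 0 := by
    refine Ring.two_ne_zero fun h => ?_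
    have h2' := FiniteField.even_card_of_char_two h
    rw [Nat.odd_iff] at hq; omega
  obtain ⟨ψ, hψ⟩ : ∃ ψ : AddChar F ℂ, ψ.IsPrimitive :=
    ⟨AddChar.FiniteField.primitiveChar_to_Complex F,
      AddChar.FiniteField.primitiveChar_to_Complex_isPrimitive F⟩
  set P : Finset ((F × F) × (F × F)) := E ×ˢ G with hP
  set dd : (F × F) × (F × F) → F :=
    fun z => (z.1.2 - z.2.2) + (z.1.1 - z.2.1) ^ 2 with hdd
  set S : F → ℂ := fun s => ∑ z ∈ P, ψ (s * dd z) with hS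
  set C : ℝ := ∑ z ∈ P, ∑ w ∈ P, (if dd w = dd z then (1 : ℝ) else 0) with hC
  set T : ℝ := ∑ s ∈ univ.erase (0 : F), Complex.normSq (S s) with hT
  -- claim 1 : the second moment is C
  have claim1 : ∑ t : F, (parabolicNu2 E G t : ℝ) ^ 2 = C := by
    have hnu : ∀ t : F, (parabolicNu2 E G t : ℝ)
        = ∑ z ∈ P, (if dd z = t then (1 : ℝ) else 0) := by
      intro t
      rw [parabolicNu2]
      exact (Finset.sum_boole _ _).symm
    calc ∑ t : F, (parabolicNu2 E G t : ℝ) ^ 2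
        = ∑ t : F, ∑ z ∈ P, ∑ w ∈ P,
            (if dd z = t then (1 : ℝ) else 0) * (if dd w = t then (1 : ℝ) else 0) := by
          refine sum_congr rfl fun t _ => ?_
          rw [hnu, sq, sum_mul_sum]
      _ = ∑ z ∈ P, ∑ w ∈ P, ∑ t : F,
            (if dd z = t then (1 : ℝ) else 0) * (if dd w = t then (1 : ℝ) else 0) := by
          rw [Finset.sum_comm]
          exact sum_congr rfl fun z _ => Finset.sum_comm
      _ = C := by
          rw [hC]
          refine sum_congr rfl fun z _ => sum_congr rfl fun w _ => ?_
          simp only [ite_mul, one_mul, zero_mul]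
          rw [Finset.sum_ite_eq]
          simp
  -- claim 2 : ∑_s |S s|² = q * C
  have claim2 : ∑ s : F, Complex.normSq (S s) = q * C := by
    have hCc : ∑ s : F, (Complex.normSq (S s) : ℂ)
        = (Fintype.card F : ℂ) * ∑ z ∈ P, ∑ w ∈ P, (if dd w = dd z then (1 : ℂ) else 0) := by
      have hterm : ∀ s : F, (Complex.normSq (S s) : ℂ)
          = ∑ z ∈ P, ∑ w ∈ P, ψ (s * (dd z - dd w)) := by
        intro s
        rw [← Complex.mul_conj, hS]; dsimp only
        rw [conj_char_sum', sum_mul_sum]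
        refine sum_congr rfl fun z _ => sum_congr rfl fun w _ => ?_
        rw [← AddChar.map_add_eq_mul]
        congr 1; ring
      calc ∑ s : F, (Complex.normSq (S s) : ℂ)
          = ∑ z ∈ P, ∑ w ∈ P, ∑ s : F, ψ (s * (dd z - dd w)) := by
            rw [Finset.sum_congr rfl fun s _ => hterm s, Finset.sum_comm]
            exact sum_congr rfl fun z _ => Finset.sum_comm
        _ = ∑ z ∈ P, ∑ w ∈ P, (if dd w = dd z then (Fintype.card F : ℂ) else 0) := by
            refine sum_congr rfl fun z _ => sum_congr rfl fun w _ => ?_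
            rw [ortho' ψ hψ]
            by_cases h : dd w = dd z
            · rw [if_pos (by rw [h, sub_self]), if_pos h]
            · rw [if_neg (fun hc => h (sub_eq_zero.1 hc).symm), if_neg h]
        _ = (Fintype.card F : ℂ) * ∑ z ∈ P, ∑ w ∈ P, (if dd w = dd z then (1 : ℂ) else 0) := by
            rw [mul_sum]
            refine sum_congr rfl fun z _ => ?_
            rw [mul_sum]
            refine sum_congr rfl fun w _ => ?_
            split_ifs <;> simp
    have hcast : ((q * C : ℝ) : ℂ)
        = (Fintype.card F : ℂ) * ∑ z ∈ P, ∑ w ∈ P, (if dd w = dd z then (1 : ℂ) else 0) := by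
      rw [hqdef, hC]
      push_cast [apply_ite (Complex.ofReal : ℝ → ℂ)]
      rfl
    have := hCc.trans hcast.symm
    exact_mod_cast this
  -- claim 3 : the zero term
  have claim3 : Complex.normSq (S 0) = ((E.card : ℝ) * (G.card : ℝ)) ^ 2 := by
    have : S 0 = ((E.card * G.card : ℕ) : ℂ) := by
      rw [hS]; dsimp only
      rw [Finset.sum_congr rfl fun z _ => by rw [zero_mul, AddChar.map_zero_eq_one]]
      rw [sum_const, nsmul_eq_mul, mul_one, hP, card_product]
    rw [this, Complex.normSq_eq_norm_sq, Complex.norm_natCast]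
    push_cast
    ring
  -- claim 4 : splitting off s = 0
  have claim4 : ∑ s : F, Complex.normSq (S s) = Complex.normSq (S 0) + T := by
    rw [hT]
    exact (Finset.add_sum_erase _ _ (mem_univ 0)).symm
  -- the two applications of the key lemma
  have app1 : T ≤ q ^ 2 * E.card * G.card * maxVertFiber E := by
    have hg : ∀ b ∈ G, ∀ b' ∈ G, b.1 = b'.1 → (b.2 - b.1 ^ 2) = (b'.2 - b'.1 ^ 2) → b = b' := by
      intro b _ b' _ h1 hgg
      refine Prod.ext h1 ?_
      rw [h1] at hgg
      linear_combination hgg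
    have hk := key' ψ hψ h2 E G (fun a => a.2 + a.1 ^ 2) (fun b => b.2 - b.1 ^ 2) hg
    have hEq : ∀ s : F, (∑ a ∈ E, ∑ b ∈ G,
        ψ (s * ((a.2 + a.1 ^ 2) - (b.2 - b.1 ^ 2) - 2 * a.1 * b.1))) = S s := by
      intro s
      rw [hS]; dsimp only
      rw [hP, Finset.sum_product]
      refine sum_congr rfl fun a _ => sum_congr rfl fun b _ => ?_
      rw [hdd]; dsimp only
      congr 1; ring
    rw [hT]
    calc ∑ s ∈ univ.erase (0 : F), Complex.normSq (S s)
        = ∑ s ∈ univ.erase (0 : F), Complex.normSq (∑ a ∈ E, ∑ b ∈ G,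
            ψ (s * ((a.2 + a.1 ^ 2) - (b.2 - b.1 ^ 2) - 2 * a.1 * b.1))) := by
          exact sum_congr rfl fun s _ => by rw [hEq s]
      _ ≤ (Fintype.card F : ℝ) ^ 2 * E.card * G.card * maxVertFiber E := hk
      _ = q ^ 2 * E.card * G.card * maxVertFiber E := by rw [hqdef]
  have app2 : T ≤ q ^ 2 * E.card * G.card * maxVertFiber G := by
    have hg : ∀ b ∈ E, ∀ b' ∈ E, b.1 = b'.1 → (-b.2 - b.1 ^ 2) = (-b'.2 - b'.1 ^ 2) → b = b' := by
      intro b _ b' _ h1 hgg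
      refine Prod.ext h1 ?_
      rw [h1] at hgg
      linear_combination -hgg
    have hk := key' ψ hψ h2 G E (fun a => a.1 ^ 2 - a.2) (fun b => -b.2 - b.1 ^ 2) hg
    have hEq : ∀ s : F, (∑ a ∈ G, ∑ b ∈ E,
        ψ (s * ((a.1 ^ 2 - a.2) - (-b.2 - b.1 ^ 2) - 2 * a.1 * b.1))) = S s := by
      intro s
      rw [hS]; dsimp only
      rw [hP, Finset.sum_product, Finset.sum_comm]
      refine sum_congr rfl fun a _ => sum_congr rfl fun b _ => ?_
      rw [hdd]; dsimp only
      congr 1; ring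
    rw [hT]
    calc ∑ s ∈ univ.erase (0 : F), Complex.normSq (S s)
        = ∑ s ∈ univ.erase (0 : F), Complex.normSq (∑ a ∈ G, ∑ b ∈ E,
            ψ (s * ((a.1 ^ 2 - a.2) - (-b.2 - b.1 ^ 2) - 2 * a.1 * b.1))) := by
          exact sum_congr rfl fun s _ => by rw [hEq s]
      _ ≤ (Fintype.card F : ℝ) ^ 2 * G.card * E.card * maxVertFiber G := hk
      _ = q ^ 2 * E.card * G.card * maxVertFiber G := by rw [hqdef]; ring
  -- combine via geometric mean
  have hT0 : 0 ≤ T := Finset.sum_nonneg fun s _ => Complex.normSq_nonneg _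
  set C2 : ℝ := q ^ 2 * E.card * G.card with hC2
  have hC20 : 0 ≤ C2 := by
    rw [hC2]
    exact mul_nonneg (mul_nonneg (sq_nonneg q) (Nat.cast_nonneg _)) (Nat.cast_nonneg _)
  have claim6 : T ≤ C2 * Real.sqrt ((maxVertFiber E : ℝ) * (maxVertFiber G : ℝ)) := by
    have hsq : T ^ 2 ≤ (C2 * maxVertFiber E) * (C2 * maxVertFiber G) := by
      rw [sq]
      exact mul_le_mul app1 app2 hT0 (mul_nonneg hC20 (Nat.cast_nonneg _))
    calc T = Real.sqrt (T ^ 2) := (Real.sqrt_sq hT0).symm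
      _ ≤ Real.sqrt ((C2 * maxVertFiber E) * (C2 * maxVertFiber G)) := Real.sqrt_le_sqrt hsq
      _ = C2 * Real.sqrt ((maxVertFiber E : ℝ) * (maxVertFiber G : ℝ)) := by
          rw [show (C2 * maxVertFiber E) * (C2 * maxVertFiber G)
              = C2 ^ 2 * ((maxVertFiber E : ℝ) * (maxVertFiber G : ℝ)) by ring]
          rw [Real.sqrt_mul (sq_nonneg C2), Real.sqrt_sq hC20]
  -- finish
  rw [claim1]
  have hqC : q * C = ((E.card : ℝ) * (G.card : ℝ)) ^ 2 + T := by
    rw [← claim2, claim4, claim3]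
  have hCval : C = (((E.card : ℝ) * (G.card : ℝ)) ^ 2 + T) / q := by
    field_simp
    linarith [hqC]
  rw [hCval, div_le_iff₀ hq0]
  have hrhs : ((E.card : ℝ) ^ 2 * (G.card : ℝ) ^ 2 / q +
      q * E.card * G.card * Real.sqrt ((maxVertFiber E : ℝ) * (maxVertFiber G : ℝ))) * q
      = (E.card : ℝ) ^ 2 * (G.card : ℝ) ^ 2
        + C2 * Real.sqrt ((maxVertFiber E : ℝ) * (maxVertFiber G : ℝ)) := by
    rw [hC2]; field_simp
  rw [hrhs]
  nlinarith [claim6]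
end

section
/- Let q be an odd prime power and let E, F ⊆ F_q² be nonempty. Then the bipartite parabolic distance set satisfies |Δ_P(E,F)| ≥ q / (1 + q²·√(K_E·K_F)/(|E|·|F|)). In particular, if |E|·|F| ≥ q²·√(K_E·K_F), then |Δ_P(E,F)| ≥ q/2. -/
open Finset

/-- The bipartite parabolic distance set of `E, G ⊆ F_q²`. -/
def parabolicDistSet2 {F : Type*} [Field F] [DecidableEq F]
    (E G : Finset (F × F)) : Finset F :=
  (E ×ˢ G).image fun z : (F × F) × (F × F) => (z.1.2 - z.2.2) + (z.1.1 - z.2.1) ^ 2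

open Complex

set_option linter.unusedSectionVars false
set_option maxHeartbeats 1000000

section ParabolicHelpers

variable {F : Type*} [Field F] [Fintype F] [DecidableEq F]

lemma pd_norm (ψ : AddChar F ℂ) (a : F) : ‖ψ a‖ = 1 := by
  have hp : 0 < ringChar F := Nat.pos_of_ne_zero (CharP.ringChar_ne_zero_of_finite F)
  have := Complex.norm_eq_one_of_mem_rootsOfUnity (ψ.val_mem_rootsOfUnity a hp)
  rwa [IsUnit.unit_spec] at this

lemma pd_conj (ψ : AddChar F ℂ) (a : F) : (starRingEnd ℂ) (ψ a) = ψ (-a) := by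
  have hp : 0 < ringChar F := Nat.pos_of_ne_zero (CharP.ringChar_ne_zero_of_finite F)
  rw [AddChar.starComp_apply hp, AddChar.inv_apply]

lemma pd_orth {ψ : AddChar F ℂ} (hψ : ψ.IsPrimitive) (c : F) :
    ∑ s : F, ψ (s * c) = if c = 0 then (Fintype.card F : ℂ) else 0 := by
  rw [AddChar.sum_mulShift c hψ]; split_ifs <;> simp

/-- Parseval / orthogonality for the Fourier matrix. -/
lemma pd_parseval {ψ : AddChar F ℂ} (hψ : ψ.IsPrimitive) (w : F → ℂ) {c : F} (hc : c ≠ 0) :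
    ∑ u : F, Complex.normSq (∑ v : F, w v * ψ (c * (u * v))) =
      (Fintype.card F : ℝ) * ∑ v : F, Complex.normSq (w v) := by
  have key : ∑ u : F, (Complex.normSq (∑ v : F, w v * ψ (c * (u * v))) : ℂ) =
      (Fintype.card F : ℂ) * ∑ v : F, (Complex.normSq (w v) : ℂ) := by
    calc ∑ u : F, (Complex.normSq (∑ v : F, w v * ψ (c * (u * v))) : ℂ)
        = ∑ u : F, ∑ v : F, ∑ v' : F,
            (w v * (starRingEnd ℂ) (w v')) * ψ (u * (c * (v - v'))) := by
          refine Finset.sum_congr rfl fun u _ => ?_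
          rw [← Complex.mul_conj, map_sum, Finset.sum_mul_sum]
          refine Finset.sum_congr rfl fun v _ => Finset.sum_congr rfl fun v' _ => ?_
          rw [map_mul (starRingEnd ℂ), pd_conj]
          calc (w v * ψ (c * (u * v))) * ((starRingEnd ℂ) (w v') * ψ (-(c * (u * v'))))
              = (w v * (starRingEnd ℂ) (w v')) * (ψ (c * (u * v)) * ψ (-(c * (u * v')))) := by
                ring
            _ = (w v * (starRingEnd ℂ) (w v')) * ψ (c * (u * v) + -(c * (u * v'))) := by
                rw [AddChar.map_add_eq_mul]
            _ = (w v * (starRingEnd ℂ) (w v')) * ψ (u * (c * (v - v'))) := by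
                rw [show c * (u * v) + -(c * (u * v')) = u * (c * (v - v')) by ring]
      _ = ∑ v : F, ∑ v' : F, (w v * (starRingEnd ℂ) (w v')) * ∑ u : F, ψ (u * (c * (v - v'))) := by
          rw [Finset.sum_comm]
          refine Finset.sum_congr rfl fun v _ => ?_
          rw [Finset.sum_comm]
          exact Finset.sum_congr rfl fun v' _ => (Finset.mul_sum _ _ _).symm
      _ = ∑ v : F, ∑ v' : F, (w v * (starRingEnd ℂ) (w v')) *
            (if v' = v then (Fintype.card F : ℂ) else 0) := by
          refine Finset.sum_congr rfl fun v _ => Finset.sum_congr rfl fun v' _ => ?_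
          rw [pd_orth hψ]
          congr 1
          have : c * (v - v') = 0 ↔ v' = v := by
            rw [mul_eq_zero, sub_eq_zero]
            simp [hc, eq_comm]
          simp [this]
      _ = ∑ v : F, (w v * (starRingEnd ℂ) (w v)) * (Fintype.card F : ℂ) := by
          refine Finset.sum_congr rfl fun v _ => ?_
          simp only [mul_ite, mul_zero, Finset.sum_ite_eq', Finset.mem_univ, if_true]
      _ = (Fintype.card F : ℂ) * ∑ v : F, (Complex.normSq (w v) : ℂ) := by
          rw [Finset.mul_sum]
          refine Finset.sum_congr rfl fun v _ => ?_
          rw [Complex.mul_conj]; ring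
  have := key
  rw [← Complex.ofReal_sum] at this
  rw [show ((Fintype.card F : ℂ) * ∑ v : F, (Complex.normSq (w v) : ℂ))
      = ((Fintype.card F * ∑ v : F, Complex.normSq (w v) : ℝ) : ℂ) by push_cast; ring] at this
  exact_mod_cast this

/-- Sum over all frequencies of fiberwise weighted column sums. -/
lemma pd_sum_s {ψ : AddChar F ℂ} (hψ : ψ.IsPrimitive) (A : Finset (F × F)) (m : F × F → F)
    (hm : ∀ x ∈ A, ∀ x' ∈ A, x.1 = x'.1 → m x = m x' → x = x') :
    ∑ s : F, ∑ u : F,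
        Complex.normSq (∑ x ∈ A.filter (fun p => p.1 = u), ψ (s * m x)) =
      (Fintype.card F : ℝ) * A.card := by
  have key : ∑ s : F, ∑ u : F,
      (Complex.normSq (∑ x ∈ A.filter (fun p => p.1 = u), ψ (s * m x)) : ℂ) =
      (Fintype.card F : ℂ) * A.card := by
    calc ∑ s : F, ∑ u : F,
        (Complex.normSq (∑ x ∈ A.filter (fun p => p.1 = u), ψ (s * m x)) : ℂ)
        = ∑ s : F, ∑ u : F, ∑ x ∈ A.filter (fun p => p.1 = u),
            ∑ x' ∈ A.filter (fun p => p.1 = u), ψ (s * (m x - m x')) := by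
          refine Finset.sum_congr rfl fun s _ => Finset.sum_congr rfl fun u _ => ?_
          rw [← Complex.mul_conj, map_sum, Finset.sum_mul_sum]
          refine Finset.sum_congr rfl fun x _ => Finset.sum_congr rfl fun x' _ => ?_
          rw [pd_conj, ← AddChar.map_add_eq_mul]
          rw [show s * m x + -(s * m x') = s * (m x - m x') by ring]
      _ = ∑ u : F, ∑ x ∈ A.filter (fun p => p.1 = u),
            ∑ x' ∈ A.filter (fun p => p.1 = u), ∑ s : F, ψ (s * (m x - m x')) := by
          rw [Finset.sum_comm]
          refine Finset.sum_congr rfl fun u _ => ?_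
          rw [Finset.sum_comm]
          exact Finset.sum_congr rfl fun x _ => Finset.sum_comm
      _ = ∑ u : F, ∑ x ∈ A.filter (fun p => p.1 = u),
            ∑ x' ∈ A.filter (fun p => p.1 = u),
              (if x' = x then (Fintype.card F : ℂ) else 0) := by
          refine Finset.sum_congr rfl fun u _ => Finset.sum_congr rfl fun x hx =>
            Finset.sum_congr rfl fun x' hx' => ?_
          rw [pd_orth hψ]
          have hx1 := (Finset.mem_filter.mp hx)
          have hx1' := (Finset.mem_filter.mp hx')
          have : m x - m x' = 0 ↔ x' = x := by
            rw [sub_eq_zero]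
            constructor
            · intro h
              exact (hm x hx1.1 x' hx1'.1 (hx1.2.trans hx1'.2.symm) h).symm
            · rintro rfl; rfl
          simp [this]
      _ = ∑ u : F, ∑ x ∈ A.filter (fun p => p.1 = u), (Fintype.card F : ℂ) := by
          refine Finset.sum_congr rfl fun u _ => Finset.sum_congr rfl fun x hx => ?_
          rw [Finset.sum_ite_eq' _ x (fun _ => (Fintype.card F : ℂ))]
          simp [hx]
      _ = (Fintype.card F : ℂ) * A.card := by
          simp only [Finset.sum_const, nsmul_eq_mul]
          rw [← Finset.sum_mul]
          rw [show ∑ u : F, ((A.filter (fun p => p.1 = u)).card : ℂ)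
              = ((∑ u : F, (A.filter (fun p => p.1 = u)).card : ℕ) : ℂ) by push_cast; rfl]
          rw [← Finset.card_eq_sum_card_fiberwise (fun x _ => Finset.mem_univ x.1)]
          ring
  exact_mod_cast key

/-- Column bound via the largest vertical fiber. -/
lemma pd_colbound (A : Finset (F × F)) (W : F × F → ℂ) (hW : ∀ x, ‖W x‖ = 1) :
    ∑ u : F, Complex.normSq (∑ x ∈ A.filter (fun p => p.1 = u), W x) ≤
      (maxVertFiber A : ℝ) * A.card := by
  have hstep : ∀ u : F, Complex.normSq (∑ x ∈ A.filter (fun p => p.1 = u), W x) ≤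
      (maxVertFiber A : ℝ) * ((A.filter (fun p => p.1 = u)).card : ℝ) := by
    intro u
    have hn : ‖∑ x ∈ A.filter (fun p => p.1 = u), W x‖ ≤
        ((A.filter (fun p => p.1 = u)).card : ℝ) := by
      refine (norm_sum_le _ _).trans (le_of_eq ?_)
      simp [hW]
    have hK : ((A.filter (fun p => p.1 = u)).card : ℝ) ≤ (maxVertFiber A : ℝ) := by
      exact_mod_cast Nat.cast_le.mpr (Finset.le_sup (f := fun u : F =>
        (A.filter (fun p : F × F => p.1 = u)).card) (Finset.mem_univ u))
    have h3 : Complex.normSq (∑ x ∈ A.filter (fun p => p.1 = u), W x) =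
        ‖∑ x ∈ A.filter (fun p => p.1 = u), W x‖ ^ 2 := by
      rw [← Complex.sq_norm]
    rw [h3]
    calc ‖∑ x ∈ A.filter (fun p => p.1 = u), W x‖ ^ 2
        ≤ ((A.filter (fun p => p.1 = u)).card : ℝ) ^ 2 :=
          pow_le_pow_left₀ (norm_nonneg _) hn 2
      _ = ((A.filter (fun p => p.1 = u)).card : ℝ) *
            ((A.filter (fun p => p.1 = u)).card : ℝ) := sq _
      _ ≤ (maxVertFiber A : ℝ) * ((A.filter (fun p => p.1 = u)).card : ℝ) :=
          mul_le_mul_of_nonneg_right hK (Nat.cast_nonneg _)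
  calc ∑ u : F, Complex.normSq (∑ x ∈ A.filter (fun p => p.1 = u), W x)
      ≤ ∑ u : F, (maxVertFiber A : ℝ) * ((A.filter (fun p => p.1 = u)).card : ℝ) :=
        Finset.sum_le_sum fun u _ => hstep u
    _ = (maxVertFiber A : ℝ) * A.card := by
        rw [← Finset.mul_sum]
        congr 1
        rw [show ∑ u : F, ((A.filter (fun p => p.1 = u)).card : ℝ)
            = ((∑ u : F, (A.filter (fun p => p.1 = u)).card : ℕ) : ℝ) by push_cast; rfl]
        rw [← Finset.card_eq_sum_card_fiberwise (fun x _ => Finset.mem_univ x.1)]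

/-- Cauchy-Schwarz for complex sums. -/
lemma pd_cs (f h : F → ℂ) :
    Complex.normSq (∑ u : F, f u * h u) ≤
      (∑ u : F, Complex.normSq (f u)) * (∑ u : F, Complex.normSq (h u)) := by
  have h1 : ‖∑ u : F, f u * h u‖ ≤ ∑ u : F, ‖f u‖ * ‖h u‖ := by
    refine (norm_sum_le _ _).trans (le_of_eq ?_)
    exact Finset.sum_congr rfl fun u _ => norm_mul _ _
  have h2 : (∑ u : F, ‖f u‖ * ‖h u‖) ^ 2 ≤
      (∑ u : F, ‖f u‖ ^ 2) * (∑ u : F, ‖h u‖ ^ 2) :=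
    Finset.sum_mul_sq_le_sq_mul_sq _ _ _
  have h3 : Complex.normSq (∑ u : F, f u * h u) = ‖∑ u : F, f u * h u‖ ^ 2 := by
    rw [← Complex.sq_norm]
  rw [h3]
  calc ‖∑ u : F, f u * h u‖ ^ 2 ≤ (∑ u : F, ‖f u‖ * ‖h u‖) ^ 2 := by
        apply pow_le_pow_left₀ (norm_nonneg _) h1
    _ ≤ (∑ u : F, ‖f u‖ ^ 2) * (∑ u : F, ‖h u‖ ^ 2) := h2
    _ = (∑ u : F, Complex.normSq (f u)) * (∑ u : F, Complex.normSq (h u)) := by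
        congr 1 <;> exact Finset.sum_congr rfl fun u _ => by rw [← Complex.sq_norm]

/-- Splitting of the character sum over `E ×ˢ G`. -/
lemma pd_split (ψ : AddChar F ℂ) (E G : Finset (F × F)) (s : F) :
    ∑ u : F, ∑ v : F,
        (∑ x ∈ E.filter (fun p => p.1 = u), ψ (s * (x.2 + x.1 ^ 2))) *
          (∑ y ∈ G.filter (fun p => p.1 = v), ψ (s * (-y.2 + y.1 ^ 2))) *
            ψ (-(2 * s) * (u * v)) =
      ∑ z ∈ E ×ˢ G, ψ (s * ((z.1.2 - z.2.2) + (z.1.1 - z.2.1) ^ 2)) := by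
  have hsplit : ∀ u v : F,
      (∑ x ∈ E.filter (fun p => p.1 = u), ψ (s * (x.2 + x.1 ^ 2))) *
        (∑ y ∈ G.filter (fun p => p.1 = v), ψ (s * (-y.2 + y.1 ^ 2))) *
          ψ (-(2 * s) * (u * v)) =
      ∑ x ∈ E.filter (fun p => p.1 = u), ∑ y ∈ G.filter (fun p => p.1 = v),
        ψ (s * (x.2 + x.1 ^ 2)) * ψ (s * (-y.2 + y.1 ^ 2)) * ψ (-(2 * s) * (u * v)) := by
    intro u v
    rw [Finset.sum_mul_sum, Finset.sum_mul]
    exact Finset.sum_congr rfl fun x _ => by rw [Finset.sum_mul]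
  calc ∑ u : F, ∑ v : F,
        (∑ x ∈ E.filter (fun p => p.1 = u), ψ (s * (x.2 + x.1 ^ 2))) *
          (∑ y ∈ G.filter (fun p => p.1 = v), ψ (s * (-y.2 + y.1 ^ 2))) *
            ψ (-(2 * s) * (u * v))
      = ∑ u : F, ∑ x ∈ E.filter (fun p => p.1 = u), ∑ v : F,
          ∑ y ∈ G.filter (fun p => p.1 = v),
            ψ (s * (x.2 + x.1 ^ 2)) * ψ (s * (-y.2 + y.1 ^ 2)) * ψ (-(2 * s) * (u * v)) := by
        refine Finset.sum_congr rfl fun u _ => ?_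
        rw [show (∑ v : F, (∑ x ∈ E.filter (fun p => p.1 = u), ψ (s * (x.2 + x.1 ^ 2))) *
            (∑ y ∈ G.filter (fun p => p.1 = v), ψ (s * (-y.2 + y.1 ^ 2))) *
              ψ (-(2 * s) * (u * v)))
          = ∑ v : F, ∑ x ∈ E.filter (fun p => p.1 = u), ∑ y ∈ G.filter (fun p => p.1 = v),
              ψ (s * (x.2 + x.1 ^ 2)) * ψ (s * (-y.2 + y.1 ^ 2)) * ψ (-(2 * s) * (u * v))
          from Finset.sum_congr rfl fun v _ => hsplit u v]
        exact Finset.sum_comm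
    _ = ∑ u : F, ∑ x ∈ E.filter (fun p => p.1 = u), ∑ v : F,
          ∑ y ∈ G.filter (fun p => p.1 = v),
            ψ (s * ((x.2 - y.2) + (x.1 - y.1) ^ 2)) := by
        refine Finset.sum_congr rfl fun u _ => Finset.sum_congr rfl fun x hx =>
          Finset.sum_congr rfl fun v _ => Finset.sum_congr rfl fun y hy => ?_
        have hu : x.1 = u := (Finset.mem_filter.mp hx).2
        have hv : y.1 = v := (Finset.mem_filter.mp hy).2
        subst hu; subst hv
        rw [← AddChar.map_add_eq_mul, ← AddChar.map_add_eq_mul]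
        congr 1
        ring
    _ = ∑ u : F, ∑ x ∈ E.filter (fun p => p.1 = u), ∑ y ∈ G,
          ψ (s * ((x.2 - y.2) + (x.1 - y.1) ^ 2)) := by
        refine Finset.sum_congr rfl fun u _ => Finset.sum_congr rfl fun x _ => ?_
        exact Finset.sum_fiberwise G (fun p => p.1)
          (fun y => ψ (s * ((x.2 - y.2) + (x.1 - y.1) ^ 2)))
    _ = ∑ x ∈ E, ∑ y ∈ G, ψ (s * ((x.2 - y.2) + (x.1 - y.1) ^ 2)) :=
        Finset.sum_fiberwise E (fun p => p.1)
          (fun x => ∑ y ∈ G, ψ (s * ((x.2 - y.2) + (x.1 - y.1) ^ 2)))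
    _ = ∑ z ∈ E ×ˢ G, ψ (s * ((z.1.2 - z.2.2) + (z.1.1 - z.2.1) ^ 2)) :=
        (Finset.sum_product (s := E) (t := G)
          (f := fun z => ψ (s * ((z.1.2 - z.2.2) + (z.1.1 - z.2.1) ^ 2)))).symm

/-- The energy identity. -/
lemma pd_energy {ψ : AddChar F ℂ} (hψ : ψ.IsPrimitive)
    (P : Finset ((F × F) × (F × F))) (d : (F × F) × (F × F) → F) :
    (Fintype.card F : ℝ) * ∑ t : F, ((P.filter (fun z => d z = t)).card : ℝ) ^ 2 =
      ∑ s : F, Complex.normSq (∑ z ∈ P, ψ (s * d z)) := by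
  have key : ∑ s : F, (Complex.normSq (∑ z ∈ P, ψ (s * d z)) : ℂ) =
      (Fintype.card F : ℂ) * ∑ t : F, ((P.filter (fun z => d z = t)).card : ℂ) ^ 2 := by
    calc ∑ s : F, (Complex.normSq (∑ z ∈ P, ψ (s * d z)) : ℂ)
        = ∑ s : F, ∑ z ∈ P, ∑ w ∈ P, ψ (s * (d z - d w)) := by
          refine Finset.sum_congr rfl fun s _ => ?_
          rw [← Complex.mul_conj, map_sum, Finset.sum_mul_sum]
          refine Finset.sum_congr rfl fun z _ => Finset.sum_congr rfl fun w _ => ?_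
          rw [pd_conj, ← AddChar.map_add_eq_mul]
          rw [show s * d z + -(s * d w) = s * (d z - d w) by ring]
      _ = ∑ z ∈ P, ∑ w ∈ P, ∑ s : F, ψ (s * (d z - d w)) := by
          rw [Finset.sum_comm]
          exact Finset.sum_congr rfl fun z _ => Finset.sum_comm
      _ = ∑ z ∈ P, ∑ w ∈ P, if d w = d z then (Fintype.card F : ℂ) else 0 := by
          refine Finset.sum_congr rfl fun z _ => Finset.sum_congr rfl fun w _ => ?_
          rw [pd_orth hψ]
          have : d z - d w = 0 ↔ d w = d z := by rw [sub_eq_zero]; exact eq_comm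
          simp [this]
      _ = ∑ z ∈ P, (Fintype.card F : ℂ) * ((P.filter fun w => d w = d z).card : ℂ) := by
          refine Finset.sum_congr rfl fun z _ => ?_
          rw [← Finset.sum_filter, Finset.sum_const, nsmul_eq_mul, mul_comm]
      _ = ∑ t : F, ∑ z ∈ P.filter (fun z => d z = t),
            (Fintype.card F : ℂ) * ((P.filter fun w => d w = d z).card : ℂ) :=
          (Finset.sum_fiberwise P d _).symm
      _ = ∑ t : F, (Fintype.card F : ℂ) * ((P.filter (fun z => d z = t)).card : ℂ) ^ 2 := by
          refine Finset.sum_congr rfl fun t _ => ?_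
          rw [Finset.sum_congr rfl (fun z hz => by
            rw [(Finset.mem_filter.mp hz).2] :
            ∀ z ∈ P.filter (fun z => d z = t), (Fintype.card F : ℂ) *
              ((P.filter fun w => d w = d z).card : ℂ) =
              (Fintype.card F : ℂ) * ((P.filter fun w => d w = t).card : ℂ))]
          rw [Finset.sum_const, nsmul_eq_mul]
          ring
      _ = (Fintype.card F : ℂ) * ∑ t : F, ((P.filter (fun z => d z = t)).card : ℂ) ^ 2 :=
          (Finset.mul_sum _ _ _).symm
  exact_mod_cast key.symm

end ParabolicHelpers

theorem bipartite_parabolic_distance_lower_bound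
    {F : Type*} [Field F] [Fintype F] [DecidableEq F]
    (hq : Odd (Fintype.card F))
    (E G : Finset (F × F)) (hE : E.Nonempty) (hG : G.Nonempty) :
    ((parabolicDistSet2 E G).card : ℝ) ≥
      (Fintype.card F : ℝ) /
        (1 + (Fintype.card F : ℝ) ^ 2 *
          Real.sqrt ((maxVertFiber E : ℝ) * (maxVertFiber G : ℝ)) /
            ((E.card : ℝ) * (G.card : ℝ))) ∧
    ((E.card : ℝ) * (G.card : ℝ) ≥
        (Fintype.card F : ℝ) ^ 2 *
          Real.sqrt ((maxVertFiber E : ℝ) * (maxVertFiber G : ℝ)) →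
      ((parabolicDistSet2 E G).card : ℝ) ≥ (Fintype.card F : ℝ) / 2) := by
  -- notation
  set Q : ℝ := (Fintype.card F : ℝ) with hQdef
  set a : ℝ := (E.card : ℝ) with hadef
  set b : ℝ := (G.card : ℝ) with hbdef
  set KE : ℝ := (maxVertFiber E : ℝ) with hKEdef
  set KG : ℝ := (maxVertFiber G : ℝ) with hKGdef
  set sk : ℝ := Real.sqrt (KE * KG) with hskdef
  set Dc : ℝ := ((parabolicDistSet2 E G).card : ℝ) with hDcdef
  have hQpos : 0 < Q := by
    rw [hQdef]; exact_mod_cast Fintype.card_pos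
  have hapos : 0 < a := by rw [hadef]; exact_mod_cast hE.card_pos
  have hbpos : 0 < b := by rw [hbdef]; exact_mod_cast hG.card_pos
  have hKEnn : 0 ≤ KE := Nat.cast_nonneg _
  have hKGnn : 0 ≤ KG := Nat.cast_nonneg _
  have hsknn : 0 ≤ sk := Real.sqrt_nonneg _
  have hDcnn : 0 ≤ Dc := Nat.cast_nonneg _
  -- character
  have h2F : (2 : F) ≠ 0 := by
    refine Ring.two_ne_zero ?_
    intro h
    have h1 := FiniteField.even_card_of_char_two h
    have h2 := Nat.odd_iff.mp hq
    omega
  let ψ : AddChar F ℂ := AddChar.FiniteField.primitiveChar_to_Complex F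
  have hψ : ψ.IsPrimitive := AddChar.FiniteField.primitiveChar_to_Complex_isPrimitive F
  -- distance data
  set d : (F × F) × (F × F) → F :=
    fun z => (z.1.2 - z.2.2) + (z.1.1 - z.2.1) ^ 2 with hddef
  set P : Finset ((F × F) × (F × F)) := E ×ˢ G with hPdef
  set r : F → ℕ := fun t => (P.filter fun z => d z = t).card with hrdef
  set R : ℝ := ∑ t : F, (r t : ℝ) ^ 2 with hRdef
  have hΔ : parabolicDistSet2 E G = P.image d := rfl
  -- (1) total count
  have hsum : ∑ t ∈ P.image d, (r t : ℝ) = a * b := by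
    have h1 : ∑ t ∈ P.image d, r t = P.card := (Finset.card_eq_sum_card_image d P).symm
    have h2 : P.card = E.card * G.card := Finset.card_product E G
    have h3 : ∑ t ∈ P.image d, (r t : ℝ) = ((∑ t ∈ P.image d, r t : ℕ) : ℝ) := by
      push_cast; rfl
    rw [h3, h1, h2, hadef, hbdef]
    push_cast
    ring
  -- (2) Cauchy-Schwarz
  have hCS : (a * b) ^ 2 ≤ Dc * R := by
    have h1 : (∑ t ∈ P.image d, (r t : ℝ)) ^ 2 ≤
        (∑ t ∈ P.image d, (1 : ℝ) ^ 2) * ∑ t ∈ P.image d, (r t : ℝ) ^ 2 := by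
      have := Finset.sum_mul_sq_le_sq_mul_sq (P.image d) (fun _ => (1 : ℝ))
        (fun t => (r t : ℝ))
      simpa using this
    have h2 : ∑ t ∈ P.image d, (1 : ℝ) ^ 2 = Dc := by
      simp [hDcdef, hΔ]
    have h3 : ∑ t ∈ P.image d, (r t : ℝ) ^ 2 ≤ R := by
      rw [hRdef]
      exact Finset.sum_le_sum_of_subset_of_nonneg (Finset.subset_univ _)
        (fun t _ _ => sq_nonneg _)
    calc (a * b) ^ 2 = (∑ t ∈ P.image d, (r t : ℝ)) ^ 2 := by rw [hsum]
      _ ≤ (∑ t ∈ P.image d, (1 : ℝ) ^ 2) * ∑ t ∈ P.image d, (r t : ℝ) ^ 2 := h1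
      _ ≤ Dc * R := by
          rw [h2]
          exact mul_le_mul_of_nonneg_left h3 hDcnn
  -- (3) energy identity
  have hqR : Q * R = ∑ s : F, Complex.normSq (∑ z ∈ P, ψ (s * d z)) :=
    pd_energy hψ P d
  -- (4) zero frequency
  have hS0 : Complex.normSq (∑ z ∈ P, ψ ((0 : F) * d z)) = (a * b) ^ 2 := by
    have h1 : ∑ z ∈ P, ψ ((0 : F) * d z) = ((P.card : ℝ) : ℂ) := by
      simp [AddChar.map_zero_eq_one]
    rw [h1, Complex.normSq_ofReal]
    have h2 : P.card = E.card * G.card := Finset.card_product E G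
    rw [h2]; push_cast; ring
  -- (5) split off zero
  have hsplit0 : ∑ s : F, Complex.normSq (∑ z ∈ P, ψ (s * d z)) =
      Complex.normSq (∑ z ∈ P, ψ ((0 : F) * d z)) +
        ∑ s ∈ Finset.univ.erase (0 : F), Complex.normSq (∑ z ∈ P, ψ (s * d z)) :=
    (Finset.add_sum_erase _ _ (Finset.mem_univ 0)).symm
  set X : ℝ := ∑ s ∈ Finset.univ.erase (0 : F), Complex.normSq (∑ z ∈ P, ψ (s * d z))
    with hXdef
  have hXnn : 0 ≤ X :=
    Finset.sum_nonneg fun s _ => Complex.normSq_nonneg _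
  -- the two per-frequency bounds
  have hkey : ∀ s : F, s ≠ 0 →
      Complex.normSq (∑ z ∈ P, ψ (s * d z)) ≤
        (∑ u : F, Complex.normSq
          (∑ x ∈ E.filter (fun p => p.1 = u), ψ (s * (x.2 + x.1 ^ 2)))) *
          (Q * (KG * b)) ∧
      Complex.normSq (∑ z ∈ P, ψ (s * d z)) ≤
        (∑ v : F, Complex.normSq
          (∑ y ∈ G.filter (fun p => p.1 = v), ψ (s * (-y.2 + y.1 ^ 2)))) *
          (Q * (KE * a)) := by
    intro s hs
    have hc : -(2 * s) ≠ 0 := by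
      simp only [neg_ne_zero]
      exact mul_ne_zero h2F hs
    set f : F → ℂ := fun u => ∑ x ∈ E.filter (fun p => p.1 = u), ψ (s * (x.2 + x.1 ^ 2))
      with hfdef
    set g : F → ℂ := fun v => ∑ y ∈ G.filter (fun p => p.1 = v), ψ (s * (-y.2 + y.1 ^ 2))
      with hgdef
    have hsplit : ∑ u : F, ∑ v : F, f u * g v * ψ (-(2 * s) * (u * v)) =
        ∑ z ∈ P, ψ (s * d z) := pd_split ψ E G s
    have hgb : ∑ v : F, Complex.normSq (g v) ≤ KG * b :=
      pd_colbound G (fun y => ψ (s * (-y.2 + y.1 ^ 2))) (fun y => pd_norm ψ _)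
    have hfb : ∑ u : F, Complex.normSq (f u) ≤ KE * a :=
      pd_colbound E (fun x => ψ (s * (x.2 + x.1 ^ 2))) (fun x => pd_norm ψ _)
    constructor
    · -- bound A
      have hform : ∑ z ∈ P, ψ (s * d z) =
          ∑ u : F, f u * (∑ v : F, g v * ψ (-(2 * s) * (u * v))) := by
        rw [← hsplit]
        refine Finset.sum_congr rfl fun u _ => ?_
        rw [Finset.mul_sum]
        exact Finset.sum_congr rfl fun v _ => by ring
      rw [hform]
      calc Complex.normSq (∑ u : F, f u * (∑ v : F, g v * ψ (-(2 * s) * (u * v))))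
          ≤ (∑ u : F, Complex.normSq (f u)) *
            (∑ u : F, Complex.normSq (∑ v : F, g v * ψ (-(2 * s) * (u * v)))) :=
            pd_cs _ _
        _ = (∑ u : F, Complex.normSq (f u)) * (Q * ∑ v : F, Complex.normSq (g v)) := by
            rw [pd_parseval hψ g hc]
        _ ≤ (∑ u : F, Complex.normSq (f u)) * (Q * (KG * b)) := by
            refine mul_le_mul_of_nonneg_left ?_
              (Finset.sum_nonneg fun u _ => Complex.normSq_nonneg _)
            exact mul_le_mul_of_nonneg_left hgb (le_of_lt hQpos)
    · -- bound B
      have hform : ∑ z ∈ P, ψ (s * d z) =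
          ∑ v : F, g v * (∑ u : F, f u * ψ (-(2 * s) * (v * u))) := by
        rw [← hsplit, Finset.sum_comm]
        refine Finset.sum_congr rfl fun v _ => ?_
        rw [Finset.mul_sum]
        refine Finset.sum_congr rfl fun u _ => ?_
        rw [mul_comm v u]
        ring
      rw [hform]
      calc Complex.normSq (∑ v : F, g v * (∑ u : F, f u * ψ (-(2 * s) * (v * u))))
          ≤ (∑ v : F, Complex.normSq (g v)) *
            (∑ v : F, Complex.normSq (∑ u : F, f u * ψ (-(2 * s) * (v * u)))) :=
            pd_cs _ _
        _ = (∑ v : F, Complex.normSq (g v)) * (Q * ∑ u : F, Complex.normSq (f u)) := by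
            rw [pd_parseval hψ f hc]
        _ ≤ (∑ v : F, Complex.normSq (g v)) * (Q * (KE * a)) := by
            refine mul_le_mul_of_nonneg_left ?_
              (Finset.sum_nonneg fun v _ => Complex.normSq_nonneg _)
            exact mul_le_mul_of_nonneg_left hfb (le_of_lt hQpos)
  -- sum the bounds over nonzero frequencies
  have hXA : X ≤ (Q * a) * (Q * (KG * b)) := by
    have h1 : X ≤ ∑ s ∈ Finset.univ.erase (0 : F),
        (∑ u : F, Complex.normSq
          (∑ x ∈ E.filter (fun p => p.1 = u), ψ (s * (x.2 + x.1 ^ 2)))) * (Q * (KG * b)) := by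
      refine Finset.sum_le_sum fun s hs => ?_
      exact (hkey s (Finset.ne_of_mem_erase hs)).1
    have h2 : ∑ s ∈ Finset.univ.erase (0 : F),
        (∑ u : F, Complex.normSq
          (∑ x ∈ E.filter (fun p => p.1 = u), ψ (s * (x.2 + x.1 ^ 2)))) * (Q * (KG * b)) ≤
        ∑ s : F, (∑ u : F, Complex.normSq
          (∑ x ∈ E.filter (fun p => p.1 = u), ψ (s * (x.2 + x.1 ^ 2)))) * (Q * (KG * b)) := by
      refine Finset.sum_le_sum_of_subset_of_nonneg (Finset.subset_univ _) fun s _ _ => ?_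
      refine mul_nonneg (Finset.sum_nonneg fun u _ => Complex.normSq_nonneg _) ?_
      positivity
    have h3 : ∑ s : F, (∑ u : F, Complex.normSq
        (∑ x ∈ E.filter (fun p => p.1 = u), ψ (s * (x.2 + x.1 ^ 2)))) * (Q * (KG * b)) =
        (Q * a) * (Q * (KG * b)) := by
      rw [← Finset.sum_mul]
      congr 1
      have hm : ∀ x ∈ E, ∀ x' ∈ E, x.1 = x'.1 →
          x.2 + x.1 ^ 2 = x'.2 + x'.1 ^ 2 → x = x' := by
        intro x _ x' _ h1 h2
        rw [h1] at h2
        exact Prod.ext h1 (add_right_cancel h2)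
      rw [pd_sum_s hψ E (fun x => x.2 + x.1 ^ 2) hm, hQdef, hadef]
    linarith
  have hXB : X ≤ (Q * b) * (Q * (KE * a)) := by
    have h1 : X ≤ ∑ s ∈ Finset.univ.erase (0 : F),
        (∑ v : F, Complex.normSq
          (∑ y ∈ G.filter (fun p => p.1 = v), ψ (s * (-y.2 + y.1 ^ 2)))) * (Q * (KE * a)) := by
      refine Finset.sum_le_sum fun s hs => ?_
      exact (hkey s (Finset.ne_of_mem_erase hs)).2
    have h2 : ∑ s ∈ Finset.univ.erase (0 : F),
        (∑ v : F, Complex.normSq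
          (∑ y ∈ G.filter (fun p => p.1 = v), ψ (s * (-y.2 + y.1 ^ 2)))) * (Q * (KE * a)) ≤
        ∑ s : F, (∑ v : F, Complex.normSq
          (∑ y ∈ G.filter (fun p => p.1 = v), ψ (s * (-y.2 + y.1 ^ 2)))) * (Q * (KE * a)) := by
      refine Finset.sum_le_sum_of_subset_of_nonneg (Finset.subset_univ _) fun s _ _ => ?_
      refine mul_nonneg (Finset.sum_nonneg fun v _ => Complex.normSq_nonneg _) ?_
      positivity
    have h3 : ∑ s : F, (∑ v : F, Complex.normSq
        (∑ y ∈ G.filter (fun p => p.1 = v), ψ (s * (-y.2 + y.1 ^ 2)))) * (Q * (KE * a)) =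
        (Q * b) * (Q * (KE * a)) := by
      rw [← Finset.sum_mul]
      congr 1
      have hm : ∀ y ∈ G, ∀ y' ∈ G, y.1 = y'.1 →
          -y.2 + y.1 ^ 2 = -y'.2 + y'.1 ^ 2 → y = y' := by
        intro y _ y' _ h1 h2
        rw [h1] at h2
        exact Prod.ext h1 (neg_injective (add_right_cancel h2))
      rw [pd_sum_s hψ G (fun y => -y.2 + y.1 ^ 2) hm, hQdef, hbdef]
    linarith
  -- geometric mean
  have hXle : X ≤ Q ^ 2 * (a * b) * sk := by
    have hA : X ≤ Q ^ 2 * (a * b) * KG := by nlinarith [hXA]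
    have hB : X ≤ Q ^ 2 * (a * b) * KE := by nlinarith [hXB]
    have hBnn : 0 ≤ Q ^ 2 * (a * b) * KE := by positivity
    have h1 : X * X ≤ (Q ^ 2 * (a * b) * KE) * (Q ^ 2 * (a * b) * KG) :=
      mul_le_mul hB hA hXnn hBnn
    have h2 : X = Real.sqrt (X * X) := (Real.sqrt_mul_self hXnn).symm
    rw [h2]
    calc Real.sqrt (X * X) ≤
        Real.sqrt ((Q ^ 2 * (a * b) * KE) * (Q ^ 2 * (a * b) * KG)) :=
          Real.sqrt_le_sqrt h1
      _ = Q ^ 2 * (a * b) * sk := by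
          rw [show (Q ^ 2 * (a * b) * KE) * (Q ^ 2 * (a * b) * KG)
              = (Q ^ 2 * (a * b)) ^ 2 * (KE * KG) by ring]
          rw [Real.sqrt_mul (sq_nonneg _), Real.sqrt_sq (by positivity)]
  -- energy bound
  have hEn : Q * R ≤ (a * b) ^ 2 + Q ^ 2 * (a * b) * sk := by
    rw [hqR, hsplit0, hS0]
    exact add_le_add (le_refl _) hXle
  -- conclusion, part 1
  have habpos : 0 < a * b := mul_pos hapos hbpos
  have hDpos : 0 < 1 + Q ^ 2 * sk / (a * b) := by positivity
  have part1 : Q / (1 + Q ^ 2 * sk / (a * b)) ≤ Dc := by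
    rw [div_le_iff₀ hDpos]
    have h1 : Q * (a * b) ^ 2 ≤ Dc * (Q * R) := by
      calc Q * (a * b) ^ 2 ≤ Q * (Dc * R) :=
            mul_le_mul_of_nonneg_left hCS (le_of_lt hQpos)
        _ = Dc * (Q * R) := by ring
    have h2 : Dc * (Q * R) ≤ Dc * ((a * b) ^ 2 + Q ^ 2 * (a * b) * sk) :=
      mul_le_mul_of_nonneg_left hEn hDcnn
    have h3 : Dc * ((a * b) ^ 2 + Q ^ 2 * (a * b) * sk) =
        (a * b) ^ 2 * (Dc * (1 + Q ^ 2 * sk / (a * b))) := by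
      have hab : a * b ≠ 0 := ne_of_gt habpos
      have hx : (a * b) ^ 2 * (Q ^ 2 * sk / (a * b)) = Q ^ 2 * (a * b) * sk := by
        have hdiv : (a * b) ^ 2 / (a * b) = a * b := by
          rw [sq, mul_div_assoc, div_self hab, mul_one]
        calc (a * b) ^ 2 * (Q ^ 2 * sk / (a * b))
            = ((a * b) ^ 2 / (a * b)) * (Q ^ 2 * sk) := by ring
          _ = Q ^ 2 * (a * b) * sk := by rw [hdiv]; ring
      calc Dc * ((a * b) ^ 2 + Q ^ 2 * (a * b) * sk)
          = Dc * ((a * b) ^ 2 + (a * b) ^ 2 * (Q ^ 2 * sk / (a * b))) := by rw [hx]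
        _ = (a * b) ^ 2 * (Dc * (1 + Q ^ 2 * sk / (a * b))) := by ring
    have h4 : (a * b) ^ 2 * Q ≤ (a * b) ^ 2 * (Dc * (1 + Q ^ 2 * sk / (a * b))) := by
      calc (a * b) ^ 2 * Q = Q * (a * b) ^ 2 := by ring
        _ ≤ Dc * ((a * b) ^ 2 + Q ^ 2 * (a * b) * sk) := le_trans h1 h2
        _ = (a * b) ^ 2 * (Dc * (1 + Q ^ 2 * sk / (a * b))) := h3
    exact le_of_mul_le_mul_left h4 (pow_pos habpos 2)
  refine ⟨part1, ?_⟩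
  intro hyp
  have hD2 : 1 + Q ^ 2 * sk / (a * b) ≤ 2 := by
    have : Q ^ 2 * sk / (a * b) ≤ 1 := (div_le_one habpos).mpr hyp
    linarith
  have h2' : Q / 2 ≤ Q / (1 + Q ^ 2 * sk / (a * b)) := by
    apply div_le_div_of_nonneg_left (le_of_lt hQpos) hDpos hD2
  exact le_trans h2' part1
end

section
/- Let q be an odd prime power, let H ⊆ F_q be a subfield, let U ⊆ H be an additive subgroup of H, and let V ⊆ F_q be an additive subgroup with H ⊆ V. Set E := U×V ⊆ F_q². Then Δ_P(E) = V, |E| = |U|·|V|, and the maximal vertical fiber size is K_E = |V|. -/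
theorem subgroup_grid_construction
    {F : Type*} [Field F] [Fintype F]
    (hq : Odd (Fintype.card F))
    (H : Subfield F) (U : AddSubgroup F) (hUH : (U : Set F) ⊆ (H : Set F))
    (V : AddSubgroup F) (hHV : (H : Set F) ⊆ (V : Set F)) :
    {t : F | ∃ x ∈ (U : Set F) ×ˢ (V : Set F), ∃ y ∈ (U : Set F) ×ˢ (V : Set F),
        (x.2 - y.2) + (x.1 - y.1) ^ 2 = t} = (V : Set F) ∧
    Nat.card ((U : Set F) ×ˢ (V : Set F)) = Nat.card U * Nat.card V ∧
    (Finset.univ.sup fun u : F =>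
        Nat.card {y : F | (u, y) ∈ (U : Set F) ×ˢ (V : Set F)}) = Nat.card V := by
  refine ⟨?_, ?_, ?_⟩
  · ext t
    constructor
    · rintro ⟨x, ⟨hx1, hx2⟩, y, ⟨hy1, hy2⟩, rfl⟩
      have h1 : x.2 - y.2 ∈ V := V.sub_mem hx2 hy2
      have h2 : x.1 - y.1 ∈ U := U.sub_mem hx1 hy1
      have h3 : (x.1 - y.1) ^ 2 ∈ H := by
        have := hUH h2
        exact H.pow_mem this 2
      exact V.add_mem h1 (hHV h3)
    · intro ht
      refine ⟨(0, t), ⟨U.zero_mem, ht⟩, (0, 0), ⟨U.zero_mem, V.zero_mem⟩, by ring⟩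
  · rw [Nat.card_congr (Equiv.Set.prod _ _), Nat.card_prod]
    rfl
  · apply le_antisymm
    · apply Finset.sup_le
      intro u _
      by_cases hu : u ∈ U
      · have : {y : F | (u, y) ∈ (U : Set F) ×ˢ (V : Set F)} = (V : Set F) := by
          ext y; simp [hu]
        rw [this, SetLike.coe_sort_coe]
      · have : {y : F | (u, y) ∈ (U : Set F) ×ˢ (V : Set F)} = (∅ : Set F) := by
          ext y; simp [hu]
        rw [this]
        simp
    · have : {y : F | ((0 : F), y) ∈ (U : Set F) ×ˢ (V : Set F)} = (V : Set F) := by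
        ext y; simp [U.zero_mem]
      calc Nat.card V = Nat.card {y : F | ((0:F), y) ∈ (U : Set F) ×ˢ (V : Set F)} := by
            rw [this, SetLike.coe_sort_coe]
        _ ≤ _ := Finset.le_sup (f := fun u : F =>
            Nat.card {y : F | (u, y) ∈ (U : Set F) ×ˢ (V : Set F)}) (Finset.mem_univ (0 : F))
end
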